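/- arXiv:2206.08465 — 6 statements merged into one kernel-verified Lean document; each statement's English description precedes it below -/
import Mathlib

section
/- Suppose all row degrees d_i^r > 0, all column degrees d_j^c > 0, and the marginals satisfy pr_{q1}(z_i=k) > 0 for all i,k and pr_{q2}(w_j=l) > 0 for all j,l. Define θ̂_i = d_i^r for i=1,…,m, λ̂_j = d_j^c for j=1,…,n, μ̂_{kl} = (Σ_{i,j} A_{ij}·pr_{q1}(z_i=k)·pr_{q2}(w_j=l)) / (Σ_{i,j} d_i^r d_j^c·pr_{q1}(z_i=k)·pr_{q2}(w_j=l)), π̂_k = (1/m) Σ_{i=1}^m pr_{q1}(z_i=k), and ρ̂_l = (1/n) Σ_{j=1}^n pr_{q2}(w_j=l). Then Φ̂ = (π̂, ρ̂, θ̂, λ̂, μ̂) is a valid parameter tuple and J(q1, q2, Φ̂) ≥ J(q1, q2, Φ) for every parameter tuple Φ = (π, ρ, θ, λ, μ). -/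
open scoped BigOperators

namespace DCLBM

/-- The DC-LBM joint likelihood `P(z, w, A; Φ)`. -/
noncomputable def Pjoint {m n K L : ℕ} (A : Fin m → Fin n → ℕ)
    (piv : Fin K → ℝ) (rhov : Fin L → ℝ) (θ : Fin m → ℝ) (lam : Fin n → ℝ)
    (μm : Fin K → Fin L → ℝ) (z : Fin m → Fin K) (w : Fin n → Fin L) : ℝ :=
  (∏ i, piv (z i)) * (∏ j, rhov (w j)) *
    ∏ i, ∏ j, Real.exp (-(θ i * lam j * μm (z i) (w j))) *
      (θ i * lam j * μm (z i) (w j)) ^ (A i j) / (Nat.factorial (A i j) : ℝ)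

/-- The variational objective `J(q1, q2, Φ)`.  (The convention `0 · log 0 = 0` is
automatic since the factor `q1 z * q2 w` multiplies the logarithm.) -/
noncomputable def Jobj {m n K L : ℕ} (A : Fin m → Fin n → ℕ)
    (q1 : (Fin m → Fin K) → ℝ) (q2 : (Fin n → Fin L) → ℝ)
    (piv : Fin K → ℝ) (rhov : Fin L → ℝ) (θ : Fin m → ℝ) (lam : Fin n → ℝ)
    (μm : Fin K → Fin L → ℝ) : ℝ :=
  ∑ z : Fin m → Fin K, ∑ w : Fin n → Fin L,
    q1 z * q2 w * Real.log (Pjoint A piv rhov θ lam μm z w / (q1 z * q2 w))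

/-- The marginal `pr_{q1}(z_i = k)`. -/
noncomputable def pr1 {m K : ℕ} (q1 : (Fin m → Fin K) → ℝ) (i : Fin m) (k : Fin K) : ℝ :=
  ∑ z : Fin m → Fin K, if z i = k then q1 z else 0

/-- The marginal `pr_{q2}(w_j = l)`. -/
noncomputable def pr2 {n L : ℕ} (q2 : (Fin n → Fin L) → ℝ) (j : Fin n) (l : Fin L) : ℝ :=
  ∑ w : Fin n → Fin L, if w j = l then q2 w else 0

end DCLBM

section AuxLemmas

lemma aux_sum_eval {n L : ℕ} (q : (Fin n → Fin L) → ℝ) (f : Fin n → Fin L → ℝ) :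
    ∑ w : Fin n → Fin L, q w * ∑ j, f j (w j)
      = ∑ j, ∑ l, (∑ w : Fin n → Fin L, if w j = l then q w else 0) * f j l := by
  simp only [Finset.mul_sum]
  rw [Finset.sum_comm]
  refine Finset.sum_congr rfl fun j _ => ?_
  simp only [Finset.sum_mul]
  rw [Finset.sum_comm]
  refine Finset.sum_congr rfl fun w _ => ?_
  simp [ite_mul, Finset.sum_ite_eq]

lemma aux_sum_eval2 {m n K L : ℕ} (q1 : (Fin m → Fin K) → ℝ) (q2 : (Fin n → Fin L) → ℝ)
    (g : Fin m → Fin n → Fin K → Fin L → ℝ) :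
    ∑ z : Fin m → Fin K, ∑ w : Fin n → Fin L, q1 z * q2 w * ∑ i, ∑ j, g i j (z i) (w j)
      = ∑ i, ∑ j, ∑ k, ∑ l,
          (∑ z : Fin m → Fin K, if z i = k then q1 z else 0) *
          ((∑ w : Fin n → Fin L, if w j = l then q2 w else 0) * g i j k l) := by
  have step1 : ∀ z : Fin m → Fin K,
      ∑ w : Fin n → Fin L, q1 z * q2 w * ∑ i, ∑ j, g i j (z i) (w j)
        = q1 z * ∑ i, ∑ j, ∑ l, (∑ w : Fin n → Fin L, if w j = l then q2 w else 0)
            * g i j (z i) l := by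
    intro z
    have e := aux_sum_eval q2 (fun j l => ∑ i, g i j (z i) l)
    calc ∑ w : Fin n → Fin L, q1 z * q2 w * ∑ i, ∑ j, g i j (z i) (w j)
        = q1 z * ∑ w : Fin n → Fin L, q2 w * ∑ j, ∑ i, g i j (z i) (w j) := by
          rw [Finset.mul_sum]
          refine Finset.sum_congr rfl fun w _ => ?_
          rw [Finset.sum_comm]; ring
      _ = q1 z * ∑ j, ∑ l, (∑ w : Fin n → Fin L, if w j = l then q2 w else 0)
            * ∑ i, g i j (z i) l := by rw [e]
      _ = q1 z * ∑ i, ∑ j, ∑ l, (∑ w : Fin n → Fin L, if w j = l then q2 w else 0)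
            * g i j (z i) l := by
          congr 1
          calc ∑ j, ∑ l, (∑ w : Fin n → Fin L, if w j = l then q2 w else 0)
                * ∑ i, g i j (z i) l
              = ∑ j, ∑ l, ∑ i, (∑ w : Fin n → Fin L, if w j = l then q2 w else 0)
                * g i j (z i) l := by simp only [Finset.mul_sum]
            _ = ∑ j, ∑ i, ∑ l, (∑ w : Fin n → Fin L, if w j = l then q2 w else 0)
                * g i j (z i) l := Finset.sum_congr rfl fun j _ => Finset.sum_comm
            _ = ∑ i, ∑ j, ∑ l, (∑ w : Fin n → Fin L, if w j = l then q2 w else 0)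
                * g i j (z i) l := Finset.sum_comm
  simp only [step1]
  have e2 := aux_sum_eval q1 (fun i k => ∑ j, ∑ l,
      (∑ w : Fin n → Fin L, if w j = l then q2 w else 0) * g i j k l)
  rw [e2]
  refine Finset.sum_congr rfl fun i _ => ?_
  simp only [Finset.mul_sum]
  exact Finset.sum_comm

lemma aux_sum4_comm {α β γ δ : Type*} [Fintype α] [Fintype β] [Fintype γ] [Fintype δ]
    (f : α → β → γ → δ → ℝ) :
    ∑ i, ∑ j, ∑ k, ∑ l, f i j k l = ∑ k, ∑ l, ∑ i, ∑ j, f i j k l := by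
  calc ∑ i, ∑ j, ∑ k, ∑ l, f i j k l
      = ∑ i, ∑ k, ∑ j, ∑ l, f i j k l := Finset.sum_congr rfl fun i _ => Finset.sum_comm
    _ = ∑ k, ∑ i, ∑ j, ∑ l, f i j k l := Finset.sum_comm
    _ = ∑ k, ∑ i, ∑ l, ∑ j, f i j k l := Finset.sum_congr rfl fun k _ =>
        Finset.sum_congr rfl fun i _ => Finset.sum_comm
    _ = ∑ k, ∑ l, ∑ i, ∑ j, f i j k l := Finset.sum_congr rfl fun k _ => Finset.sum_comm

lemma aux_prod_sum_expand {m n : ℕ} (c : ℝ) (f : Fin m → ℝ) (g : Fin n → ℝ) :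
    c * ((∑ i, f i) * (∑ j, g j)) = ∑ i, ∑ j, c * (f i * g j) := by
  calc c * ((∑ i, f i) * ∑ j, g j) = c * ∑ i, ∑ j, f i * g j := by
        rw [Finset.sum_mul_sum]
    _ = ∑ i, c * ∑ j, f i * g j := Finset.mul_sum _ _ _
    _ = ∑ i, ∑ j, c * (f i * g j) := Finset.sum_congr rfl fun i _ => Finset.mul_sum _ _ _

lemma aux_Ppos {m n K L : ℕ} (A : Fin m → Fin n → ℕ)
    (piv : Fin K → ℝ) (rhov : Fin L → ℝ) (θ : Fin m → ℝ) (lam : Fin n → ℝ)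
    (μm : Fin K → Fin L → ℝ)
    (hpiv : ∀ k, 0 < piv k) (hrhov : ∀ l, 0 < rhov l)
    (hθ : ∀ i, 0 < θ i) (hlam : ∀ j, 0 < lam j) (hμ : ∀ k l, 0 < μm k l)
    (z : Fin m → Fin K) (w : Fin n → Fin L) :
    0 < DCLBM.Pjoint A piv rhov θ lam μm z w := by
  unfold DCLBM.Pjoint
  have hξ : ∀ i j, 0 < θ i * lam j * μm (z i) (w j) :=
    fun i j => mul_pos (mul_pos (hθ i) (hlam j)) (hμ _ _)
  refine mul_pos (mul_pos ?_ ?_) ?_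
  · exact Finset.prod_pos fun i _ => hpiv _
  · exact Finset.prod_pos fun j _ => hrhov _
  · refine Finset.prod_pos fun i _ => Finset.prod_pos fun j _ => ?_
    exact div_pos (mul_pos (Real.exp_pos _) (pow_pos (hξ i j) _))
      (by exact_mod_cast Nat.factorial_pos (A i j))

lemma aux_logP {m n K L : ℕ} (A : Fin m → Fin n → ℕ)
    (piv : Fin K → ℝ) (rhov : Fin L → ℝ) (θ : Fin m → ℝ) (lam : Fin n → ℝ)
    (μm : Fin K → Fin L → ℝ)
    (hpiv : ∀ k, 0 < piv k) (hrhov : ∀ l, 0 < rhov l)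
    (hθ : ∀ i, 0 < θ i) (hlam : ∀ j, 0 < lam j) (hμ : ∀ k l, 0 < μm k l)
    (z : Fin m → Fin K) (w : Fin n → Fin L) :
    Real.log (DCLBM.Pjoint A piv rhov θ lam μm z w)
      = ∑ i, Real.log (piv (z i)) + ∑ j, Real.log (rhov (w j))
        + ∑ i, ∑ j, (-(θ i * lam j * μm (z i) (w j))
            + (A i j : ℝ) * Real.log (θ i * lam j * μm (z i) (w j))
            - Real.log (Nat.factorial (A i j))) := by
  have hξ : ∀ i j, 0 < θ i * lam j * μm (z i) (w j) :=
    fun i j => mul_pos (mul_pos (hθ i) (hlam j)) (hμ _ _)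
  have hterm : ∀ i j, (0:ℝ) < Real.exp (-(θ i * lam j * μm (z i) (w j))) *
      (θ i * lam j * μm (z i) (w j)) ^ (A i j) / (Nat.factorial (A i j) : ℝ) := by
    intro i j
    exact div_pos (mul_pos (Real.exp_pos _) (pow_pos (hξ i j) _))
      (by exact_mod_cast Nat.factorial_pos (A i j))
  unfold DCLBM.Pjoint
  rw [Real.log_mul, Real.log_mul, Real.log_prod, Real.log_prod, Real.log_prod]
  · congr 1
    refine Finset.sum_congr rfl fun i _ => ?_
    rw [Real.log_prod]
    · refine Finset.sum_congr rfl fun j _ => ?_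
      rw [Real.log_div (mul_pos (Real.exp_pos _) (pow_pos (hξ i j) _)).ne'
          (by exact_mod_cast (Nat.factorial_pos (A i j)).ne'),
        Real.log_mul (Real.exp_pos _).ne' (pow_pos (hξ i j) _).ne',
        Real.log_exp, Real.log_pow]
    · intro j _; exact (hterm i j).ne'
  · intro i _
    exact (Finset.prod_pos fun j _ => hterm i j).ne'
  · intro j _; exact (hrhov _).ne'
  · intro i _; exact (hpiv _).ne'
  · exact (Finset.prod_pos fun i _ => hpiv _).ne'
  · exact (Finset.prod_pos fun j _ => hrhov _).ne'
  · exact (mul_pos (Finset.prod_pos fun i _ => hpiv _)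
      (Finset.prod_pos fun j _ => hrhov _)).ne'
  · exact (Finset.prod_pos fun i _ => Finset.prod_pos fun j _ => hterm i j).ne'

lemma aux_Jdiff {m n K L : ℕ} (A : Fin m → Fin n → ℕ)
    (q1 : (Fin m → Fin K) → ℝ) (q2 : (Fin n → Fin L) → ℝ)
    (piv piv' : Fin K → ℝ) (rhov rhov' : Fin L → ℝ) (θ θ' : Fin m → ℝ)
    (lam lam' : Fin n → ℝ) (μm μm' : Fin K → Fin L → ℝ)
    (hP : ∀ z w, 0 < DCLBM.Pjoint A piv rhov θ lam μm z w)
    (hP' : ∀ z w, 0 < DCLBM.Pjoint A piv' rhov' θ' lam' μm' z w) :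
    DCLBM.Jobj A q1 q2 piv rhov θ lam μm - DCLBM.Jobj A q1 q2 piv' rhov' θ' lam' μm'
      = ∑ z : Fin m → Fin K, ∑ w : Fin n → Fin L, q1 z * q2 w *
          (Real.log (DCLBM.Pjoint A piv rhov θ lam μm z w)
            - Real.log (DCLBM.Pjoint A piv' rhov' θ' lam' μm' z w)) := by
  unfold DCLBM.Jobj
  rw [← Finset.sum_sub_distrib]
  refine Finset.sum_congr rfl fun z _ => ?_
  rw [← Finset.sum_sub_distrib]
  refine Finset.sum_congr rfl fun w _ => ?_
  by_cases h : q1 z * q2 w = 0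
  · rw [h]; ring
  · rw [Real.log_div (hP z w).ne' h, Real.log_div (hP' z w).ne' h]; ring

end AuxLemmas

/-- Proposition 1, existence part: under positivity of all row/column
degrees and of all marginals of `q1, q2`, the tuple `Φ̂ = (π̂, ρ̂, θ̂, λ̂, μ̂)` given by the
row degrees, column degrees, and the displayed formulas is a valid parameter tuple and is a
global maximizer of `Φ ↦ J(q1, q2, Φ)`. -/
theorem statement0 (m n K L : ℕ) (hm : 0 < m) (hn : 0 < n) (hK : 0 < K) (hL : 0 < L)
    (A : Fin m → Fin n → ℕ)
    (q1 : (Fin m → Fin K) → ℝ) (q2 : (Fin n → Fin L) → ℝ)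
    (hq1 : ∀ z, 0 ≤ q1 z) (hq1s : ∑ z : Fin m → Fin K, q1 z = 1)
    (hq2 : ∀ w, 0 ≤ q2 w) (hq2s : ∑ w : Fin n → Fin L, q2 w = 1)
    (hdr : ∀ i, 0 < ∑ j, A i j) (hdc : ∀ j, 0 < ∑ i, A i j)
    (hpr1 : ∀ i k, 0 < DCLBM.pr1 q1 i k) (hpr2 : ∀ j l, 0 < DCLBM.pr2 q2 j l)
    (θhat : Fin m → ℝ) (hθhat : ∀ i, θhat i = ∑ j, (A i j : ℝ))
    (lamhat : Fin n → ℝ) (hlamhat : ∀ j, lamhat j = ∑ i, (A i j : ℝ))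
    (muhat : Fin K → Fin L → ℝ)
    (hmuhat : ∀ k l, muhat k l =
      (∑ i, ∑ j, (A i j : ℝ) * DCLBM.pr1 q1 i k * DCLBM.pr2 q2 j l) /
        (∑ i, ∑ j, (∑ j', (A i j' : ℝ)) * (∑ i', (A i' j : ℝ)) *
          DCLBM.pr1 q1 i k * DCLBM.pr2 q2 j l))
    (pihat : Fin K → ℝ) (hpihat : ∀ k, pihat k = (1 / (m : ℝ)) * ∑ i, DCLBM.pr1 q1 i k)
    (rhohat : Fin L → ℝ) (hrhohat : ∀ l, rhohat l = (1 / (n : ℝ)) * ∑ j, DCLBM.pr2 q2 j l) :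
    -- `Φ̂` is a valid parameter tuple:
    ((∀ k, 0 < pihat k) ∧ (∑ k, pihat k = 1) ∧
     (∀ l, 0 < rhohat l) ∧ (∑ l, rhohat l = 1) ∧
     (∀ i, 0 < θhat i) ∧ (∀ j, 0 < lamhat j) ∧ (∀ k l, 0 < muhat k l)) ∧
    -- and it maximizes `J(q1, q2, ·)` over all parameter tuples:
    (∀ (piv : Fin K → ℝ) (rhov : Fin L → ℝ) (θ : Fin m → ℝ) (lam : Fin n → ℝ)
        (μm : Fin K → Fin L → ℝ),
      (∀ k, 0 < piv k) → (∑ k, piv k = 1) →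
      (∀ l, 0 < rhov l) → (∑ l, rhov l = 1) →
      (∀ i, 0 < θ i) → (∀ j, 0 < lam j) → (∀ k l, 0 < μm k l) →
      DCLBM.Jobj A q1 q2 piv rhov θ lam μm ≤
        DCLBM.Jobj A q1 q2 pihat rhohat θhat lamhat muhat) := by
  haveI : Nonempty (Fin m) := ⟨⟨0, hm⟩⟩
  haveI : Nonempty (Fin n) := ⟨⟨0, hn⟩⟩
  have hm0 : (m:ℝ) ≠ 0 := Nat.cast_ne_zero.mpr hm.ne'
  have hn0 : (n:ℝ) ≠ 0 := Nat.cast_ne_zero.mpr hn.ne'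
  -- marginal row sums are 1
  have hp1s : ∀ i, ∑ k, DCLBM.pr1 q1 i k = 1 := by
    intro i; unfold DCLBM.pr1
    rw [Finset.sum_comm]
    simp only [Finset.sum_ite_eq, Finset.mem_univ, if_true]
    exact hq1s
  have hp2s : ∀ j, ∑ l, DCLBM.pr2 q2 j l = 1 := by
    intro j; unfold DCLBM.pr2
    rw [Finset.sum_comm]
    simp only [Finset.sum_ite_eq, Finset.mem_univ, if_true]
    exact hq2s
  -- positivity of degrees
  have hθhatpos : ∀ i, 0 < θhat i := by
    intro i; rw [hθhat i, ← Nat.cast_sum]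
    exact_mod_cast hdr i
  have hlamhatpos : ∀ j, 0 < lamhat j := by
    intro j; rw [hlamhat j, ← Nat.cast_sum]
    exact_mod_cast hdc j
  -- positivity of B, D, E
  have hBpos : ∀ k l,
      0 < ∑ i', ∑ j', (A i' j' : ℝ) * DCLBM.pr1 q1 i' k * DCLBM.pr2 q2 j' l := by
    intro k l
    have i0 : Fin m := Classical.arbitrary _
    obtain ⟨j0, hj0⟩ : ∃ j, 0 < A i0 j := by
      by_contra hcon; push_neg at hcon
      have hz : ∑ j, A i0 j = 0 := Finset.sum_eq_zero fun j _ => Nat.le_zero.mp (hcon j)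
      exact absurd hz (hdr i0).ne'
    have hnn : ∀ i' j', 0 ≤ (A i' j' : ℝ) * DCLBM.pr1 q1 i' k * DCLBM.pr2 q2 j' l :=
      fun i' j' => mul_nonneg (mul_nonneg (Nat.cast_nonneg _) (hpr1 i' k).le) (hpr2 j' l).le
    refine Finset.sum_pos' (fun i' _ => Finset.sum_nonneg fun j' _ => hnn i' j')
      ⟨i0, Finset.mem_univ _, ?_⟩
    refine Finset.sum_pos' (fun j' _ => hnn i0 j') ⟨j0, Finset.mem_univ _, ?_⟩
    exact mul_pos (mul_pos (by exact_mod_cast hj0) (hpr1 i0 k)) (hpr2 j0 l)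
  have hDpos : ∀ k, 0 < ∑ i', DCLBM.pr1 q1 i' k * θhat i' :=
    fun k => Finset.sum_pos (fun i' _ => mul_pos (hpr1 i' k) (hθhatpos i'))
      Finset.univ_nonempty
  have hEpos : ∀ l, 0 < ∑ j', DCLBM.pr2 q2 j' l * lamhat j' :=
    fun l => Finset.sum_pos (fun j' _ => mul_pos (hpr2 j' l) (hlamhatpos j'))
      Finset.univ_nonempty
  -- muhat in terms of B, D, E
  have hmuB : ∀ k l, muhat k l =
      (∑ i', ∑ j', (A i' j' : ℝ) * DCLBM.pr1 q1 i' k * DCLBM.pr2 q2 j' l) /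
        ((∑ i', DCLBM.pr1 q1 i' k * θhat i') * (∑ j', DCLBM.pr2 q2 j' l * lamhat j')) := by
    intro k l
    rw [hmuhat k l]
    congr 1
    rw [Finset.sum_mul_sum]
    refine Finset.sum_congr rfl fun i' _ => Finset.sum_congr rfl fun j' _ => ?_
    rw [← hθhat i', ← hlamhat j']
    ring
  have hmupos : ∀ k l, 0 < muhat k l := by
    intro k l
    rw [hmuB k l]
    exact div_pos (hBpos k l) (mul_pos (hDpos k) (hEpos l))
  have hpihatpos : ∀ k, 0 < pihat k := by
    intro k
    rw [hpihat k]
    exact mul_pos (by positivity)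
      (Finset.sum_pos (fun i _ => hpr1 i k) Finset.univ_nonempty)
  have hrhohatpos : ∀ l, 0 < rhohat l := by
    intro l
    rw [hrhohat l]
    exact mul_pos (by positivity)
      (Finset.sum_pos (fun j _ => hpr2 j l) Finset.univ_nonempty)
  have hpihats : ∑ k, pihat k = 1 := by
    simp only [hpihat]
    rw [← Finset.mul_sum, Finset.sum_comm]
    have hsum : ∑ i, ∑ k, DCLBM.pr1 q1 i k = (m:ℝ) := by
      rw [Finset.sum_congr rfl fun i _ => hp1s i]
      simp
    rw [hsum]
    field_simp
  have hrhohats : ∑ l, rhohat l = 1 := by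
    simp only [hrhohat]
    rw [← Finset.mul_sum, Finset.sum_comm]
    have hsum : ∑ j, ∑ l, DCLBM.pr2 q2 j l = (n:ℝ) := by
      rw [Finset.sum_congr rfl fun j _ => hp2s j]
      simp
    rw [hsum]
    field_simp
  refine ⟨⟨hpihatpos, hpihats, hrhohatpos, hrhohats, hθhatpos, hlamhatpos, hmupos⟩, ?_⟩
  intro piv rhov θ lam μm hpiv hpis hrhov hrhos hθ hlam hμ
  -- ======== maximization part ========
  have hP := fun z w => aux_Ppos A piv rhov θ lam μm hpiv hrhov hθ hlam hμ z w
  have hPh := fun z w => aux_Ppos A pihat rhohat θhat lamhat muhat hpihatpos hrhohatpos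
    hθhatpos hlamhatpos hmupos z w
  have hTpos : ∀ k, 0 < (∑ i', DCLBM.pr1 q1 i' k * θ i') := fun k =>
    Finset.sum_pos (fun i' _ => mul_pos (hpr1 i' k) (hθ i')) Finset.univ_nonempty
  have hSpos : ∀ l, 0 < (∑ j', DCLBM.pr2 q2 j' l * lam j') := fun l =>
    Finset.sum_pos (fun j' _ => mul_pos (hpr2 j' l) (hlam j')) Finset.univ_nonempty
  have hlogsplit : ∀ (i : Fin m) (j : Fin n) (k : Fin K) (l : Fin L),
      Real.log (θ i * lam j * μm k l) - Real.log (θhat i * lamhat j * muhat k l)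
        = Real.log (μm k l * (∑ i', DCLBM.pr1 q1 i' k * θ i') * (∑ j', DCLBM.pr2 q2 j' l * lam j') / (∑ i', ∑ j', (A i' j' : ℝ) * DCLBM.pr1 q1 i' k * DCLBM.pr2 q2 j' l)) + Real.log (θ i * (∑ i', DCLBM.pr1 q1 i' k * θhat i') / (θhat i * (∑ i', DCLBM.pr1 q1 i' k * θ i'))) + Real.log (lam j * (∑ j', DCLBM.pr2 q2 j' l * lamhat j') / (lamhat j * (∑ j', DCLBM.pr2 q2 j' l * lam j'))) := by
    intro i j k l
    rw [hmuB k l,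
      Real.log_mul (mul_pos (hθ i) (hlam j)).ne' (hμ k l).ne',
      Real.log_mul (hθ i).ne' (hlam j).ne',
      Real.log_mul (mul_pos (hθhatpos i) (hlamhatpos j)).ne'
        (div_pos (hBpos k l) (mul_pos (hDpos k) (hEpos l))).ne',
      Real.log_mul (hθhatpos i).ne' (hlamhatpos j).ne',
      Real.log_div (hBpos k l).ne' (mul_pos (hDpos k) (hEpos l)).ne',
      Real.log_mul (hDpos k).ne' (hEpos l).ne',
      Real.log_div (mul_pos (mul_pos (hμ k l) (hTpos k)) (hSpos l)).ne' (hBpos k l).ne',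
      Real.log_mul (mul_pos (hμ k l) (hTpos k)).ne' (hSpos l).ne',
      Real.log_mul (hμ k l).ne' (hTpos k).ne',
      Real.log_div (mul_pos (hθ i) (hDpos k)).ne' (mul_pos (hθhatpos i) (hTpos k)).ne',
      Real.log_mul (hθ i).ne' (hDpos k).ne',
      Real.log_mul (hθhatpos i).ne' (hTpos k).ne',
      Real.log_div (mul_pos (hlam j) (hEpos l)).ne' (mul_pos (hlamhatpos j) (hSpos l)).ne',
      Real.log_mul (hlam j).ne' (hEpos l).ne',
      Real.log_mul (hlamhatpos j).ne' (hSpos l).ne']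
    ring
  suffices hfin : DCLBM.Jobj A q1 q2 piv rhov θ lam μm
      - DCLBM.Jobj A q1 q2 pihat rhohat θhat lamhat muhat ≤ 0 by linarith
  rw [aux_Jdiff A q1 q2 piv pihat rhov rhohat θ θhat lam lamhat μm muhat hP hPh]
  have hdecomp : ∀ (z : Fin m → Fin K) (w : Fin n → Fin L),
      q1 z * q2 w * (Real.log (DCLBM.Pjoint A piv rhov θ lam μm z w)
        - Real.log (DCLBM.Pjoint A pihat rhohat θhat lamhat muhat z w))
      = q1 z * q2 w * (∑ i, (Real.log (piv (z i)) - Real.log (pihat (z i))))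
        + (q1 z * q2 w * (∑ j, (Real.log (rhov (w j)) - Real.log (rhohat (w j))))
          + q1 z * q2 w * (∑ i, ∑ j, ((-(θ i * lam j * μm (z i) (w j)) + (A i j : ℝ) * Real.log (θ i * lam j * μm (z i) (w j)) - Real.log (Nat.factorial (A i j))) - (-(θhat i * lamhat j * muhat (z i) (w j)) + (A i j : ℝ) * Real.log (θhat i * lamhat j * muhat (z i) (w j)) - Real.log (Nat.factorial (A i j)))))) := by
    intro z w
    rw [aux_logP A piv rhov θ lam μm hpiv hrhov hθ hlam hμ z w,
        aux_logP A pihat rhohat θhat lamhat muhat hpihatpos hrhohatpos hθhatpos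
          hlamhatpos hmupos z w]
    simp only [Finset.sum_sub_distrib]
    ring
  simp only [hdecomp, Finset.sum_add_distrib]
  have hS1 : ∑ z : Fin m → Fin K, ∑ w : Fin n → Fin L,
      q1 z * q2 w * (∑ i, (Real.log (piv (z i)) - Real.log (pihat (z i))))
      = ∑ i, ∑ k, DCLBM.pr1 q1 i k * (Real.log (piv k) - Real.log (pihat k)) := by
    have hz : ∀ z : Fin m → Fin K,
        ∑ w : Fin n → Fin L, q1 z * q2 w * (∑ i, (Real.log (piv (z i)) - Real.log (pihat (z i))))
        = q1 z * ∑ i, (Real.log (piv (z i)) - Real.log (pihat (z i))) := by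
      intro z
      calc ∑ w : Fin n → Fin L, q1 z * q2 w *
            (∑ i, (Real.log (piv (z i)) - Real.log (pihat (z i))))
          = ∑ w : Fin n → Fin L,
            (q1 z * ∑ i, (Real.log (piv (z i)) - Real.log (pihat (z i)))) * q2 w :=
            Finset.sum_congr rfl fun w _ => by ring
        _ = (q1 z * ∑ i, (Real.log (piv (z i)) - Real.log (pihat (z i))))
            * ∑ w : Fin n → Fin L, q2 w := by rw [← Finset.mul_sum]
        _ = q1 z * ∑ i, (Real.log (piv (z i)) - Real.log (pihat (z i))) := by
            rw [hq2s, mul_one]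
    simp only [hz]
    have e := aux_sum_eval q1 (fun i k => Real.log (piv k) - Real.log (pihat k))
    unfold DCLBM.pr1
    exact e
  have hS2 : ∑ z : Fin m → Fin K, ∑ w : Fin n → Fin L,
      q1 z * q2 w * (∑ j, (Real.log (rhov (w j)) - Real.log (rhohat (w j))))
      = ∑ j, ∑ l, DCLBM.pr2 q2 j l * (Real.log (rhov l) - Real.log (rhohat l)) := by
    rw [Finset.sum_comm]
    have hw : ∀ w : Fin n → Fin L,
        ∑ z : Fin m → Fin K, q1 z * q2 w * (∑ j, (Real.log (rhov (w j)) - Real.log (rhohat (w j))))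
        = q2 w * ∑ j, (Real.log (rhov (w j)) - Real.log (rhohat (w j))) := by
      intro w
      calc ∑ z : Fin m → Fin K, q1 z * q2 w *
            (∑ j, (Real.log (rhov (w j)) - Real.log (rhohat (w j))))
          = ∑ z : Fin m → Fin K,
            (q2 w * ∑ j, (Real.log (rhov (w j)) - Real.log (rhohat (w j)))) * q1 z :=
            Finset.sum_congr rfl fun z _ => by ring
        _ = (q2 w * ∑ j, (Real.log (rhov (w j)) - Real.log (rhohat (w j))))
            * ∑ z : Fin m → Fin K, q1 z := by rw [← Finset.mul_sum]
        _ = q2 w * ∑ j, (Real.log (rhov (w j)) - Real.log (rhohat (w j))) := by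
            rw [hq1s, mul_one]
    simp only [hw]
    have e := aux_sum_eval q2 (fun j l => Real.log (rhov l) - Real.log (rhohat l))
    unfold DCLBM.pr2
    exact e
  have hS3 : ∑ z : Fin m → Fin K, ∑ w : Fin n → Fin L,
      q1 z * q2 w * (∑ i, ∑ j, ((-(θ i * lam j * μm (z i) (w j)) + (A i j : ℝ) * Real.log (θ i * lam j * μm (z i) (w j)) - Real.log (Nat.factorial (A i j))) - (-(θhat i * lamhat j * muhat (z i) (w j)) + (A i j : ℝ) * Real.log (θhat i * lamhat j * muhat (z i) (w j)) - Real.log (Nat.factorial (A i j)))))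
      = ∑ i, ∑ j, ∑ k, ∑ l, DCLBM.pr1 q1 i k * (DCLBM.pr2 q2 j l * ((-(θ i * lam j * μm k l) + (A i j : ℝ) * Real.log (θ i * lam j * μm k l) - Real.log (Nat.factorial (A i j))) - (-(θhat i * lamhat j * muhat k l) + (A i j : ℝ) * Real.log (θhat i * lamhat j * muhat k l) - Real.log (Nat.factorial (A i j))))) := by
    have e := aux_sum_eval2 q1 q2 (fun i j k l => ((-(θ i * lam j * μm k l) + (A i j : ℝ) * Real.log (θ i * lam j * μm k l) - Real.log (Nat.factorial (A i j))) - (-(θhat i * lamhat j * muhat k l) + (A i j : ℝ) * Real.log (θhat i * lamhat j * muhat k l) - Real.log (Nat.factorial (A i j)))))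
    unfold DCLBM.pr1 DCLBM.pr2
    exact e
  rw [hS1, hS2, hS3]
  -- ===== bound 1 : the pi part =====
  have hb1 : ∑ i, ∑ k, DCLBM.pr1 q1 i k * (Real.log (piv k) - Real.log (pihat k)) ≤ 0 := by
    have hcol : ∀ k, ∑ i, DCLBM.pr1 q1 i k = (m:ℝ) * pihat k := by
      intro k; rw [hpihat k]; field_simp
    have key : ∀ k, (∑ i, DCLBM.pr1 q1 i k) * (Real.log (piv k) - Real.log (pihat k))
        ≤ (m:ℝ) * piv k - (m:ℝ) * pihat k := by
      intro k
      have hlog : Real.log (piv k) - Real.log (pihat k) ≤ piv k / pihat k - 1 := by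
        rw [← Real.log_div (hpiv k).ne' (hpihatpos k).ne']
        exact Real.log_le_sub_one_of_pos (div_pos (hpiv k) (hpihatpos k))
      have hnn : 0 ≤ ∑ i, DCLBM.pr1 q1 i k := Finset.sum_nonneg fun i _ => (hpr1 i k).le
      calc (∑ i, DCLBM.pr1 q1 i k) * (Real.log (piv k) - Real.log (pihat k))
          ≤ (∑ i, DCLBM.pr1 q1 i k) * (piv k / pihat k - 1) :=
            mul_le_mul_of_nonneg_left hlog hnn
        _ = ((m:ℝ) * pihat k) * (piv k / pihat k - 1) := by rw [hcol k]
        _ = (m:ℝ) * piv k - (m:ℝ) * pihat k := by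
            have hne := (hpihatpos k).ne'
            field_simp
    calc ∑ i, ∑ k, DCLBM.pr1 q1 i k * (Real.log (piv k) - Real.log (pihat k))
        = ∑ k, ∑ i, DCLBM.pr1 q1 i k * (Real.log (piv k) - Real.log (pihat k)) :=
          Finset.sum_comm
      _ = ∑ k, (∑ i, DCLBM.pr1 q1 i k) * (Real.log (piv k) - Real.log (pihat k)) :=
          Finset.sum_congr rfl fun k _ => (Finset.sum_mul _ _ _).symm
      _ ≤ ∑ k, ((m:ℝ) * piv k - (m:ℝ) * pihat k) := Finset.sum_le_sum fun k _ => key k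
      _ = (m:ℝ) * ∑ k, piv k - (m:ℝ) * ∑ k, pihat k := by
          rw [Finset.sum_sub_distrib, ← Finset.mul_sum, ← Finset.mul_sum]
      _ = 0 := by rw [hpis, hpihats]; ring
  -- ===== bound 2 : the rho part =====
  have hb2 : ∑ j, ∑ l, DCLBM.pr2 q2 j l * (Real.log (rhov l) - Real.log (rhohat l)) ≤ 0 := by
    have hcol : ∀ l, ∑ j, DCLBM.pr2 q2 j l = (n:ℝ) * rhohat l := by
      intro l; rw [hrhohat l]; field_simp
    have key : ∀ l, (∑ j, DCLBM.pr2 q2 j l) * (Real.log (rhov l) - Real.log (rhohat l))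
        ≤ (n:ℝ) * rhov l - (n:ℝ) * rhohat l := by
      intro l
      have hlog : Real.log (rhov l) - Real.log (rhohat l) ≤ rhov l / rhohat l - 1 := by
        rw [← Real.log_div (hrhov l).ne' (hrhohatpos l).ne']
        exact Real.log_le_sub_one_of_pos (div_pos (hrhov l) (hrhohatpos l))
      have hnn : 0 ≤ ∑ j, DCLBM.pr2 q2 j l := Finset.sum_nonneg fun j _ => (hpr2 j l).le
      calc (∑ j, DCLBM.pr2 q2 j l) * (Real.log (rhov l) - Real.log (rhohat l))
          ≤ (∑ j, DCLBM.pr2 q2 j l) * (rhov l / rhohat l - 1) :=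
            mul_le_mul_of_nonneg_left hlog hnn
        _ = ((n:ℝ) * rhohat l) * (rhov l / rhohat l - 1) := by rw [hcol l]
        _ = (n:ℝ) * rhov l - (n:ℝ) * rhohat l := by
            have hne := (hrhohatpos l).ne'
            field_simp
    calc ∑ j, ∑ l, DCLBM.pr2 q2 j l * (Real.log (rhov l) - Real.log (rhohat l))
        = ∑ l, ∑ j, DCLBM.pr2 q2 j l * (Real.log (rhov l) - Real.log (rhohat l)) :=
          Finset.sum_comm
      _ = ∑ l, (∑ j, DCLBM.pr2 q2 j l) * (Real.log (rhov l) - Real.log (rhohat l)) :=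
          Finset.sum_congr rfl fun l _ => (Finset.sum_mul _ _ _).symm
      _ ≤ ∑ l, ((n:ℝ) * rhov l - (n:ℝ) * rhohat l) := Finset.sum_le_sum fun l _ => key l
      _ = (n:ℝ) * ∑ l, rhov l - (n:ℝ) * ∑ l, rhohat l := by
          rw [Finset.sum_sub_distrib, ← Finset.mul_sum, ← Finset.mul_sum]
      _ = 0 := by rw [hrhos, hrhohats]; ring
  -- ===== bound 3 : the theta-lambda-mu part =====
  have hb3 : ∑ i, ∑ j, ∑ k, ∑ l,
      DCLBM.pr1 q1 i k * (DCLBM.pr2 q2 j l * ((-(θ i * lam j * μm k l) + (A i j : ℝ) * Real.log (θ i * lam j * μm k l) - Real.log (Nat.factorial (A i j))) - (-(θhat i * lamhat j * muhat k l) + (A i j : ℝ) * Real.log (θhat i * lamhat j * muhat k l) - Real.log (Nat.factorial (A i j))))) ≤ 0 := by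
    have hgsplit : ∀ (i : Fin m) (j : Fin n) (k : Fin K) (l : Fin L),
        DCLBM.pr1 q1 i k * (DCLBM.pr2 q2 j l * ((-(θ i * lam j * μm k l) + (A i j : ℝ) * Real.log (θ i * lam j * μm k l) - Real.log (Nat.factorial (A i j))) - (-(θhat i * lamhat j * muhat k l) + (A i j : ℝ) * Real.log (θhat i * lamhat j * muhat k l) - Real.log (Nat.factorial (A i j)))))
        = DCLBM.pr1 q1 i k * (DCLBM.pr2 q2 j l * (-(θ i * lam j * μm k l)))
          + (DCLBM.pr1 q1 i k * (DCLBM.pr2 q2 j l * (θhat i * lamhat j * muhat k l))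
          + (DCLBM.pr1 q1 i k * (DCLBM.pr2 q2 j l * ((A i j : ℝ) * Real.log (μm k l * (∑ i', DCLBM.pr1 q1 i' k * θ i') * (∑ j', DCLBM.pr2 q2 j' l * lam j') / (∑ i', ∑ j', (A i' j' : ℝ) * DCLBM.pr1 q1 i' k * DCLBM.pr2 q2 j' l))))
          + (DCLBM.pr1 q1 i k * (DCLBM.pr2 q2 j l * ((A i j : ℝ) * Real.log (θ i * (∑ i', DCLBM.pr1 q1 i' k * θhat i') / (θhat i * (∑ i', DCLBM.pr1 q1 i' k * θ i')))))
          + DCLBM.pr1 q1 i k * (DCLBM.pr2 q2 j l * ((A i j : ℝ) * Real.log (lam j * (∑ j', DCLBM.pr2 q2 j' l * lamhat j') / (lamhat j * (∑ j', DCLBM.pr2 q2 j' l * lam j')))))))) := by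
      intro i j k l
      have h := hlogsplit i j k l
      calc DCLBM.pr1 q1 i k * (DCLBM.pr2 q2 j l * ((-(θ i * lam j * μm k l) + (A i j : ℝ) * Real.log (θ i * lam j * μm k l) - Real.log (Nat.factorial (A i j))) - (-(θhat i * lamhat j * muhat k l) + (A i j : ℝ) * Real.log (θhat i * lamhat j * muhat k l) - Real.log (Nat.factorial (A i j)))))
          = DCLBM.pr1 q1 i k * (DCLBM.pr2 q2 j l * (-(θ i * lam j * μm k l) + θhat i * lamhat j * muhat k l
            + (A i j : ℝ) * (Real.log (θ i * lam j * μm k l)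
              - Real.log (θhat i * lamhat j * muhat k l)))) := by ring
        _ = DCLBM.pr1 q1 i k * (DCLBM.pr2 q2 j l * (-(θ i * lam j * μm k l) + θhat i * lamhat j * muhat k l
            + (A i j : ℝ) * (Real.log (μm k l * (∑ i', DCLBM.pr1 q1 i' k * θ i') * (∑ j', DCLBM.pr2 q2 j' l * lam j') / (∑ i', ∑ j', (A i' j' : ℝ) * DCLBM.pr1 q1 i' k * DCLBM.pr2 q2 j' l)) + Real.log (θ i * (∑ i', DCLBM.pr1 q1 i' k * θhat i') / (θhat i * (∑ i', DCLBM.pr1 q1 i' k * θ i'))) + Real.log (lam j * (∑ j', DCLBM.pr2 q2 j' l * lamhat j') / (lamhat j * (∑ j', DCLBM.pr2 q2 j' l * lam j')))))) := by rw [h]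
        _ = _ := by ring
    simp only [hgsplit, Finset.sum_add_distrib]
    have hX1 : ∑ i, ∑ j, ∑ k, ∑ l,
        DCLBM.pr1 q1 i k * (DCLBM.pr2 q2 j l * (-(θ i * lam j * μm k l)))
        = -∑ k, ∑ l, μm k l * ((∑ i', DCLBM.pr1 q1 i' k * θ i') * (∑ j', DCLBM.pr2 q2 j' l * lam j')) := by
      rw [aux_sum4_comm]
      refine Eq.symm ?_
      rw [← Finset.sum_neg_distrib]
      refine Finset.sum_congr rfl fun k _ => ?_
      rw [← Finset.sum_neg_distrib]
      refine Finset.sum_congr rfl fun l _ => ?_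
      calc -(μm k l * ((∑ i', DCLBM.pr1 q1 i' k * θ i') * (∑ j', DCLBM.pr2 q2 j' l * lam j')))
          = -(∑ i, ∑ j, μm k l * ((DCLBM.pr1 q1 i k * θ i) * (DCLBM.pr2 q2 j l * lam j))) := by
            rw [aux_prod_sum_expand]
        _ = ∑ i, -(∑ j, μm k l * ((DCLBM.pr1 q1 i k * θ i) * (DCLBM.pr2 q2 j l * lam j))) :=
            (Finset.sum_neg_distrib ..).symm
        _ = ∑ i, ∑ j, -(μm k l * ((DCLBM.pr1 q1 i k * θ i) * (DCLBM.pr2 q2 j l * lam j))) :=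
            Finset.sum_congr rfl fun i _ => (Finset.sum_neg_distrib ..).symm
        _ = ∑ i, ∑ j, DCLBM.pr1 q1 i k * (DCLBM.pr2 q2 j l * (-(θ i * lam j * μm k l))) :=
            Finset.sum_congr rfl fun i _ => Finset.sum_congr rfl fun j _ => by ring
    have hX2 : ∑ i, ∑ j, ∑ k, ∑ l,
        DCLBM.pr1 q1 i k * (DCLBM.pr2 q2 j l * (θhat i * lamhat j * muhat k l))
        = ∑ k, ∑ l, (∑ i', ∑ j', (A i' j' : ℝ) * DCLBM.pr1 q1 i' k * DCLBM.pr2 q2 j' l) := by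
      rw [aux_sum4_comm]
      refine Finset.sum_congr rfl fun k _ => Finset.sum_congr rfl fun l _ => ?_
      refine Eq.symm ?_
      calc (∑ i', ∑ j', (A i' j' : ℝ) * DCLBM.pr1 q1 i' k * DCLBM.pr2 q2 j' l)
          = muhat k l * ((∑ i', DCLBM.pr1 q1 i' k * θhat i') * (∑ j', DCLBM.pr2 q2 j' l * lamhat j')) := by
            rw [hmuB k l, div_mul_cancel₀ _ (mul_pos (hDpos k) (hEpos l)).ne']
        _ = ∑ i, ∑ j, muhat k l * ((DCLBM.pr1 q1 i k * θhat i) * (DCLBM.pr2 q2 j l * lamhat j)) :=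
            aux_prod_sum_expand _ _ _
        _ = ∑ i, ∑ j, DCLBM.pr1 q1 i k * (DCLBM.pr2 q2 j l * (θhat i * lamhat j * muhat k l)) :=
            Finset.sum_congr rfl fun i _ => Finset.sum_congr rfl fun j _ => by ring
    have hX3 : ∑ i, ∑ j, ∑ k, ∑ l,
        DCLBM.pr1 q1 i k * (DCLBM.pr2 q2 j l * ((A i j : ℝ) * Real.log (μm k l * (∑ i', DCLBM.pr1 q1 i' k * θ i') * (∑ j', DCLBM.pr2 q2 j' l * lam j') / (∑ i', ∑ j', (A i' j' : ℝ) * DCLBM.pr1 q1 i' k * DCLBM.pr2 q2 j' l))))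
        ≤ ∑ k, ∑ l, μm k l * ((∑ i', DCLBM.pr1 q1 i' k * θ i') * (∑ j', DCLBM.pr2 q2 j' l * lam j')) - ∑ k, ∑ l, (∑ i', ∑ j', (A i' j' : ℝ) * DCLBM.pr1 q1 i' k * DCLBM.pr2 q2 j' l) := by
      have hstep : ∑ i, ∑ j, ∑ k, ∑ l,
          DCLBM.pr1 q1 i k * (DCLBM.pr2 q2 j l * ((A i j : ℝ) * Real.log (μm k l * (∑ i', DCLBM.pr1 q1 i' k * θ i') * (∑ j', DCLBM.pr2 q2 j' l * lam j') / (∑ i', ∑ j', (A i' j' : ℝ) * DCLBM.pr1 q1 i' k * DCLBM.pr2 q2 j' l))))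
          ≤ ∑ i, ∑ j, ∑ k, ∑ l, DCLBM.pr1 q1 i k * (DCLBM.pr2 q2 j l *
            ((A i j : ℝ) * (μm k l * (∑ i', DCLBM.pr1 q1 i' k * θ i') * (∑ j', DCLBM.pr2 q2 j' l * lam j') / (∑ i', ∑ j', (A i' j' : ℝ) * DCLBM.pr1 q1 i' k * DCLBM.pr2 q2 j' l) - 1))) := by
        refine Finset.sum_le_sum fun i _ => Finset.sum_le_sum fun j _ =>
          Finset.sum_le_sum fun k _ => Finset.sum_le_sum fun l _ => ?_
        have hlog : Real.log (μm k l * (∑ i', DCLBM.pr1 q1 i' k * θ i') * (∑ j', DCLBM.pr2 q2 j' l * lam j') / (∑ i', ∑ j', (A i' j' : ℝ) * DCLBM.pr1 q1 i' k * DCLBM.pr2 q2 j' l)) ≤ μm k l * (∑ i', DCLBM.pr1 q1 i' k * θ i') * (∑ j', DCLBM.pr2 q2 j' l * lam j') / (∑ i', ∑ j', (A i' j' : ℝ) * DCLBM.pr1 q1 i' k * DCLBM.pr2 q2 j' l) - 1 :=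
          Real.log_le_sub_one_of_pos (div_pos (mul_pos (mul_pos (hμ k l) (hTpos k))
            (hSpos l)) (hBpos k l))
        exact mul_le_mul_of_nonneg_left (mul_le_mul_of_nonneg_left
          (mul_le_mul_of_nonneg_left hlog (Nat.cast_nonneg _)) (hpr2 j l).le) (hpr1 i k).le
      refine hstep.trans (le_of_eq ?_)
      rw [aux_sum4_comm, ← Finset.sum_sub_distrib]
      refine Finset.sum_congr rfl fun k _ => ?_
      rw [← Finset.sum_sub_distrib]
      refine Finset.sum_congr rfl fun l _ => ?_
      have e1 : ∑ i, ∑ j, DCLBM.pr1 q1 i k * (DCLBM.pr2 q2 j l *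
          ((A i j : ℝ) * (μm k l * (∑ i', DCLBM.pr1 q1 i' k * θ i') * (∑ j', DCLBM.pr2 q2 j' l * lam j') / (∑ i', ∑ j', (A i' j' : ℝ) * DCLBM.pr1 q1 i' k * DCLBM.pr2 q2 j' l) - 1)))
          = (μm k l * (∑ i', DCLBM.pr1 q1 i' k * θ i') * (∑ j', DCLBM.pr2 q2 j' l * lam j') / (∑ i', ∑ j', (A i' j' : ℝ) * DCLBM.pr1 q1 i' k * DCLBM.pr2 q2 j' l) - 1) * (∑ i', ∑ j', (A i' j' : ℝ) * DCLBM.pr1 q1 i' k * DCLBM.pr2 q2 j' l) := by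
        refine Eq.symm ?_
        calc (μm k l * (∑ i', DCLBM.pr1 q1 i' k * θ i') * (∑ j', DCLBM.pr2 q2 j' l * lam j') / (∑ i', ∑ j', (A i' j' : ℝ) * DCLBM.pr1 q1 i' k * DCLBM.pr2 q2 j' l) - 1) * (∑ i', ∑ j', (A i' j' : ℝ) * DCLBM.pr1 q1 i' k * DCLBM.pr2 q2 j' l)
            = ∑ i, (μm k l * (∑ i', DCLBM.pr1 q1 i' k * θ i') * (∑ j', DCLBM.pr2 q2 j' l * lam j') / (∑ i', ∑ j', (A i' j' : ℝ) * DCLBM.pr1 q1 i' k * DCLBM.pr2 q2 j' l) - 1)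
              * ∑ j, (A i j : ℝ) * DCLBM.pr1 q1 i k * DCLBM.pr2 q2 j l := by
              rw [Finset.mul_sum]
          _ = ∑ i, ∑ j, (μm k l * (∑ i', DCLBM.pr1 q1 i' k * θ i') * (∑ j', DCLBM.pr2 q2 j' l * lam j') / (∑ i', ∑ j', (A i' j' : ℝ) * DCLBM.pr1 q1 i' k * DCLBM.pr2 q2 j' l) - 1)
              * ((A i j : ℝ) * DCLBM.pr1 q1 i k * DCLBM.pr2 q2 j l) :=
              Finset.sum_congr rfl fun i _ => Finset.mul_sum _ _ _
          _ = ∑ i, ∑ j, DCLBM.pr1 q1 i k * (DCLBM.pr2 q2 j l *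
              ((A i j : ℝ) * (μm k l * (∑ i', DCLBM.pr1 q1 i' k * θ i') * (∑ j', DCLBM.pr2 q2 j' l * lam j') / (∑ i', ∑ j', (A i' j' : ℝ) * DCLBM.pr1 q1 i' k * DCLBM.pr2 q2 j' l) - 1))) :=
              Finset.sum_congr rfl fun i _ => Finset.sum_congr rfl fun j _ => by ring
      rw [e1]
      have hBne := (hBpos k l).ne'
      field_simp
    have hX4 : ∑ i, ∑ j, ∑ k, ∑ l,
        DCLBM.pr1 q1 i k * (DCLBM.pr2 q2 j l * ((A i j : ℝ) * Real.log (θ i * (∑ i', DCLBM.pr1 q1 i' k * θhat i') / (θhat i * (∑ i', DCLBM.pr1 q1 i' k * θ i'))))) ≤ 0 := by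
      have hred : ∑ i, ∑ j, ∑ k, ∑ l,
          DCLBM.pr1 q1 i k * (DCLBM.pr2 q2 j l * ((A i j : ℝ) * Real.log (θ i * (∑ i', DCLBM.pr1 q1 i' k * θhat i') / (θhat i * (∑ i', DCLBM.pr1 q1 i' k * θ i')))))
          = ∑ i, ∑ k, (DCLBM.pr1 q1 i k * θhat i) * Real.log (θ i * (∑ i', DCLBM.pr1 q1 i' k * θhat i') / (θhat i * (∑ i', DCLBM.pr1 q1 i' k * θ i'))) := by
        refine Finset.sum_congr rfl fun i _ => ?_
        rw [Finset.sum_comm]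
        refine Finset.sum_congr rfl fun k _ => ?_
        calc ∑ j, ∑ l, DCLBM.pr1 q1 i k * (DCLBM.pr2 q2 j l * ((A i j : ℝ) * Real.log (θ i * (∑ i', DCLBM.pr1 q1 i' k * θhat i') / (θhat i * (∑ i', DCLBM.pr1 q1 i' k * θ i')))))
            = ∑ j, (DCLBM.pr1 q1 i k * ((A i j : ℝ) * Real.log (θ i * (∑ i', DCLBM.pr1 q1 i' k * θhat i') / (θhat i * (∑ i', DCLBM.pr1 q1 i' k * θ i'))))) * ∑ l, DCLBM.pr2 q2 j l := by
              refine Finset.sum_congr rfl fun j _ => ?_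
              conv_rhs => rw [Finset.mul_sum]
              exact Finset.sum_congr rfl fun l _ => by ring
          _ = ∑ j, DCLBM.pr1 q1 i k * ((A i j : ℝ) * Real.log (θ i * (∑ i', DCLBM.pr1 q1 i' k * θhat i') / (θhat i * (∑ i', DCLBM.pr1 q1 i' k * θ i')))) :=
              Finset.sum_congr rfl fun j _ => by rw [hp2s j, mul_one]
          _ = ∑ j, (DCLBM.pr1 q1 i k * Real.log (θ i * (∑ i', DCLBM.pr1 q1 i' k * θhat i') / (θhat i * (∑ i', DCLBM.pr1 q1 i' k * θ i')))) * (A i j : ℝ) :=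
              Finset.sum_congr rfl fun j _ => by ring
          _ = (DCLBM.pr1 q1 i k * Real.log (θ i * (∑ i', DCLBM.pr1 q1 i' k * θhat i') / (θhat i * (∑ i', DCLBM.pr1 q1 i' k * θ i')))) * ∑ j, (A i j : ℝ) := by rw [← Finset.mul_sum]
          _ = (DCLBM.pr1 q1 i k * θhat i) * Real.log (θ i * (∑ i', DCLBM.pr1 q1 i' k * θhat i') / (θhat i * (∑ i', DCLBM.pr1 q1 i' k * θ i'))) := by rw [← hθhat i]; ring
      rw [hred]
      calc ∑ i, ∑ k, (DCLBM.pr1 q1 i k * θhat i) * Real.log (θ i * (∑ i', DCLBM.pr1 q1 i' k * θhat i') / (θhat i * (∑ i', DCLBM.pr1 q1 i' k * θ i')))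
          ≤ ∑ i, ∑ k, (DCLBM.pr1 q1 i k * θhat i) * (θ i * (∑ i', DCLBM.pr1 q1 i' k * θhat i') / (θhat i * (∑ i', DCLBM.pr1 q1 i' k * θ i')) - 1) := by
            refine Finset.sum_le_sum fun i _ => Finset.sum_le_sum fun k _ => ?_
            exact mul_le_mul_of_nonneg_left (Real.log_le_sub_one_of_pos (div_pos
              (mul_pos (hθ i) (hDpos k)) (mul_pos (hθhatpos i) (hTpos k))))
              (mul_nonneg (hpr1 i k).le (hθhatpos i).le)
        _ = ∑ k, ∑ i, (DCLBM.pr1 q1 i k * θhat i) * (θ i * (∑ i', DCLBM.pr1 q1 i' k * θhat i') / (θhat i * (∑ i', DCLBM.pr1 q1 i' k * θ i')) - 1) :=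
            Finset.sum_comm
        _ = ∑ k, (((∑ i', DCLBM.pr1 q1 i' k * θ i')) * ((∑ i', DCLBM.pr1 q1 i' k * θhat i') / (∑ i', DCLBM.pr1 q1 i' k * θ i')) - (∑ i', DCLBM.pr1 q1 i' k * θhat i')) := by
            refine Finset.sum_congr rfl fun k _ => ?_
            rw [Finset.sum_mul, ← Finset.sum_sub_distrib]
            refine Finset.sum_congr rfl fun i _ => ?_
            have h1 := (hθhatpos i).ne'
            have h2 := (hTpos k).ne'
            field_simp
        _ = ∑ k, (0:ℝ) := by
            refine Finset.sum_congr rfl fun k _ => ?_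
            have h2 := (hTpos k).ne'
            field_simp
            ring
        _ = 0 := Finset.sum_const_zero
    have hX5 : ∑ i, ∑ j, ∑ k, ∑ l,
        DCLBM.pr1 q1 i k * (DCLBM.pr2 q2 j l * ((A i j : ℝ) * Real.log (lam j * (∑ j', DCLBM.pr2 q2 j' l * lamhat j') / (lamhat j * (∑ j', DCLBM.pr2 q2 j' l * lam j'))))) ≤ 0 := by
      have hred : ∑ i, ∑ j, ∑ k, ∑ l,
          DCLBM.pr1 q1 i k * (DCLBM.pr2 q2 j l * ((A i j : ℝ) * Real.log (lam j * (∑ j', DCLBM.pr2 q2 j' l * lamhat j') / (lamhat j * (∑ j', DCLBM.pr2 q2 j' l * lam j')))))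
          = ∑ j, ∑ l, (DCLBM.pr2 q2 j l * lamhat j) * Real.log (lam j * (∑ j', DCLBM.pr2 q2 j' l * lamhat j') / (lamhat j * (∑ j', DCLBM.pr2 q2 j' l * lam j'))) := by
        calc ∑ i, ∑ j, ∑ k, ∑ l,
            DCLBM.pr1 q1 i k * (DCLBM.pr2 q2 j l * ((A i j : ℝ) * Real.log (lam j * (∑ j', DCLBM.pr2 q2 j' l * lamhat j') / (lamhat j * (∑ j', DCLBM.pr2 q2 j' l * lam j')))))
            = ∑ j, ∑ i, ∑ k, ∑ l,
              DCLBM.pr1 q1 i k * (DCLBM.pr2 q2 j l * ((A i j : ℝ) * Real.log (lam j * (∑ j', DCLBM.pr2 q2 j' l * lamhat j') / (lamhat j * (∑ j', DCLBM.pr2 q2 j' l * lam j'))))) :=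
              Finset.sum_comm
          _ = ∑ j, ∑ i, ∑ l, ∑ k,
              DCLBM.pr1 q1 i k * (DCLBM.pr2 q2 j l * ((A i j : ℝ) * Real.log (lam j * (∑ j', DCLBM.pr2 q2 j' l * lamhat j') / (lamhat j * (∑ j', DCLBM.pr2 q2 j' l * lam j'))))) :=
              Finset.sum_congr rfl fun j _ => Finset.sum_congr rfl fun i _ => Finset.sum_comm
          _ = ∑ j, ∑ l, ∑ i, ∑ k,
              DCLBM.pr1 q1 i k * (DCLBM.pr2 q2 j l * ((A i j : ℝ) * Real.log (lam j * (∑ j', DCLBM.pr2 q2 j' l * lamhat j') / (lamhat j * (∑ j', DCLBM.pr2 q2 j' l * lam j'))))) :=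
              Finset.sum_congr rfl fun j _ => Finset.sum_comm
          _ = ∑ j, ∑ l, (DCLBM.pr2 q2 j l * lamhat j) * Real.log (lam j * (∑ j', DCLBM.pr2 q2 j' l * lamhat j') / (lamhat j * (∑ j', DCLBM.pr2 q2 j' l * lam j'))) := ?_
        refine Finset.sum_congr rfl fun j _ => Finset.sum_congr rfl fun l _ => ?_
        calc ∑ i, ∑ k, DCLBM.pr1 q1 i k * (DCLBM.pr2 q2 j l * ((A i j : ℝ) * Real.log (lam j * (∑ j', DCLBM.pr2 q2 j' l * lamhat j') / (lamhat j * (∑ j', DCLBM.pr2 q2 j' l * lam j')))))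
            = ∑ i, (DCLBM.pr2 q2 j l * ((A i j : ℝ) * Real.log (lam j * (∑ j', DCLBM.pr2 q2 j' l * lamhat j') / (lamhat j * (∑ j', DCLBM.pr2 q2 j' l * lam j'))))) * ∑ k, DCLBM.pr1 q1 i k := by
              refine Finset.sum_congr rfl fun i _ => ?_
              conv_rhs => rw [Finset.mul_sum]
              exact Finset.sum_congr rfl fun k _ => by ring
          _ = ∑ i, DCLBM.pr2 q2 j l * ((A i j : ℝ) * Real.log (lam j * (∑ j', DCLBM.pr2 q2 j' l * lamhat j') / (lamhat j * (∑ j', DCLBM.pr2 q2 j' l * lam j')))) :=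
              Finset.sum_congr rfl fun i _ => by rw [hp1s i, mul_one]
          _ = ∑ i, (DCLBM.pr2 q2 j l * Real.log (lam j * (∑ j', DCLBM.pr2 q2 j' l * lamhat j') / (lamhat j * (∑ j', DCLBM.pr2 q2 j' l * lam j')))) * (A i j : ℝ) :=
              Finset.sum_congr rfl fun i _ => by ring
          _ = (DCLBM.pr2 q2 j l * Real.log (lam j * (∑ j', DCLBM.pr2 q2 j' l * lamhat j') / (lamhat j * (∑ j', DCLBM.pr2 q2 j' l * lam j')))) * ∑ i, (A i j : ℝ) := by rw [← Finset.mul_sum]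
          _ = (DCLBM.pr2 q2 j l * lamhat j) * Real.log (lam j * (∑ j', DCLBM.pr2 q2 j' l * lamhat j') / (lamhat j * (∑ j', DCLBM.pr2 q2 j' l * lam j'))) := by rw [← hlamhat j]; ring
      rw [hred]
      calc ∑ j, ∑ l, (DCLBM.pr2 q2 j l * lamhat j) * Real.log (lam j * (∑ j', DCLBM.pr2 q2 j' l * lamhat j') / (lamhat j * (∑ j', DCLBM.pr2 q2 j' l * lam j')))
          ≤ ∑ j, ∑ l, (DCLBM.pr2 q2 j l * lamhat j) * (lam j * (∑ j', DCLBM.pr2 q2 j' l * lamhat j') / (lamhat j * (∑ j', DCLBM.pr2 q2 j' l * lam j')) - 1) := by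
            refine Finset.sum_le_sum fun j _ => Finset.sum_le_sum fun l _ => ?_
            exact mul_le_mul_of_nonneg_left (Real.log_le_sub_one_of_pos (div_pos
              (mul_pos (hlam j) (hEpos l)) (mul_pos (hlamhatpos j) (hSpos l))))
              (mul_nonneg (hpr2 j l).le (hlamhatpos j).le)
        _ = ∑ l, ∑ j, (DCLBM.pr2 q2 j l * lamhat j) * (lam j * (∑ j', DCLBM.pr2 q2 j' l * lamhat j') / (lamhat j * (∑ j', DCLBM.pr2 q2 j' l * lam j')) - 1) :=
            Finset.sum_comm
        _ = ∑ l, (((∑ j', DCLBM.pr2 q2 j' l * lam j')) * ((∑ j', DCLBM.pr2 q2 j' l * lamhat j') / (∑ j', DCLBM.pr2 q2 j' l * lam j')) - (∑ j', DCLBM.pr2 q2 j' l * lamhat j')) := by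
            refine Finset.sum_congr rfl fun l _ => ?_
            rw [Finset.sum_mul, ← Finset.sum_sub_distrib]
            refine Finset.sum_congr rfl fun j _ => ?_
            have h1 := (hlamhatpos j).ne'
            have h2 := (hSpos l).ne'
            field_simp
        _ = ∑ l, (0:ℝ) := by
            refine Finset.sum_congr rfl fun l _ => ?_
            have h2 := (hSpos l).ne'
            field_simp
            ring
        _ = 0 := Finset.sum_const_zero
    rw [hX1, hX2]
    linarith [hX3, hX4, hX5]
  linarith [hb1, hb2, hb3]
end

section
/- Suppose all row degrees d_i^r > 0, all column degrees d_j^c > 0, pr_{q1}(z_i=k) > 0 for all i,k, and pr_{q2}(w_j=l) > 0 for all j,l, and let Φ̂ = (π̂, ρ̂, θ̂, λ̂, μ̂) be defined by θ̂_i = d_i^r, λ̂_j = d_j^c, μ̂_{kl} = (Σ_{i,j} A_{ij}·pr_{q1}(z_i=k)·pr_{q2}(w_j=l)) / (Σ_{i,j} d_i^r d_j^c·pr_{q1}(z_i=k)·pr_{q2}(w_j=l)), π̂_k = (1/m) Σ_i pr_{q1}(z_i=k), ρ̂_l = (1/n) Σ_j pr_{q2}(w_j=l). Then every parameter tuple Φ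 = (π, ρ, θ, λ, μ) with J(q1, q2, Φ) = J(q1, q2, Φ̂) (i.e., every maximizer of Φ ↦ J(q1,q2,Φ)) is of the form π = π̂, ρ = ρ̂, θ = e^{c1}·θ̂, λ = e^{c2}·λ̂, μ = e^{−c1−c2}·μ̂ for some real constants c1, c2. -/
open scoped BigOperators

namespace DCLBMAux
open DCLBM

lemma pr2_eq_pr1 {n L : ℕ} (q2 : (Fin n → Fin L) → ℝ) (j : Fin n) (l : Fin L) :
    pr2 q2 j l = pr1 q2 j l := rfl

lemma sum_pr1 {m K : ℕ} (q1 : (Fin m → Fin K) → ℝ) (i : Fin m) :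
    ∑ k, pr1 q1 i k = ∑ z, q1 z := by
  unfold pr1
  rw [Finset.sum_comm]
  refine Finset.sum_congr rfl fun z _ => ?_
  simp

lemma marg1 {m K : ℕ} (q1 : (Fin m → Fin K) → ℝ) (i : Fin m) (g : Fin K → ℝ) :
    ∑ z, q1 z * g (z i) = ∑ k, pr1 q1 i k * g k := by
  unfold pr1
  simp only [Finset.sum_mul, ite_mul, zero_mul]
  rw [Finset.sum_comm]
  refine Finset.sum_congr rfl fun z _ => ?_
  simp

lemma marg2 {m n K L : ℕ} (q1 : (Fin m → Fin K) → ℝ) (q2 : (Fin n → Fin L) → ℝ)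
    (i : Fin m) (j : Fin n) (h : Fin K → Fin L → ℝ) :
    ∑ z : Fin m → Fin K, ∑ w : Fin n → Fin L, q1 z * q2 w * h (z i) (w j) =
      ∑ k, ∑ l, pr1 q1 i k * pr1 q2 j l * h k l := by
  have step1 : ∑ z : Fin m → Fin K, ∑ w : Fin n → Fin L, q1 z * q2 w * h (z i) (w j)
      = ∑ z : Fin m → Fin K, ∑ l, pr1 q2 j l * (q1 z * h (z i) l) := by
    refine Finset.sum_congr rfl fun z _ => ?_
    rw [← marg1 q2 j (fun l => q1 z * h (z i) l)]
    refine Finset.sum_congr rfl fun w _ => by ring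
  rw [step1, Finset.sum_comm]
  have step2 : ∀ l, ∑ z : Fin m → Fin K, pr1 q2 j l * (q1 z * h (z i) l)
      = ∑ k, pr1 q1 i k * (pr1 q2 j l * h k l) := by
    intro l
    rw [← marg1 q1 i (fun k => pr1 q2 j l * h k l)]
    refine Finset.sum_congr rfl fun z _ => by ring
  rw [Finset.sum_congr rfl fun l _ => step2 l, Finset.sum_comm]
  exact Finset.sum_congr rfl fun k _ => Finset.sum_congr rfl fun l _ => by ring

variable {m n K L : ℕ} {A : Fin m → Fin n → ℕ}
  {piv : Fin K → ℝ} {rhov : Fin L → ℝ} {θ : Fin m → ℝ} {lam : Fin n → ℝ}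
  {μm : Fin K → Fin L → ℝ}

lemma term_pos (hθ : ∀ i, 0 < θ i) (hlam : ∀ j, 0 < lam j) (hμ : ∀ k l, 0 < μm k l)
    (i : Fin m) (j : Fin n) (k : Fin K) (l : Fin L) :
    0 < Real.exp (-(θ i * lam j * μm k l)) * (θ i * lam j * μm k l) ^ (A i j)
        / (Nat.factorial (A i j) : ℝ) := by
  have h1 : 0 < θ i * lam j * μm k l :=
    mul_pos (mul_pos (hθ i) (hlam j)) (hμ k l)
  have h2 : (0:ℝ) < (Nat.factorial (A i j) : ℝ) := by positivity
  exact div_pos (mul_pos (Real.exp_pos _) (pow_pos h1 _)) h2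

lemma Pjoint_pos (hpiv : ∀ k, 0 < piv k) (hrhov : ∀ l, 0 < rhov l)
    (hθ : ∀ i, 0 < θ i) (hlam : ∀ j, 0 < lam j) (hμ : ∀ k l, 0 < μm k l)
    (z : Fin m → Fin K) (w : Fin n → Fin L) :
    0 < DCLBM.Pjoint A piv rhov θ lam μm z w := by
  unfold DCLBM.Pjoint
  refine mul_pos (mul_pos (Finset.prod_pos fun i _ => hpiv _)
    (Finset.prod_pos fun j _ => hrhov _)) ?_
  exact Finset.prod_pos fun i _ => Finset.prod_pos fun j _ =>
    term_pos hθ hlam hμ i j _ _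

lemma log_Pjoint (hpiv : ∀ k, 0 < piv k) (hrhov : ∀ l, 0 < rhov l)
    (hθ : ∀ i, 0 < θ i) (hlam : ∀ j, 0 < lam j) (hμ : ∀ k l, 0 < μm k l)
    (z : Fin m → Fin K) (w : Fin n → Fin L) :
    Real.log (DCLBM.Pjoint A piv rhov θ lam μm z w) =
      (∑ i, Real.log (piv (z i))) + (∑ j, Real.log (rhov (w j))) +
      ∑ i, ∑ j, ((A i j : ℝ) * Real.log (θ i * lam j * μm (z i) (w j))
        - θ i * lam j * μm (z i) (w j) - Real.log (Nat.factorial (A i j) : ℝ)) := by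
  unfold DCLBM.Pjoint
  have h1 : (∏ i, piv (z i)) ≠ 0 := ne_of_gt (Finset.prod_pos fun i _ => hpiv _)
  have h2 : (∏ j, rhov (w j)) ≠ 0 := ne_of_gt (Finset.prod_pos fun j _ => hrhov _)
  have h3 : (∏ i, ∏ j, Real.exp (-(θ i * lam j * μm (z i) (w j))) *
      (θ i * lam j * μm (z i) (w j)) ^ (A i j) / (Nat.factorial (A i j) : ℝ)) ≠ 0 :=
    ne_of_gt (Finset.prod_pos fun i _ => Finset.prod_pos fun j _ => term_pos hθ hlam hμ i j _ _)
  rw [Real.log_mul (mul_ne_zero h1 h2) h3, Real.log_mul h1 h2,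
    Real.log_prod (fun i _ => ne_of_gt (hpiv _)),
    Real.log_prod (fun j _ => ne_of_gt (hrhov _)),
    Real.log_prod (fun i _ => ne_of_gt (Finset.prod_pos fun j _ => term_pos hθ hlam hμ i j _ _))]
  congr 1
  refine Finset.sum_congr rfl fun i _ => ?_
  rw [Real.log_prod (fun j _ => ne_of_gt (term_pos hθ hlam hμ i j _ _))]
  refine Finset.sum_congr rfl fun j _ => ?_
  have hx : 0 < θ i * lam j * μm (z i) (w j) := by
    have := hθ i; have := hlam j; have := hμ (z i) (w j); positivity
  have hfac : (0:ℝ) < (Nat.factorial (A i j) : ℝ) := by positivity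
  rw [Real.log_div (by positivity) (ne_of_gt hfac),
    Real.log_mul (ne_of_gt (Real.exp_pos _)) (by positivity),
    Real.log_exp, Real.log_pow]
  ring


set_option maxHeartbeats 2000000 in
lemma Jobj_expand (q1 : (Fin m → Fin K) → ℝ) (q2 : (Fin n → Fin L) → ℝ)
    (hq1s : ∑ z : Fin m → Fin K, q1 z = 1) (hq2s : ∑ w : Fin n → Fin L, q2 w = 1)
    (hpiv : ∀ k, 0 < piv k) (hrhov : ∀ l, 0 < rhov l)
    (hθ : ∀ i, 0 < θ i) (hlam : ∀ j, 0 < lam j) (hμ : ∀ k l, 0 < μm k l) :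
    DCLBM.Jobj A q1 q2 piv rhov θ lam μm =
      (∑ z : Fin m → Fin K, ∑ w : Fin n → Fin L, -(q1 z * q2 w * Real.log (q1 z * q2 w)))
      - (∑ i, ∑ j, Real.log (Nat.factorial (A i j) : ℝ))
      + (∑ i, ∑ k, pr1 q1 i k * Real.log (piv k))
      + (∑ j, ∑ l, pr2 q2 j l * Real.log (rhov l))
      + ∑ i, ∑ j, ∑ k, ∑ l, pr1 q1 i k * pr2 q2 j l *
          ((A i j : ℝ) * Real.log (θ i * lam j * μm k l) - θ i * lam j * μm k l) := by
  unfold DCLBM.Jobj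
  have hterm : ∀ (z : Fin m → Fin K) (w : Fin n → Fin L),
      q1 z * q2 w * Real.log (DCLBM.Pjoint A piv rhov θ lam μm z w / (q1 z * q2 w)) =
      q1 z * q2 w * Real.log (DCLBM.Pjoint A piv rhov θ lam μm z w)
        + -(q1 z * q2 w * Real.log (q1 z * q2 w)) := by
    intro z w
    rcases eq_or_ne (q1 z * q2 w) 0 with h | h
    · simp [h]
    · rw [Real.log_div (ne_of_gt (Pjoint_pos hpiv hrhov hθ hlam hμ z w)) h]; ring
  simp only [hterm]
  rw [show (∑ z : Fin m → Fin K, ∑ w : Fin n → Fin L,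
      (q1 z * q2 w * Real.log (DCLBM.Pjoint A piv rhov θ lam μm z w)
        + -(q1 z * q2 w * Real.log (q1 z * q2 w)))) =
      (∑ z : Fin m → Fin K, ∑ w : Fin n → Fin L,
        q1 z * q2 w * Real.log (DCLBM.Pjoint A piv rhov θ lam μm z w))
      + (∑ z : Fin m → Fin K, ∑ w : Fin n → Fin L, -(q1 z * q2 w * Real.log (q1 z * q2 w)))
    from by rw [← Finset.sum_add_distrib]; exact Finset.sum_congr rfl fun z _ => Finset.sum_add_distrib]
  have hlog : ∀ (z : Fin m → Fin K) (w : Fin n → Fin L),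
      q1 z * q2 w * Real.log (DCLBM.Pjoint A piv rhov θ lam μm z w) =
        q1 z * q2 w * (∑ i, Real.log (piv (z i)))
        + q1 z * q2 w * (∑ j, Real.log (rhov (w j)))
        + q1 z * q2 w * (∑ i, ∑ j, ((A i j : ℝ) * Real.log (θ i * lam j * μm (z i) (w j))
            - θ i * lam j * μm (z i) (w j) - Real.log (Nat.factorial (A i j) : ℝ))) := by
    intro z w
    rw [log_Pjoint hpiv hrhov hθ hlam hμ z w]; ring
  simp only [hlog]
  have hsplit : (∑ z : Fin m → Fin K, ∑ w : Fin n → Fin L,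
      (q1 z * q2 w * (∑ i, Real.log (piv (z i)))
        + q1 z * q2 w * (∑ j, Real.log (rhov (w j)))
        + q1 z * q2 w * (∑ i, ∑ j, ((A i j : ℝ) * Real.log (θ i * lam j * μm (z i) (w j))
            - θ i * lam j * μm (z i) (w j) - Real.log (Nat.factorial (A i j) : ℝ))))) =
      (∑ z : Fin m → Fin K, ∑ w : Fin n → Fin L, q1 z * q2 w * (∑ i, Real.log (piv (z i))))
      + (∑ z : Fin m → Fin K, ∑ w : Fin n → Fin L, q1 z * q2 w * (∑ j, Real.log (rhov (w j))))
      + (∑ z : Fin m → Fin K, ∑ w : Fin n → Fin L, q1 z * q2 w *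
          (∑ i, ∑ j, ((A i j : ℝ) * Real.log (θ i * lam j * μm (z i) (w j))
            - θ i * lam j * μm (z i) (w j) - Real.log (Nat.factorial (A i j) : ℝ)))) := by
    rw [← Finset.sum_add_distrib, ← Finset.sum_add_distrib]
    refine Finset.sum_congr rfl fun z _ => ?_
    rw [← Finset.sum_add_distrib, ← Finset.sum_add_distrib]
  rw [hsplit]
  -- T1
  have hT1 : (∑ z : Fin m → Fin K, ∑ w : Fin n → Fin L,
      q1 z * q2 w * (∑ i, Real.log (piv (z i)))) =
      ∑ i, ∑ k, pr1 q1 i k * Real.log (piv k) := by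
    have h1 : ∀ z : Fin m → Fin K, (∑ w : Fin n → Fin L,
        q1 z * q2 w * (∑ i, Real.log (piv (z i)))) =
        q1 z * (∑ i, Real.log (piv (z i))) := by
      intro z
      rw [show (∑ w : Fin n → Fin L, q1 z * q2 w * (∑ i, Real.log (piv (z i)))) =
          (q1 z * (∑ i, Real.log (piv (z i)))) * ∑ w : Fin n → Fin L, q2 w from by
        rw [Finset.mul_sum]; exact Finset.sum_congr rfl fun w _ => by ring]
      rw [hq2s, mul_one]
    simp only [h1]
    rw [show (∑ z : Fin m → Fin K, q1 z * (∑ i, Real.log (piv (z i)))) =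
        ∑ z : Fin m → Fin K, ∑ i, q1 z * Real.log (piv (z i)) from
      Finset.sum_congr rfl fun z _ => Finset.mul_sum _ _ _, Finset.sum_comm]
    exact Finset.sum_congr rfl fun i _ => marg1 q1 i (fun k => Real.log (piv k))
  -- T2
  have hT2 : (∑ z : Fin m → Fin K, ∑ w : Fin n → Fin L,
      q1 z * q2 w * (∑ j, Real.log (rhov (w j)))) =
      ∑ j, ∑ l, pr2 q2 j l * Real.log (rhov l) := by
    rw [Finset.sum_comm]
    have h1 : ∀ w : Fin n → Fin L, (∑ z : Fin m → Fin K,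
        q1 z * q2 w * (∑ j, Real.log (rhov (w j)))) =
        q2 w * (∑ j, Real.log (rhov (w j))) := by
      intro w
      rw [show (∑ z : Fin m → Fin K, q1 z * q2 w * (∑ j, Real.log (rhov (w j)))) =
          (q2 w * (∑ j, Real.log (rhov (w j)))) * ∑ z : Fin m → Fin K, q1 z from by
        rw [Finset.mul_sum]; exact Finset.sum_congr rfl fun z _ => by ring]
      rw [hq1s, mul_one]
    simp only [h1]
    rw [show (∑ w : Fin n → Fin L, q2 w * (∑ j, Real.log (rhov (w j)))) =
        ∑ w : Fin n → Fin L, ∑ j, q2 w * Real.log (rhov (w j)) from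
      Finset.sum_congr rfl fun w _ => Finset.mul_sum _ _ _, Finset.sum_comm]
    simp only [pr2_eq_pr1]
    exact Finset.sum_congr rfl fun j _ => marg1 q2 j (fun l => Real.log (rhov l))
  -- T3
  have hT3 : (∑ z : Fin m → Fin K, ∑ w : Fin n → Fin L, q1 z * q2 w *
      (∑ i, ∑ j, ((A i j : ℝ) * Real.log (θ i * lam j * μm (z i) (w j))
        - θ i * lam j * μm (z i) (w j) - Real.log (Nat.factorial (A i j) : ℝ)))) =
      (∑ i, ∑ j, ∑ k, ∑ l, pr1 q1 i k * pr2 q2 j l *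
        ((A i j : ℝ) * Real.log (θ i * lam j * μm k l) - θ i * lam j * μm k l))
      - (∑ i, ∑ j, Real.log (Nat.factorial (A i j) : ℝ)) := by
    have hswap : (∑ z : Fin m → Fin K, ∑ w : Fin n → Fin L, q1 z * q2 w *
        (∑ i, ∑ j, ((A i j : ℝ) * Real.log (θ i * lam j * μm (z i) (w j))
          - θ i * lam j * μm (z i) (w j) - Real.log (Nat.factorial (A i j) : ℝ)))) =
        ∑ i, ∑ j, ∑ z : Fin m → Fin K, ∑ w : Fin n → Fin L, q1 z * q2 w *
          ((A i j : ℝ) * Real.log (θ i * lam j * μm (z i) (w j))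
          - θ i * lam j * μm (z i) (w j) - Real.log (Nat.factorial (A i j) : ℝ)) := by
      have e1 : ∀ z : Fin m → Fin K, (∑ w : Fin n → Fin L, q1 z * q2 w *
          (∑ i, ∑ j, ((A i j : ℝ) * Real.log (θ i * lam j * μm (z i) (w j))
            - θ i * lam j * μm (z i) (w j) - Real.log (Nat.factorial (A i j) : ℝ)))) =
          ∑ i, ∑ j, ∑ w : Fin n → Fin L, q1 z * q2 w *
            ((A i j : ℝ) * Real.log (θ i * lam j * μm (z i) (w j))
            - θ i * lam j * μm (z i) (w j) - Real.log (Nat.factorial (A i j) : ℝ)) := by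
        intro z
        rw [show (∑ w : Fin n → Fin L, q1 z * q2 w *
            (∑ i, ∑ j, ((A i j : ℝ) * Real.log (θ i * lam j * μm (z i) (w j))
              - θ i * lam j * μm (z i) (w j) - Real.log (Nat.factorial (A i j) : ℝ)))) =
            ∑ w : Fin n → Fin L, ∑ i, ∑ j, q1 z * q2 w *
              ((A i j : ℝ) * Real.log (θ i * lam j * μm (z i) (w j))
              - θ i * lam j * μm (z i) (w j) - Real.log (Nat.factorial (A i j) : ℝ)) from
          Finset.sum_congr rfl fun w _ => by
            rw [Finset.mul_sum]
            exact Finset.sum_congr rfl fun i _ => Finset.mul_sum _ _ _]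
        rw [Finset.sum_comm]
        exact Finset.sum_congr rfl fun i _ => Finset.sum_comm
      simp only [e1]
      rw [Finset.sum_comm]
      exact Finset.sum_congr rfl fun i _ => Finset.sum_comm
    rw [hswap]
    rw [← Finset.sum_sub_distrib]
    refine Finset.sum_congr rfl fun i _ => ?_
    rw [← Finset.sum_sub_distrib]
    refine Finset.sum_congr rfl fun j _ => ?_
    have e2 : (∑ z : Fin m → Fin K, ∑ w : Fin n → Fin L, q1 z * q2 w *
        ((A i j : ℝ) * Real.log (θ i * lam j * μm (z i) (w j))
        - θ i * lam j * μm (z i) (w j) - Real.log (Nat.factorial (A i j) : ℝ))) =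
        ∑ k, ∑ l, pr1 q1 i k * pr1 q2 j l *
          ((A i j : ℝ) * Real.log (θ i * lam j * μm k l)
          - θ i * lam j * μm k l - Real.log (Nat.factorial (A i j) : ℝ)) :=
      marg2 q1 q2 i j (fun k l => (A i j : ℝ) * Real.log (θ i * lam j * μm k l)
        - θ i * lam j * μm k l - Real.log (Nat.factorial (A i j) : ℝ))
    rw [e2]
    have e3 : (∑ k, ∑ l, pr1 q1 i k * pr1 q2 j l *
        ((A i j : ℝ) * Real.log (θ i * lam j * μm k l)
          - θ i * lam j * μm k l - Real.log (Nat.factorial (A i j) : ℝ))) =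
        (∑ k, ∑ l, pr1 q1 i k * pr2 q2 j l *
          ((A i j : ℝ) * Real.log (θ i * lam j * μm k l) - θ i * lam j * μm k l))
        - (∑ k, ∑ l, pr1 q1 i k * pr1 q2 j l) * Real.log (Nat.factorial (A i j) : ℝ) := by
      rw [Finset.sum_mul, ← Finset.sum_sub_distrib]
      refine Finset.sum_congr rfl fun k _ => ?_
      rw [Finset.sum_mul, ← Finset.sum_sub_distrib]
      refine Finset.sum_congr rfl fun l _ => ?_
      rw [pr2_eq_pr1]; ring
    rw [e3]
    have e4 : (∑ k, ∑ l, pr1 q1 i k * pr1 q2 j l) = 1 := by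
      have : ∀ k, (∑ l, pr1 q1 i k * pr1 q2 j l) = pr1 q1 i k * ∑ l, pr1 q2 j l :=
        fun k => (Finset.mul_sum _ _ _).symm
      simp only [this]
      rw [sum_pr1 q2 j, hq2s]
      simp only [mul_one]
      rw [sum_pr1 q1 i, hq1s]
    rw [e4, one_mul]
  rw [hT1, hT2, hT3]
  ring

lemma gibbs {K : ℕ} (a pv ph : Fin K → ℝ) (ha : ∀ k, 0 < a k)
    (hpv : ∀ k, 0 < pv k) (hph : ∀ k, 0 < ph k)
    (hsv : ∑ k, pv k = 1)
    (hrel : ∀ k, a k = (∑ k', a k') * ph k) :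
    (∑ k, a k * (Real.log (pv k) - Real.log (ph k)) ≤ 0) ∧
    ((∑ k, a k * (Real.log (pv k) - Real.log (ph k)) = 0) → pv = ph) := by
  set T : ℝ := ∑ k', a k' with hT
  have hle : ∀ k : Fin K, a k * (Real.log (pv k) - Real.log (ph k)) ≤ T * pv k - a k := by
    intro k
    have hx : 0 < pv k / ph k := div_pos (hpv k) (hph k)
    have hlog : Real.log (pv k / ph k) ≤ pv k / ph k - 1 := Real.log_le_sub_one_of_pos hx
    have hld : Real.log (pv k) - Real.log (ph k) = Real.log (pv k / ph k) :=
      (Real.log_div (ne_of_gt (hpv k)) (ne_of_gt (hph k))).symm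
    rw [hld]
    have h2 : a k * (pv k / ph k - 1) = T * pv k - a k := by
      have hne := ne_of_gt (hph k)
      rw [hrel k]
      field_simp
    nlinarith [mul_le_mul_of_nonneg_left hlog (le_of_lt (ha k))]
  have hsr : ∑ k, (T * pv k - a k) = 0 := by
    rw [Finset.sum_sub_distrib, ← Finset.mul_sum, hsv, mul_one, ← hT, sub_self]
  constructor
  · calc ∑ k, a k * (Real.log (pv k) - Real.log (ph k)) ≤ ∑ k, (T * pv k - a k) :=
          Finset.sum_le_sum fun k _ => hle k
      _ = 0 := hsr
  · intro heq
    have heq2 : ∑ k, a k * (Real.log (pv k) - Real.log (ph k)) = ∑ k, (T * pv k - a k) := by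
      rw [heq, hsr]
    have hterm : ∀ k ∈ Finset.univ, a k * (Real.log (pv k) - Real.log (ph k)) = T * pv k - a k :=
      (Finset.sum_eq_sum_iff_of_le fun k _ => hle k).mp heq2
    funext k
    have h3 := hterm k (Finset.mem_univ k)
    by_contra hne
    have hx : 0 < pv k / ph k := div_pos (hpv k) (hph k)
    have hx1 : pv k / ph k ≠ 1 := by
      intro h
      exact hne ((div_eq_one_iff_eq (ne_of_gt (hph k))).mp h)
    have hlt : Real.log (pv k / ph k) < pv k / ph k - 1 :=
      Real.log_lt_sub_one_of_pos hx hx1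
    have hld : Real.log (pv k) - Real.log (ph k) = Real.log (pv k / ph k) :=
      (Real.log_div (ne_of_gt (hpv k)) (ne_of_gt (hph k))).symm
    have h2 : a k * (pv k / ph k - 1) = T * pv k - a k := by
      have hne := ne_of_gt (hph k)
      rw [hrel k]; field_simp
    rw [hld] at h3
    nlinarith [mul_lt_mul_of_pos_left hlt (ha k)]

lemma nested4_zero {α β γ δ : Type*} [Fintype α] [Fintype β] [Fintype γ] [Fintype δ]
    {f : α → β → γ → δ → ℝ} (h0 : ∀ a b c d, 0 ≤ f a b c d)
    (h : ∑ a, ∑ b, ∑ c, ∑ d, f a b c d = 0) : ∀ a b c d, f a b c d = 0 := by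
  intro a b c d
  have n3 : ∀ a b c, 0 ≤ ∑ d, f a b c d := fun a b c => Finset.sum_nonneg fun d _ => h0 a b c d
  have n2 : ∀ a b, 0 ≤ ∑ c, ∑ d, f a b c d := fun a b => Finset.sum_nonneg fun c _ => n3 a b c
  have n1 : ∀ a, 0 ≤ ∑ b, ∑ c, ∑ d, f a b c d := fun a => Finset.sum_nonneg fun b _ => n2 a b
  have h1 := (Finset.sum_eq_zero_iff_of_nonneg (fun a _ => n1 a)).mp h a (Finset.mem_univ a)
  have h2 := (Finset.sum_eq_zero_iff_of_nonneg (fun b _ => n2 a b)).mp h1 b (Finset.mem_univ b)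
  have h3 := (Finset.sum_eq_zero_iff_of_nonneg (fun c _ => n3 a b c)).mp h2 c (Finset.mem_univ c)
  exact (Finset.sum_eq_zero_iff_of_nonneg (fun d _ => h0 a b c d)).mp h3 d (Finset.mem_univ d)

lemma sum_swap_24 {α β γ δ : Type*} [Fintype α] [Fintype β] [Fintype γ] [Fintype δ]
    (f : α → β → γ → δ → ℝ) :
    ∑ a, ∑ b, ∑ c, ∑ d, f a b c d = ∑ c, ∑ d, ∑ a, ∑ b, f a b c d := by
  have h1 : ∀ a : α, ∑ b, ∑ c, ∑ d, f a b c d = ∑ c, ∑ d, ∑ b, f a b c d := by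
    intro a
    rw [Finset.sum_comm]
    exact Finset.sum_congr rfl fun c _ => Finset.sum_comm
  simp only [h1]
  rw [Finset.sum_comm]
  exact Finset.sum_congr rfl fun c _ => Finset.sum_comm
lemma sum2_factor {K L : ℕ} (p : Fin K → ℝ) (q : Fin L → ℝ) (c : ℝ) :
    ∑ k, ∑ l, p k * q l * c = (∑ k, p k) * ((∑ l, q l) * c) := by
  rw [Finset.sum_mul]
  refine Finset.sum_congr rfl fun k _ => ?_
  rw [show (∑ l, q l) * c = ∑ l, q l * c from Finset.sum_mul _ _ _, Finset.mul_sum]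
  exact Finset.sum_congr rfl fun l _ => by ring

lemma sum_swap_13 {α β γ : Type*} [Fintype α] [Fintype β] [Fintype γ]
    (f : α → β → γ → ℝ) :
    ∑ a, ∑ b, ∑ c, f a b c = ∑ b, ∑ c, ∑ a, f a b c := by
  rw [Finset.sum_comm]
  exact Finset.sum_congr rfl fun b _ => Finset.sum_comm

end DCLBMAux

/-- Proposition 1, uniqueness part: under positivity of all row/column
degrees and of all marginals of `q1, q2`, every maximizer `Φ` of `Φ ↦ J(q1, q2, Φ)`
(equivalently, every parameter tuple with `J(q1,q2,Φ) = J(q1,q2,Φ̂)`) equals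
`(π̂, ρ̂, e^{c₁} θ̂, e^{c₂} λ̂, e^{-c₁-c₂} μ̂)` for some constants `c₁, c₂ ∈ ℝ`. -/
theorem statement1 (m n K L : ℕ) (hm : 0 < m) (hn : 0 < n) (hK : 0 < K) (hL : 0 < L)
    (A : Fin m → Fin n → ℕ)
    (q1 : (Fin m → Fin K) → ℝ) (q2 : (Fin n → Fin L) → ℝ)
    (hq1 : ∀ z, 0 ≤ q1 z) (hq1s : ∑ z : Fin m → Fin K, q1 z = 1)
    (hq2 : ∀ w, 0 ≤ q2 w) (hq2s : ∑ w : Fin n → Fin L, q2 w = 1)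
    (hdr : ∀ i, 0 < ∑ j, A i j) (hdc : ∀ j, 0 < ∑ i, A i j)
    (hpr1 : ∀ i k, 0 < DCLBM.pr1 q1 i k) (hpr2 : ∀ j l, 0 < DCLBM.pr2 q2 j l)
    (θhat : Fin m → ℝ) (hθhat : ∀ i, θhat i = ∑ j, (A i j : ℝ))
    (lamhat : Fin n → ℝ) (hlamhat : ∀ j, lamhat j = ∑ i, (A i j : ℝ))
    (muhat : Fin K → Fin L → ℝ)
    (hmuhat : ∀ k l, muhat k l =
      (∑ i, ∑ j, (A i j : ℝ) * DCLBM.pr1 q1 i k * DCLBM.pr2 q2 j l) /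
        (∑ i, ∑ j, (∑ j', (A i j' : ℝ)) * (∑ i', (A i' j : ℝ)) *
          DCLBM.pr1 q1 i k * DCLBM.pr2 q2 j l))
    (pihat : Fin K → ℝ) (hpihat : ∀ k, pihat k = (1 / (m : ℝ)) * ∑ i, DCLBM.pr1 q1 i k)
    (rhohat : Fin L → ℝ) (hrhohat : ∀ l, rhohat l = (1 / (n : ℝ)) * ∑ j, DCLBM.pr2 q2 j l) :
    ∀ (piv : Fin K → ℝ) (rhov : Fin L → ℝ) (θ : Fin m → ℝ) (lam : Fin n → ℝ)
      (μm : Fin K → Fin L → ℝ),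
      (∀ k, 0 < piv k) → (∑ k, piv k = 1) →
      (∀ l, 0 < rhov l) → (∑ l, rhov l = 1) →
      (∀ i, 0 < θ i) → (∀ j, 0 < lam j) → (∀ k l, 0 < μm k l) →
      DCLBM.Jobj A q1 q2 piv rhov θ lam μm =
        DCLBM.Jobj A q1 q2 pihat rhohat θhat lamhat muhat →
      ∃ c1 c2 : ℝ,
        piv = pihat ∧ rhov = rhohat ∧
        θ = (fun i => Real.exp c1 * θhat i) ∧
        lam = (fun j => Real.exp c2 * lamhat j) ∧
        μm = (fun k l => Real.exp (-c1 - c2) * muhat k l) := by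
  intro piv rhov θ lam μm hpiv hpivs hrhov hrhovs hθ hlam hμ hJ
  have hmne : Nonempty (Fin m) := Fin.pos_iff_nonempty.mp hm
  have hnne : Nonempty (Fin n) := Fin.pos_iff_nonempty.mp hn
  have hmR : (0:ℝ) < (m:ℝ) := Nat.cast_pos.mpr hm
  have hnR : (0:ℝ) < (n:ℝ) := Nat.cast_pos.mpr hn
  have hθhatpos : ∀ i, 0 < θhat i := by
    intro i; rw [hθhat i]; exact_mod_cast hdr i
  have hlamhatpos : ∀ j, 0 < lamhat j := by
    intro j; rw [hlamhat j]; exact_mod_cast hdc j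
  have hsp1 : ∀ i, ∑ k, DCLBM.pr1 q1 i k = 1 :=
    fun i => (DCLBMAux.sum_pr1 q1 i).trans hq1s
  have hsp2 : ∀ j, ∑ l, DCLBM.pr2 q2 j l = 1 :=
    fun j => (DCLBMAux.sum_pr1 q2 j).trans hq2s
  obtain ⟨R, hRdef⟩ : ∃ R : Fin K → ℝ, ∀ k, R k = ∑ i, θhat i * DCLBM.pr1 q1 i k :=
    ⟨_, fun k => rfl⟩
  obtain ⟨S, hSdef⟩ : ∃ S : Fin L → ℝ, ∀ l, S l = ∑ j, lamhat j * DCLBM.pr2 q2 j l :=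
    ⟨_, fun l => rfl⟩
  obtain ⟨B, hBdef⟩ : ∃ B : Fin K → Fin L → ℝ, ∀ k l,
      B k l = ∑ i, ∑ j, (A i j : ℝ) * DCLBM.pr1 q1 i k * DCLBM.pr2 q2 j l :=
    ⟨_, fun k l => rfl⟩
  have hRpos : ∀ k, 0 < R k := fun k => by
    rw [hRdef]
    exact Finset.sum_pos (fun i _ => mul_pos (hθhatpos i) (hpr1 i k)) Finset.univ_nonempty
  have hSpos : ∀ l, 0 < S l := fun l => by
    rw [hSdef]
    exact Finset.sum_pos (fun j _ => mul_pos (hlamhatpos j) (hpr2 j l)) Finset.univ_nonempty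
  have i0 : Fin m := ⟨0, hm⟩
  have j0 : Fin n := ⟨0, hn⟩
  have hBpos : ∀ k l, 0 < B k l := by
    intro k l
    obtain ⟨j1, hj1⟩ : ∃ j, 0 < A i0 j := by
      by_contra hcon
      push_neg at hcon
      have h0 : ∑ j, A i0 j = 0 := Finset.sum_eq_zero fun j _ => Nat.le_zero.mp (hcon j)
      have := hdr i0
      omega
    rw [hBdef]
    refine Finset.sum_pos' (fun i _ => Finset.sum_nonneg fun j _ =>
      mul_nonneg (mul_nonneg (Nat.cast_nonneg _) (le_of_lt (hpr1 i k))) (le_of_lt (hpr2 j l)))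
      ⟨i0, Finset.mem_univ i0, ?_⟩
    refine Finset.sum_pos' (fun j _ =>
      mul_nonneg (mul_nonneg (Nat.cast_nonneg _) (le_of_lt (hpr1 i0 k))) (le_of_lt (hpr2 j l)))
      ⟨j1, Finset.mem_univ j1, ?_⟩
    have : (0:ℝ) < (A i0 j1 : ℝ) := by exact_mod_cast hj1
    exact mul_pos (mul_pos this (hpr1 i0 k)) (hpr2 j1 l)
  have hmuhat' : ∀ k l, muhat k l = B k l / (R k * S l) := by
    intro k l
    rw [hmuhat k l, hBdef]
    congr 1
    calc ∑ i, ∑ j, (∑ j', (A i j' : ℝ)) * (∑ i', (A i' j : ℝ)) *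
          DCLBM.pr1 q1 i k * DCLBM.pr2 q2 j l
        = ∑ i, ∑ j, (θhat i * DCLBM.pr1 q1 i k) * ((lamhat j * DCLBM.pr2 q2 j l)) := by
          refine Finset.sum_congr rfl fun i _ => Finset.sum_congr rfl fun j _ => ?_
          rw [← hθhat i, ← hlamhat j]; ring
      _ = (∑ i, θhat i * DCLBM.pr1 q1 i k) * (∑ j, lamhat j * DCLBM.pr2 q2 j l) := by
          rw [Finset.sum_mul_sum]
      _ = R k * S l := by rw [hRdef, hSdef]
  have hmuhatpos : ∀ k l, 0 < muhat k l := fun k l => by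
    rw [hmuhat' k l]
    exact div_pos (hBpos k l) (mul_pos (hRpos k) (hSpos l))
  have hsumBl : ∀ k, ∑ l, B k l = R k := by
    intro k
    simp only [hBdef]
    calc ∑ l, ∑ i, ∑ j, (A i j : ℝ) * DCLBM.pr1 q1 i k * DCLBM.pr2 q2 j l
        = ∑ i, ∑ j, ∑ l, (A i j : ℝ) * DCLBM.pr1 q1 i k * DCLBM.pr2 q2 j l := by
          rw [Finset.sum_comm]
          exact Finset.sum_congr rfl fun i _ => Finset.sum_comm
      _ = ∑ i, ∑ j, (A i j : ℝ) * DCLBM.pr1 q1 i k := by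
          refine Finset.sum_congr rfl fun i _ => Finset.sum_congr rfl fun j _ => ?_
          rw [← Finset.mul_sum, hsp2 j, mul_one]
      _ = ∑ i, θhat i * DCLBM.pr1 q1 i k := by
          refine Finset.sum_congr rfl fun i _ => ?_
          rw [← Finset.sum_mul, ← hθhat i]
      _ = R k := (hRdef k).symm
  have hsumBk : ∀ l, ∑ k, B k l = S l := by
    intro l
    simp only [hBdef]
    calc ∑ k, ∑ i, ∑ j, (A i j : ℝ) * DCLBM.pr1 q1 i k * DCLBM.pr2 q2 j l
        = ∑ i, ∑ j, ∑ k, (A i j : ℝ) * DCLBM.pr1 q1 i k * DCLBM.pr2 q2 j l := by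
          rw [Finset.sum_comm]
          exact Finset.sum_congr rfl fun i _ => Finset.sum_comm
      _ = ∑ j, ∑ i, ∑ k, (A i j : ℝ) * DCLBM.pr1 q1 i k * DCLBM.pr2 q2 j l := by
          rw [Finset.sum_comm]
      _ = ∑ j, ∑ i, (A i j : ℝ) * DCLBM.pr2 q2 j l := by
          refine Finset.sum_congr rfl fun j _ => Finset.sum_congr rfl fun i _ => ?_
          calc ∑ k, (A i j : ℝ) * DCLBM.pr1 q1 i k * DCLBM.pr2 q2 j l
              = ∑ k, ((A i j : ℝ) * DCLBM.pr2 q2 j l) * DCLBM.pr1 q1 i k :=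
                Finset.sum_congr rfl fun k _ => by ring
            _ = (A i j : ℝ) * DCLBM.pr2 q2 j l := by
                rw [← Finset.mul_sum, hsp1 i, mul_one]
      _ = ∑ j, lamhat j * DCLBM.pr2 q2 j l := by
          refine Finset.sum_congr rfl fun j _ => ?_
          rw [← Finset.sum_mul, ← hlamhat j]
      _ = S l := (hSdef l).symm
  have hpihatpos : ∀ k, 0 < pihat k := fun k => by
    rw [hpihat k]
    exact mul_pos (by positivity) (Finset.sum_pos (fun i _ => hpr1 i k) Finset.univ_nonempty)
  have hrhohatpos : ∀ l, 0 < rhohat l := fun l => by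
    rw [hrhohat l]
    exact mul_pos (by positivity) (Finset.sum_pos (fun j _ => hpr2 j l) Finset.univ_nonempty)
  have hsum_a : ∑ k, ∑ i, DCLBM.pr1 q1 i k = (m:ℝ) := by
    rw [Finset.sum_comm, Finset.sum_congr rfl fun i (_ : i ∈ Finset.univ) => hsp1 i]
    simp
  have hsum_b : ∑ l, ∑ j, DCLBM.pr2 q2 j l = (n:ℝ) := by
    rw [Finset.sum_comm, Finset.sum_congr rfl fun j (_ : j ∈ Finset.univ) => hsp2 j]
    simp
  have hE1 := DCLBMAux.Jobj_expand (A := A) q1 q2 hq1s hq2s hpiv hrhov hθ hlam hμ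
  have hE2 := DCLBMAux.Jobj_expand (A := A) q1 q2 hq1s hq2s hpihatpos hrhohatpos
    hθhatpos hlamhatpos hmuhatpos
  rw [hE1, hE2] at hJ
  have hD1eq : ∑ k, (∑ i, DCLBM.pr1 q1 i k) * (Real.log (piv k) - Real.log (pihat k))
      = (∑ i, ∑ k, DCLBM.pr1 q1 i k * Real.log (piv k))
        - (∑ i, ∑ k, DCLBM.pr1 q1 i k * Real.log (pihat k)) := by
    calc ∑ k, (∑ i, DCLBM.pr1 q1 i k) * (Real.log (piv k) - Real.log (pihat k))
        = ∑ k, ∑ i, DCLBM.pr1 q1 i k * (Real.log (piv k) - Real.log (pihat k)) :=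
          Finset.sum_congr rfl fun k _ => Finset.sum_mul _ _ _
      _ = ∑ i, ∑ k, DCLBM.pr1 q1 i k * (Real.log (piv k) - Real.log (pihat k)) :=
          Finset.sum_comm
      _ = ∑ i, ∑ k, (DCLBM.pr1 q1 i k * Real.log (piv k)
            - DCLBM.pr1 q1 i k * Real.log (pihat k)) :=
          Finset.sum_congr rfl fun i _ => Finset.sum_congr rfl fun k _ => mul_sub _ _ _
      _ = _ := by
          rw [← Finset.sum_sub_distrib]
          exact Finset.sum_congr rfl fun i _ => Finset.sum_sub_distrib _ _
  have hD2eq : ∑ l, (∑ j, DCLBM.pr2 q2 j l) * (Real.log (rhov l) - Real.log (rhohat l))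
      = (∑ j, ∑ l, DCLBM.pr2 q2 j l * Real.log (rhov l))
        - (∑ j, ∑ l, DCLBM.pr2 q2 j l * Real.log (rhohat l)) := by
    calc ∑ l, (∑ j, DCLBM.pr2 q2 j l) * (Real.log (rhov l) - Real.log (rhohat l))
        = ∑ l, ∑ j, DCLBM.pr2 q2 j l * (Real.log (rhov l) - Real.log (rhohat l)) :=
          Finset.sum_congr rfl fun l _ => Finset.sum_mul _ _ _
      _ = ∑ j, ∑ l, DCLBM.pr2 q2 j l * (Real.log (rhov l) - Real.log (rhohat l)) :=
          Finset.sum_comm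
      _ = ∑ j, ∑ l, (DCLBM.pr2 q2 j l * Real.log (rhov l)
            - DCLBM.pr2 q2 j l * Real.log (rhohat l)) :=
          Finset.sum_congr rfl fun j _ => Finset.sum_congr rfl fun l _ => mul_sub _ _ _
      _ = _ := by
          rw [← Finset.sum_sub_distrib]
          exact Finset.sum_congr rfl fun j _ => Finset.sum_sub_distrib _ _
  have hD3eq : (∑ i, ∑ j, ∑ k, ∑ l, DCLBM.pr1 q1 i k * DCLBM.pr2 q2 j l *
        (((A i j : ℝ) * Real.log (θ i * lam j * μm k l) - θ i * lam j * μm k l)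
          - ((A i j : ℝ) * Real.log (θhat i * lamhat j * muhat k l)
            - θhat i * lamhat j * muhat k l)))
      = (∑ i, ∑ j, ∑ k, ∑ l, DCLBM.pr1 q1 i k * DCLBM.pr2 q2 j l *
          ((A i j : ℝ) * Real.log (θ i * lam j * μm k l) - θ i * lam j * μm k l))
        - (∑ i, ∑ j, ∑ k, ∑ l, DCLBM.pr1 q1 i k * DCLBM.pr2 q2 j l *
          ((A i j : ℝ) * Real.log (θhat i * lamhat j * muhat k l)
            - θhat i * lamhat j * muhat k l)) := by
    simp only [mul_sub, Finset.sum_sub_distrib]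
  have hsum0 : (∑ k, (∑ i, DCLBM.pr1 q1 i k) * (Real.log (piv k) - Real.log (pihat k)))
      + (∑ l, (∑ j, DCLBM.pr2 q2 j l) * (Real.log (rhov l) - Real.log (rhohat l)))
      + (∑ i, ∑ j, ∑ k, ∑ l, DCLBM.pr1 q1 i k * DCLBM.pr2 q2 j l *
          (((A i j : ℝ) * Real.log (θ i * lam j * μm k l) - θ i * lam j * μm k l)
            - ((A i j : ℝ) * Real.log (θhat i * lamhat j * muhat k l)
              - θhat i * lamhat j * muhat k l))) = 0 := by
    rw [hD1eq, hD2eq, hD3eq]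
    linarith [hJ]
  obtain ⟨hD1le, hD1imp⟩ := DCLBMAux.gibbs (fun k => ∑ i, DCLBM.pr1 q1 i k) piv pihat
    (fun k => Finset.sum_pos (fun i _ => hpr1 i k) Finset.univ_nonempty) hpiv hpihatpos hpivs
    (fun k => by rw [hsum_a, hpihat k]; field_simp)
  obtain ⟨hD2le, hD2imp⟩ := DCLBMAux.gibbs (fun l => ∑ j, DCLBM.pr2 q2 j l) rhov rhohat
    (fun l => Finset.sum_pos (fun j _ => hpr2 j l) Finset.univ_nonempty) hrhov hrhohatpos hrhovs
    (fun l => by rw [hsum_b, hrhohat l]; field_simp)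
  -- the coupled term analysis
  have hXpos : ∀ i j k l, 0 < θ i * lam j * μm k l :=
    fun i j k l => mul_pos (mul_pos (hθ i) (hlam j)) (hμ k l)
  have hXhpos : ∀ i j k l, 0 < θhat i * lamhat j * muhat k l :=
    fun i j k l => mul_pos (mul_pos (hθhatpos i) (hlamhatpos j)) (hmuhatpos k l)
  obtain ⟨U, hU⟩ : ∃ U : Fin m → Fin n → Fin K → Fin L → ℝ, ∀ i j k l, U i j k l =
      (Real.log (θ i) - Real.log (θhat i)) + (Real.log (lam j) - Real.log (lamhat j))
        + (Real.log (μm k l) - Real.log (muhat k l)) := ⟨_, fun _ _ _ _ => rfl⟩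
  have hUlog : ∀ i j k l, U i j k l =
      Real.log (θ i * lam j * μm k l) - Real.log (θhat i * lamhat j * muhat k l) := by
    intro i j k l
    rw [hU, Real.log_mul (ne_of_gt (mul_pos (hθ i) (hlam j))) (ne_of_gt (hμ k l)),
      Real.log_mul (ne_of_gt (hθ i)) (ne_of_gt (hlam j)),
      Real.log_mul (ne_of_gt (mul_pos (hθhatpos i) (hlamhatpos j))) (ne_of_gt (hmuhatpos k l)),
      Real.log_mul (ne_of_gt (hθhatpos i)) (ne_of_gt (hlamhatpos j))]
    ring
  have hXU : ∀ i j k l,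
      θhat i * lamhat j * muhat k l * Real.exp (U i j k l) = θ i * lam j * μm k l := by
    intro i j k l
    rw [hUlog i j k l, Real.exp_sub, Real.exp_log (hXpos i j k l),
      Real.exp_log (hXhpos i j k l)]
    have hne := ne_of_gt (hXhpos i j k l)
    field_simp
    rw [div_eq_iff hne]; ring
  have hterm3 : ∀ i j k l, DCLBM.pr1 q1 i k * DCLBM.pr2 q2 j l *
      (((A i j : ℝ) * Real.log (θ i * lam j * μm k l) - θ i * lam j * μm k l)
        - ((A i j : ℝ) * Real.log (θhat i * lamhat j * muhat k l)
          - θhat i * lamhat j * muhat k l))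
      = DCLBM.pr1 q1 i k * DCLBM.pr2 q2 j l *
          (((A i j : ℝ) - θhat i * lamhat j * muhat k l) * U i j k l)
        - DCLBM.pr1 q1 i k * DCLBM.pr2 q2 j l *
          (θhat i * lamhat j * muhat k l * (Real.exp (U i j k l) - 1 - U i j k l)) := by
    intro i j k l
    have h1 := hUlog i j k l
    have h2 := hXU i j k l
    linear_combination (-(DCLBM.pr1 q1 i k * DCLBM.pr2 q2 j l) * (A i j : ℝ)) * h1
      + (DCLBM.pr1 q1 i k * DCLBM.pr2 q2 j l) * h2
  -- identities
  have hIc : ∀ k l, ∑ i, ∑ j, DCLBM.pr1 q1 i k * DCLBM.pr2 q2 j l *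
      ((A i j : ℝ) - θhat i * lamhat j * muhat k l) = 0 := by
    intro k l
    have e1 : ∑ i, ∑ j, DCLBM.pr1 q1 i k * DCLBM.pr2 q2 j l *
        ((A i j : ℝ) - θhat i * lamhat j * muhat k l)
        = B k l - muhat k l * (R k * S l) := by
      simp only [mul_sub, Finset.sum_sub_distrib]
      congr 1
      · rw [hBdef]
        exact Finset.sum_congr rfl fun i _ => Finset.sum_congr rfl fun j _ => by ring
      · calc ∑ i, ∑ j, DCLBM.pr1 q1 i k * DCLBM.pr2 q2 j l *
              (θhat i * lamhat j * muhat k l)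
            = ∑ i, ∑ j, (θhat i * DCLBM.pr1 q1 i k) *
                (lamhat j * DCLBM.pr2 q2 j l * muhat k l) :=
              Finset.sum_congr rfl fun i _ => Finset.sum_congr rfl fun j _ => by ring
          _ = (∑ i, θhat i * DCLBM.pr1 q1 i k) *
                ∑ j, lamhat j * DCLBM.pr2 q2 j l * muhat k l := by
              rw [Finset.sum_mul_sum]
          _ = R k * (S l * muhat k l) := by
              rw [← hRdef]
              congr 1
              rw [hSdef, Finset.sum_mul]
          _ = muhat k l * (R k * S l) := by ring
    rw [e1, hmuhat' k l, div_mul_cancel₀ _ (ne_of_gt (mul_pos (hRpos k) (hSpos l))), sub_self]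
  have hIa : ∀ i, ∑ j, ∑ k, ∑ l, DCLBM.pr1 q1 i k * DCLBM.pr2 q2 j l *
      ((A i j : ℝ) - θhat i * lamhat j * muhat k l) = 0 := by
    intro i
    have hP1 : ∑ j, ∑ k, ∑ l, DCLBM.pr1 q1 i k * DCLBM.pr2 q2 j l * (A i j : ℝ)
        = θhat i := by
      calc ∑ j, ∑ k, ∑ l, DCLBM.pr1 q1 i k * DCLBM.pr2 q2 j l * (A i j : ℝ)
          = ∑ j, (∑ k, DCLBM.pr1 q1 i k) * ((∑ l, DCLBM.pr2 q2 j l) * (A i j : ℝ)) :=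
            Finset.sum_congr rfl fun j _ => DCLBMAux.sum2_factor _ _ _
        _ = ∑ j, (A i j : ℝ) := by
            refine Finset.sum_congr rfl fun j _ => ?_
            rw [hsp1 i, hsp2 j, one_mul, one_mul]
        _ = θhat i := (hθhat i).symm
    have hP2 : ∑ j, ∑ k, ∑ l, DCLBM.pr1 q1 i k * DCLBM.pr2 q2 j l *
        (θhat i * lamhat j * muhat k l) = θhat i := by
      calc ∑ j, ∑ k, ∑ l, DCLBM.pr1 q1 i k * DCLBM.pr2 q2 j l *
            (θhat i * lamhat j * muhat k l)
          = ∑ k, ∑ l, ∑ j, DCLBM.pr1 q1 i k * DCLBM.pr2 q2 j l *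
            (θhat i * lamhat j * muhat k l) := DCLBMAux.sum_swap_13 _
        _ = ∑ k, ∑ l, (DCLBM.pr1 q1 i k * θhat i * muhat k l) * S l := by
            refine Finset.sum_congr rfl fun k _ => Finset.sum_congr rfl fun l _ => ?_
            rw [hSdef, Finset.mul_sum]
            exact Finset.sum_congr rfl fun j _ => by ring
        _ = ∑ k, ∑ l, (DCLBM.pr1 q1 i k * θhat i) * (B k l / R k) := by
            refine Finset.sum_congr rfl fun k _ => Finset.sum_congr rfl fun l _ => ?_
            rw [hmuhat' k l]
            have h1 : R k ≠ 0 := ne_of_gt (hRpos k)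
            have h2 : S l ≠ 0 := ne_of_gt (hSpos l)
            field_simp
        _ = ∑ k, (DCLBM.pr1 q1 i k * θhat i) * ((∑ l, B k l) / R k) := by
            refine Finset.sum_congr rfl fun k _ => ?_
            rw [← Finset.mul_sum, ← Finset.sum_div]
        _ = ∑ k, DCLBM.pr1 q1 i k * θhat i := by
            refine Finset.sum_congr rfl fun k _ => ?_
            rw [hsumBl k, div_self (ne_of_gt (hRpos k)), mul_one]
        _ = θhat i := by rw [← Finset.sum_mul, hsp1 i, one_mul]
    calc ∑ j, ∑ k, ∑ l, DCLBM.pr1 q1 i k * DCLBM.pr2 q2 j l *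
          ((A i j : ℝ) - θhat i * lamhat j * muhat k l)
        = (∑ j, ∑ k, ∑ l, DCLBM.pr1 q1 i k * DCLBM.pr2 q2 j l * (A i j : ℝ))
          - ∑ j, ∑ k, ∑ l, DCLBM.pr1 q1 i k * DCLBM.pr2 q2 j l *
            (θhat i * lamhat j * muhat k l) := by
          simp only [mul_sub, Finset.sum_sub_distrib]
      _ = 0 := by rw [hP1, hP2, sub_self]
  have hIb : ∀ j, ∑ i, ∑ k, ∑ l, DCLBM.pr1 q1 i k * DCLBM.pr2 q2 j l *
      ((A i j : ℝ) - θhat i * lamhat j * muhat k l) = 0 := by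
    intro j
    have hP1 : ∑ i, ∑ k, ∑ l, DCLBM.pr1 q1 i k * DCLBM.pr2 q2 j l * (A i j : ℝ)
        = lamhat j := by
      calc ∑ i, ∑ k, ∑ l, DCLBM.pr1 q1 i k * DCLBM.pr2 q2 j l * (A i j : ℝ)
          = ∑ i, (∑ k, DCLBM.pr1 q1 i k) * ((∑ l, DCLBM.pr2 q2 j l) * (A i j : ℝ)) :=
            Finset.sum_congr rfl fun i _ => DCLBMAux.sum2_factor _ _ _
        _ = ∑ i, (A i j : ℝ) := by
            refine Finset.sum_congr rfl fun i _ => ?_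
            rw [hsp1 i, hsp2 j, one_mul, one_mul]
        _ = lamhat j := (hlamhat j).symm
    have hP2 : ∑ i, ∑ k, ∑ l, DCLBM.pr1 q1 i k * DCLBM.pr2 q2 j l *
        (θhat i * lamhat j * muhat k l) = lamhat j := by
      calc ∑ i, ∑ k, ∑ l, DCLBM.pr1 q1 i k * DCLBM.pr2 q2 j l *
            (θhat i * lamhat j * muhat k l)
          = ∑ k, ∑ l, ∑ i, DCLBM.pr1 q1 i k * DCLBM.pr2 q2 j l *
            (θhat i * lamhat j * muhat k l) := DCLBMAux.sum_swap_13 _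
        _ = ∑ k, ∑ l, (DCLBM.pr2 q2 j l * lamhat j * muhat k l) * R k := by
            refine Finset.sum_congr rfl fun k _ => Finset.sum_congr rfl fun l _ => ?_
            rw [hRdef, Finset.mul_sum]
            exact Finset.sum_congr rfl fun i _ => by ring
        _ = ∑ k, ∑ l, (DCLBM.pr2 q2 j l * lamhat j) * (B k l / S l) := by
            refine Finset.sum_congr rfl fun k _ => Finset.sum_congr rfl fun l _ => ?_
            rw [hmuhat' k l]
            have h1 : R k ≠ 0 := ne_of_gt (hRpos k)
            have h2 : S l ≠ 0 := ne_of_gt (hSpos l)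
            field_simp
        _ = ∑ l, ∑ k, (DCLBM.pr2 q2 j l * lamhat j) * (B k l / S l) := Finset.sum_comm
        _ = ∑ l, (DCLBM.pr2 q2 j l * lamhat j) * ((∑ k, B k l) / S l) := by
            refine Finset.sum_congr rfl fun l _ => ?_
            rw [← Finset.mul_sum, ← Finset.sum_div]
        _ = ∑ l, DCLBM.pr2 q2 j l * lamhat j := by
            refine Finset.sum_congr rfl fun l _ => ?_
            rw [hsumBk l, div_self (ne_of_gt (hSpos l)), mul_one]
        _ = lamhat j := by rw [← Finset.sum_mul, hsp2 j, one_mul]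
    calc ∑ i, ∑ k, ∑ l, DCLBM.pr1 q1 i k * DCLBM.pr2 q2 j l *
          ((A i j : ℝ) - θhat i * lamhat j * muhat k l)
        = (∑ i, ∑ k, ∑ l, DCLBM.pr1 q1 i k * DCLBM.pr2 q2 j l * (A i j : ℝ))
          - ∑ i, ∑ k, ∑ l, DCLBM.pr1 q1 i k * DCLBM.pr2 q2 j l *
            (θhat i * lamhat j * muhat k l) := by
          simp only [mul_sub, Finset.sum_sub_distrib]
      _ = 0 := by rw [hP1, hP2, sub_self]
  -- split D3 into linear part (zero) and nonnegative part
  have hD3split : (∑ i, ∑ j, ∑ k, ∑ l, DCLBM.pr1 q1 i k * DCLBM.pr2 q2 j l *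
        (((A i j : ℝ) * Real.log (θ i * lam j * μm k l) - θ i * lam j * μm k l)
          - ((A i j : ℝ) * Real.log (θhat i * lamhat j * muhat k l)
            - θhat i * lamhat j * muhat k l)))
      = (∑ i, ∑ j, ∑ k, ∑ l, DCLBM.pr1 q1 i k * DCLBM.pr2 q2 j l *
          (((A i j : ℝ) - θhat i * lamhat j * muhat k l) * U i j k l))
        - (∑ i, ∑ j, ∑ k, ∑ l, DCLBM.pr1 q1 i k * DCLBM.pr2 q2 j l *
          (θhat i * lamhat j * muhat k l * (Real.exp (U i j k l) - 1 - U i j k l))) := by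
    simp only [hterm3, Finset.sum_sub_distrib]
  have hLzero : (∑ i, ∑ j, ∑ k, ∑ l, DCLBM.pr1 q1 i k * DCLBM.pr2 q2 j l *
      (((A i j : ℝ) - θhat i * lamhat j * muhat k l) * U i j k l)) = 0 := by
    have hsplitU : ∀ i j k l, DCLBM.pr1 q1 i k * DCLBM.pr2 q2 j l *
        (((A i j : ℝ) - θhat i * lamhat j * muhat k l) * U i j k l)
        = DCLBM.pr1 q1 i k * DCLBM.pr2 q2 j l *
            ((A i j : ℝ) - θhat i * lamhat j * muhat k l)
            * (Real.log (θ i) - Real.log (θhat i))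
          + (DCLBM.pr1 q1 i k * DCLBM.pr2 q2 j l *
            ((A i j : ℝ) - θhat i * lamhat j * muhat k l)
            * (Real.log (lam j) - Real.log (lamhat j))
          + DCLBM.pr1 q1 i k * DCLBM.pr2 q2 j l *
            ((A i j : ℝ) - θhat i * lamhat j * muhat k l)
            * (Real.log (μm k l) - Real.log (muhat k l))) := by
      intro i j k l
      rw [hU]
      ring
    simp only [hsplitU, Finset.sum_add_distrib]
    have hZ1 : (∑ i, ∑ j, ∑ k, ∑ l, DCLBM.pr1 q1 i k * DCLBM.pr2 q2 j l *
        ((A i j : ℝ) - θhat i * lamhat j * muhat k l)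
        * (Real.log (θ i) - Real.log (θhat i))) = 0 := by
      refine Finset.sum_eq_zero fun i _ => ?_
      simp only [← Finset.sum_mul]
      rw [hIa i, zero_mul]
    have hZ2 : (∑ i, ∑ j, ∑ k, ∑ l, DCLBM.pr1 q1 i k * DCLBM.pr2 q2 j l *
        ((A i j : ℝ) - θhat i * lamhat j * muhat k l)
        * (Real.log (lam j) - Real.log (lamhat j))) = 0 := by
      rw [Finset.sum_comm]
      refine Finset.sum_eq_zero fun j _ => ?_
      simp only [← Finset.sum_mul]
      rw [hIb j, zero_mul]
    have hZ3 : (∑ i, ∑ j, ∑ k, ∑ l, DCLBM.pr1 q1 i k * DCLBM.pr2 q2 j l *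
        ((A i j : ℝ) - θhat i * lamhat j * muhat k l)
        * (Real.log (μm k l) - Real.log (muhat k l))) = 0 := by
      rw [DCLBMAux.sum_swap_24]
      refine Finset.sum_eq_zero fun k _ => Finset.sum_eq_zero fun l _ => ?_
      simp only [← Finset.sum_mul]
      rw [hIc k l, zero_mul]
    rw [hZ1, hZ2, hZ3]
    ring
  have hSnn : ∀ (i : Fin m) (j : Fin n) (k : Fin K) (l : Fin L),
      0 ≤ DCLBM.pr1 q1 i k * DCLBM.pr2 q2 j l *
        (θhat i * lamhat j * muhat k l * (Real.exp (U i j k l) - 1 - U i j k l)) := by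
    intro i j k l
    have h1 : U i j k l + 1 ≤ Real.exp (U i j k l) := Real.add_one_le_exp _
    refine mul_nonneg (mul_nonneg (le_of_lt (hpr1 i k)) (le_of_lt (hpr2 j l)))
      (mul_nonneg (le_of_lt (hXhpos i j k l)) (by linarith))
  have hSsum_nn : 0 ≤ ∑ i, ∑ j, ∑ k, ∑ l, DCLBM.pr1 q1 i k * DCLBM.pr2 q2 j l *
      (θhat i * lamhat j * muhat k l * (Real.exp (U i j k l) - 1 - U i j k l)) :=
    Finset.sum_nonneg fun i _ => Finset.sum_nonneg fun j _ =>
      Finset.sum_nonneg fun k _ => Finset.sum_nonneg fun l _ => hSnn i j k l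
  -- conclude each chunk vanishes
  have hD1zero : (∑ k, (∑ i, DCLBM.pr1 q1 i k) *
      (Real.log (piv k) - Real.log (pihat k))) = 0 := by
    rw [hD3split, hLzero] at hsum0
    linarith
  have hD2zero : (∑ l, (∑ j, DCLBM.pr2 q2 j l) *
      (Real.log (rhov l) - Real.log (rhohat l))) = 0 := by
    rw [hD3split, hLzero] at hsum0
    linarith
  have hSzero : (∑ i, ∑ j, ∑ k, ∑ l, DCLBM.pr1 q1 i k * DCLBM.pr2 q2 j l *
      (θhat i * lamhat j * muhat k l * (Real.exp (U i j k l) - 1 - U i j k l))) = 0 := by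
    rw [hD3split, hLzero] at hsum0
    linarith
  have hU0 : ∀ i j k l, U i j k l = 0 := by
    intro i j k l
    have hterm0 := DCLBMAux.nested4_zero hSnn hSzero i j k l
    have hpqpos : 0 < DCLBM.pr1 q1 i k * DCLBM.pr2 q2 j l :=
      mul_pos (hpr1 i k) (hpr2 j l)
    have h3 : θhat i * lamhat j * muhat k l *
        (Real.exp (U i j k l) - 1 - U i j k l) = 0 := by
      rcases mul_eq_zero.mp hterm0 with h | h
      · exact absurd h (ne_of_gt hpqpos)
      · exact h
    have h4 : Real.exp (U i j k l) - 1 - U i j k l = 0 := by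
      rcases mul_eq_zero.mp h3 with h | h
      · exact absurd h (ne_of_gt (hXhpos i j k l))
      · exact h
    by_contra hne
    have := Real.add_one_lt_exp hne
    linarith
  have hXeq : ∀ i j k l, θ i * lam j * μm k l = θhat i * lamhat j * muhat k l := by
    intro i j k l
    have h := hXU i j k l
    rw [hU0 i j k l, Real.exp_zero, mul_one] at h
    exact h.symm
  -- assemble the answer
  have k0 : Fin K := ⟨0, hK⟩
  have l0 : Fin L := ⟨0, hL⟩
  refine ⟨Real.log (θ i0 / θhat i0), Real.log (lam j0 / lamhat j0),
    hD1imp hD1zero, hD2imp hD2zero, ?_, ?_, ?_⟩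
  · have hec1 : Real.exp (Real.log (θ i0 / θhat i0)) = θ i0 / θhat i0 :=
      Real.exp_log (div_pos (hθ i0) (hθhatpos i0))
    funext i
    rw [hec1]
    have e1 := hXeq i j0 k0 l0
    have e2 := hXeq i0 j0 k0 l0
    have key : (θ i * θhat i0 - θ i0 * θhat i) * (lam j0 * μm k0 l0) = 0 := by
      linear_combination θhat i0 * e1 - θhat i * e2
    have hlmne : lam j0 * μm k0 l0 ≠ 0 := ne_of_gt (mul_pos (hlam j0) (hμ k0 l0))
    have key2 : θ i * θhat i0 - θ i0 * θhat i = 0 := by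
      rcases mul_eq_zero.mp key with h | h
      · exact h
      · exact absurd h hlmne
    have hθi0ne : θhat i0 ≠ 0 := ne_of_gt (hθhatpos i0)
    field_simp
    linarith [key2]
  · have hec2 : Real.exp (Real.log (lam j0 / lamhat j0)) = lam j0 / lamhat j0 :=
      Real.exp_log (div_pos (hlam j0) (hlamhatpos j0))
    funext j
    rw [hec2]
    have e1 := hXeq i0 j k0 l0
    have e2 := hXeq i0 j0 k0 l0
    have key : (lam j * lamhat j0 - lam j0 * lamhat j) * (θ i0 * μm k0 l0) = 0 := by
      linear_combination lamhat j0 * e1 - lamhat j * e2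
    have hlmne : θ i0 * μm k0 l0 ≠ 0 := ne_of_gt (mul_pos (hθ i0) (hμ k0 l0))
    have key2 : lam j * lamhat j0 - lam j0 * lamhat j = 0 := by
      rcases mul_eq_zero.mp key with h | h
      · exact h
      · exact absurd h hlmne
    have hlamj0ne : lamhat j0 ≠ 0 := ne_of_gt (hlamhatpos j0)
    field_simp
    linarith [key2]
  · have hec1 : Real.exp (Real.log (θ i0 / θhat i0)) = θ i0 / θhat i0 :=
      Real.exp_log (div_pos (hθ i0) (hθhatpos i0))
    have hec2 : Real.exp (Real.log (lam j0 / lamhat j0)) = lam j0 / lamhat j0 :=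
      Real.exp_log (div_pos (hlam j0) (hlamhatpos j0))
    funext k l
    rw [show -Real.log (θ i0 / θhat i0) - Real.log (lam j0 / lamhat j0)
        = -(Real.log (θ i0 / θhat i0) + Real.log (lam j0 / lamhat j0)) by ring,
      Real.exp_neg, Real.exp_add, hec1, hec2]
    have hprodpos : 0 < θ i0 / θhat i0 * (lam j0 / lamhat j0) :=
      mul_pos (div_pos (hθ i0) (hθhatpos i0)) (div_pos (hlam j0) (hlamhatpos j0))
    have goal' : (θ i0 / θhat i0 * (lam j0 / lamhat j0)) * μm k l = muhat k l := by
      have e1 := hXeq i0 j0 k l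
      have h1 : θ i0 ≠ 0 := ne_of_gt (hθ i0)
      have h2 : lam j0 ≠ 0 := ne_of_gt (hlam j0)
      have h3 : θhat i0 ≠ 0 := ne_of_gt (hθhatpos i0)
      have h4 : lamhat j0 ≠ 0 := ne_of_gt (hlamhatpos j0)
      field_simp
      linear_combination e1
    rw [← goal', inv_mul_cancel_left₀ (ne_of_gt hprodpos)]
end

section
/- Fix a parameter tuple Φ = (π, ρ, θ, λ, μ) and a probability mass function q2 on Ω_w. For i = 1,…,m and k = 1,…,K define g1_i(k) = −Σ_{j=1}^n θ_i λ_j (Σ_{l=1}^L pr_{q2}(w_j=l)·μ_{kl}) + Σ_{j=1}^n A_{ij} (Σ_{l=1}^L pr_{q2}(w_j=l)·log μ_{kl}) + log π_k, and define the probability mass function q1* on Ω_z by q1*(z) = ∏_{i=1}^m e^{g1_i(z_i)} / (Σ_{k=1}^K e^{g1_i(k)}). Then J(q1*, q2, Φ) ≥ J(q1, q2, Φ) for every probability mass function q1 on Ω_z, with equality if and only if q1 = q1*. -/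
open scoped BigOperators

section AuxGibbs

lemma gibbs_pt {p q : ℝ} (hp : 0 ≤ p) (hq : 0 < q) :
    p * Real.log (q / p) ≤ q - p := by
  rcases eq_or_lt_of_le hp with h | h
  · simp [← h]; linarith
  · have h1 : Real.log (q / p) ≤ q / p - 1 :=
      Real.log_le_sub_one_of_pos (by positivity)
    calc p * Real.log (q / p) ≤ p * (q / p - 1) := by nlinarith
      _ = q - p := by field_simp

lemma gibbs_pt_strict {p q : ℝ} (hp : 0 ≤ p) (hq : 0 < q) (hne : p ≠ q) :
    p * Real.log (q / p) < q - p := by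
  rcases eq_or_lt_of_le hp with h | h
  · simp [← h]; exact hq
  · have hx : q / p ≠ 1 := by
      intro hc
      exact hne (by field_simp at hc; linarith)
    have h1 : Real.log (q / p) < q / p - 1 :=
      Real.log_lt_sub_one_of_pos (by positivity) hx
    calc p * Real.log (q / p) < p * (q / p - 1) := by nlinarith
      _ = q - p := by field_simp

end AuxGibbs

/-- Proposition 2, row part: for a fixed parameter tuple `Φ` and a fixed
pmf `q2` on `Ω_w`, the product pmf `q1*` built from the functions `g1` maximizes
`q1 ↦ J(q1, q2, Φ)` over all pmfs on `Ω_z`, with equality iff `q1 = q1*`. -/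
theorem statement2 (m n K L : ℕ) (hm : 0 < m) (hn : 0 < n) (hK : 0 < K) (hL : 0 < L)
    (A : Fin m → Fin n → ℕ)
    (piv : Fin K → ℝ) (rhov : Fin L → ℝ) (θ : Fin m → ℝ) (lam : Fin n → ℝ)
    (μm : Fin K → Fin L → ℝ)
    (hpiv : ∀ k, 0 < piv k) (hpivs : ∑ k, piv k = 1)
    (hrhov : ∀ l, 0 < rhov l) (hrhovs : ∑ l, rhov l = 1)
    (hθ : ∀ i, 0 < θ i) (hlam : ∀ j, 0 < lam j) (hμm : ∀ k l, 0 < μm k l)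
    (q2 : (Fin n → Fin L) → ℝ)
    (hq2 : ∀ w, 0 ≤ q2 w) (hq2s : ∑ w : Fin n → Fin L, q2 w = 1)
    (g1 : Fin m → Fin K → ℝ)
    (hg1 : ∀ i k, g1 i k =
      -(∑ j, θ i * lam j * (∑ l, DCLBM.pr2 q2 j l * μm k l))
      + (∑ j, (A i j : ℝ) * (∑ l, DCLBM.pr2 q2 j l * Real.log (μm k l)))
      + Real.log (piv k))
    (q1star : (Fin m → Fin K) → ℝ)
    (hq1star : ∀ z, q1star z =
      ∏ i, Real.exp (g1 i (z i)) / (∑ k, Real.exp (g1 i k))) :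
    ∀ q1 : (Fin m → Fin K) → ℝ,
      (∀ z, 0 ≤ q1 z) → (∑ z : Fin m → Fin K, q1 z = 1) →
      DCLBM.Jobj A q1 q2 piv rhov θ lam μm ≤
        DCLBM.Jobj A q1star q2 piv rhov θ lam μm ∧
      (DCLBM.Jobj A q1 q2 piv rhov θ lam μm =
        DCLBM.Jobj A q1star q2 piv rhov θ lam μm ↔ q1 = q1star) := by
  classical
  -- abbreviations
  set P : (Fin m → Fin K) → (Fin n → Fin L) → ℝ :=
    DCLBM.Pjoint A piv rhov θ lam μm with hPdef
  -- positivity of P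
  have hP : ∀ z w, 0 < P z w := by
    intro z w
    rw [hPdef]
    unfold DCLBM.Pjoint
    have h1 : (0:ℝ) < ∏ i, piv (z i) := Finset.prod_pos fun i _ => hpiv _
    have h2 : (0:ℝ) < ∏ j, rhov (w j) := Finset.prod_pos fun j _ => hrhov _
    have h3 : (0:ℝ) < ∏ i, ∏ j, Real.exp (-(θ i * lam j * μm (z i) (w j))) *
        (θ i * lam j * μm (z i) (w j)) ^ (A i j) / (Nat.factorial (A i j) : ℝ) := by
      apply Finset.prod_pos; intro i _
      apply Finset.prod_pos; intro j _
      have hb : (0:ℝ) < θ i * lam j * μm (z i) (w j) :=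
        mul_pos (mul_pos (hθ i) (hlam j)) (hμm _ _)
      have hf : (0:ℝ) < (Nat.factorial (A i j) : ℝ) := by
        exact_mod_cast Nat.factorial_pos _
      exact div_pos (mul_pos (Real.exp_pos _) (pow_pos hb _)) hf
    exact mul_pos (mul_pos h1 h2) h3
  -- expansion of log P
  have hlogP : ∀ z w, Real.log (P z w) =
      (∑ i, Real.log (piv (z i))) + (∑ j, Real.log (rhov (w j))) +
      ∑ i, ∑ j, (-(θ i * lam j * μm (z i) (w j))
        + (A i j : ℝ) * (Real.log (θ i) + Real.log (lam j) + Real.log (μm (z i) (w j)))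
        - Real.log (Nat.factorial (A i j))) := by
    intro z w
    have hb : ∀ (i : Fin m) (j : Fin n), (0:ℝ) < θ i * lam j * μm (z i) (w j) :=
      fun i j => mul_pos (mul_pos (hθ i) (hlam j)) (hμm _ _)
    have hf : ∀ (i : Fin m) (j : Fin n), (0:ℝ) < (Nat.factorial (A i j) : ℝ) :=
      fun i j => by exact_mod_cast Nat.factorial_pos _
    have hterm : ∀ (i : Fin m) (j : Fin n),
        Real.log (Real.exp (-(θ i * lam j * μm (z i) (w j))) *
          (θ i * lam j * μm (z i) (w j)) ^ (A i j) / (Nat.factorial (A i j) : ℝ))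
        = -(θ i * lam j * μm (z i) (w j))
          + (A i j : ℝ) * (Real.log (θ i) + Real.log (lam j) + Real.log (μm (z i) (w j)))
          - Real.log (Nat.factorial (A i j)) := by
      intro i j
      rw [Real.log_div (mul_pos (Real.exp_pos _) (pow_pos (hb i j) _)).ne' (hf i j).ne',
        Real.log_mul (Real.exp_pos _).ne' (pow_pos (hb i j) _).ne', Real.log_exp,
        Real.log_pow, Real.log_mul (mul_pos (hθ i) (hlam j)).ne' (hμm _ _).ne',
        Real.log_mul (hθ i).ne' (hlam j).ne']
    have h1 : (0:ℝ) < ∏ i, piv (z i) := Finset.prod_pos fun i _ => hpiv _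
    have h2 : (0:ℝ) < ∏ j, rhov (w j) := Finset.prod_pos fun j _ => hrhov _
    have h3 : ∀ i : Fin m, (0:ℝ) < ∏ j, Real.exp (-(θ i * lam j * μm (z i) (w j))) *
        (θ i * lam j * μm (z i) (w j)) ^ (A i j) / (Nat.factorial (A i j) : ℝ) :=
      fun i => Finset.prod_pos fun j _ =>
        div_pos (mul_pos (Real.exp_pos _) (pow_pos (hb i j) _)) (hf i j)
    have hPrw : P z w = (∏ i, piv (z i)) * (∏ j, rhov (w j)) *
        ∏ i, ∏ j, Real.exp (-(θ i * lam j * μm (z i) (w j))) *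
          (θ i * lam j * μm (z i) (w j)) ^ (A i j) / (Nat.factorial (A i j) : ℝ) := rfl
    rw [hPrw, Real.log_mul (mul_pos h1 h2).ne' (Finset.prod_pos fun i _ => h3 i).ne',
      Real.log_mul h1.ne' h2.ne',
      Real.log_prod (fun i _ => (hpiv (z i)).ne'),
      Real.log_prod (fun j _ => (hrhov (w j)).ne'),
      Real.log_prod (fun i _ => (h3 i).ne')]
    congr 1
    refine Finset.sum_congr rfl fun i _ => ?_
    rw [Real.log_prod (fun j _ => (div_pos (mul_pos (Real.exp_pos _)
      (pow_pos (hb i j) _)) (hf i j)).ne')]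
    exact Finset.sum_congr rfl fun j _ => hterm i j
  -- marginal identity
  have marg : ∀ (j : Fin n) (f : Fin L → ℝ),
      ∑ l, DCLBM.pr2 q2 j l * f l = ∑ w : Fin n → Fin L, q2 w * f (w j) := by
    intro j f
    simp only [DCLBM.pr2, Finset.sum_mul, ite_mul, zero_mul]
    rw [Finset.sum_comm]
    simp [Finset.sum_ite_eq]
  -- the constant
  set Cc : ℝ :=
    (∑ w : Fin n → Fin L, q2 w * (∑ j, Real.log (rhov (w j))))
    + (∑ i, ∑ j, ((A i j : ℝ) * (Real.log (θ i) + Real.log (lam j))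
        - Real.log (Nat.factorial (A i j))))
    - (∑ w : Fin n → Fin L, q2 w * Real.log (q2 w)) with hCc
  -- the expected log-likelihood decomposition
  have hexp : ∀ z : Fin m → Fin K,
      ∑ w : Fin n → Fin L, q2 w * Real.log (P z w / q2 w)
        = (∑ i, g1 i (z i)) + Cc := by
    intro z
    have hA : ∀ w : Fin n → Fin L, q2 w * Real.log (P z w / q2 w)
        = q2 w * Real.log (P z w) - q2 w * Real.log (q2 w) := by
      intro w
      rcases eq_or_lt_of_le (hq2 w) with h | h
      · simp [← h]
      · rw [Real.log_div (hP z w).ne' h.ne']; ring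
    have hC : ∀ (i : Fin m) (j : Fin n), (∑ w : Fin n → Fin L, q2 w *
          (-(θ i * lam j * μm (z i) (w j))
           + (A i j : ℝ) * (Real.log (θ i) + Real.log (lam j) + Real.log (μm (z i) (w j)))
           - Real.log (Nat.factorial (A i j))))
        = -(θ i * lam j * (∑ l, DCLBM.pr2 q2 j l * μm (z i) l))
          + (A i j : ℝ) * (∑ l, DCLBM.pr2 q2 j l * Real.log (μm (z i) l))
          + ((A i j : ℝ) * (Real.log (θ i) + Real.log (lam j))
             - Real.log (Nat.factorial (A i j))) := by
      intro i j
      have e1 := marg j (fun l => μm (z i) l)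
      have e2 := marg j (fun l => Real.log (μm (z i) l))
      calc (∑ w : Fin n → Fin L, q2 w *
          (-(θ i * lam j * μm (z i) (w j))
           + (A i j : ℝ) * (Real.log (θ i) + Real.log (lam j) + Real.log (μm (z i) (w j)))
           - Real.log (Nat.factorial (A i j))))
          = ∑ w : Fin n → Fin L, (-(θ i * lam j) * (q2 w * μm (z i) (w j))
              + (A i j : ℝ) * (q2 w * Real.log (μm (z i) (w j)))
              + ((A i j : ℝ) * (Real.log (θ i) + Real.log (lam j))
                 - Real.log (Nat.factorial (A i j))) * q2 w) :=
            Finset.sum_congr rfl fun w _ => by ring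
        _ = -(θ i * lam j) * (∑ w : Fin n → Fin L, q2 w * μm (z i) (w j))
            + (A i j : ℝ) * (∑ w : Fin n → Fin L, q2 w * Real.log (μm (z i) (w j)))
            + ((A i j : ℝ) * (Real.log (θ i) + Real.log (lam j))
               - Real.log (Nat.factorial (A i j))) * (∑ w : Fin n → Fin L, q2 w) := by
            rw [Finset.sum_add_distrib, Finset.sum_add_distrib,
              ← Finset.mul_sum, ← Finset.mul_sum, ← Finset.mul_sum]
        _ = -(θ i * lam j * (∑ l, DCLBM.pr2 q2 j l * μm (z i) l))
            + (A i j : ℝ) * (∑ l, DCLBM.pr2 q2 j l * Real.log (μm (z i) l))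
            + ((A i j : ℝ) * (Real.log (θ i) + Real.log (lam j))
               - Real.log (Nat.factorial (A i j))) := by
            rw [← e1, ← e2, hq2s]; ring
    have hB : ∑ w : Fin n → Fin L, q2 w * Real.log (P z w)
        = (∑ i, Real.log (piv (z i)))
          + (∑ w : Fin n → Fin L, q2 w * (∑ j, Real.log (rhov (w j))))
          + ∑ i, ∑ j, (∑ w : Fin n → Fin L, q2 w *
              (-(θ i * lam j * μm (z i) (w j))
               + (A i j : ℝ) * (Real.log (θ i) + Real.log (lam j) + Real.log (μm (z i) (w j)))
               - Real.log (Nat.factorial (A i j)))) := by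
      calc ∑ w : Fin n → Fin L, q2 w * Real.log (P z w)
          = ∑ w : Fin n → Fin L, (q2 w * (∑ i, Real.log (piv (z i)))
              + q2 w * (∑ j, Real.log (rhov (w j)))
              + ∑ i, ∑ j, q2 w *
                (-(θ i * lam j * μm (z i) (w j))
                 + (A i j : ℝ) * (Real.log (θ i) + Real.log (lam j) + Real.log (μm (z i) (w j)))
                 - Real.log (Nat.factorial (A i j)))) := by
            refine Finset.sum_congr rfl fun w _ => ?_
            rw [hlogP z w, mul_add, mul_add]
            simp only [Finset.mul_sum]
        _ = (∑ w : Fin n → Fin L, q2 w * (∑ i, Real.log (piv (z i))))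
            + (∑ w : Fin n → Fin L, q2 w * (∑ j, Real.log (rhov (w j))))
            + ∑ w : Fin n → Fin L, ∑ i, ∑ j, q2 w *
                (-(θ i * lam j * μm (z i) (w j))
                 + (A i j : ℝ) * (Real.log (θ i) + Real.log (lam j) + Real.log (μm (z i) (w j)))
                 - Real.log (Nat.factorial (A i j))) := by
            rw [Finset.sum_add_distrib, Finset.sum_add_distrib]
        _ = (∑ i, Real.log (piv (z i)))
            + (∑ w : Fin n → Fin L, q2 w * (∑ j, Real.log (rhov (w j))))
            + ∑ i, ∑ j, (∑ w : Fin n → Fin L, q2 w *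
                (-(θ i * lam j * μm (z i) (w j))
                 + (A i j : ℝ) * (Real.log (θ i) + Real.log (lam j) + Real.log (μm (z i) (w j)))
                 - Real.log (Nat.factorial (A i j)))) := by
            congr 1
            · congr 1
              rw [← Finset.sum_mul, hq2s, one_mul]
            · rw [Finset.sum_comm]
              exact Finset.sum_congr rfl fun i _ => Finset.sum_comm
    rw [Finset.sum_congr rfl (fun w _ => hA w), Finset.sum_sub_distrib, hB,
      Finset.sum_congr rfl (fun i (_ : i ∈ Finset.univ) =>
        Finset.sum_congr rfl (fun j _ => hC i j))]
    have hg : ∑ i, g1 i (z i)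
        = ∑ i, (-(∑ j, θ i * lam j * (∑ l, DCLBM.pr2 q2 j l * μm (z i) l))
            + (∑ j, (A i j : ℝ) * (∑ l, DCLBM.pr2 q2 j l * Real.log (μm (z i) l)))
            + Real.log (piv (z i))) :=
      Finset.sum_congr rfl fun i _ => hg1 i (z i)
    rw [hg, hCc]
    simp only [Finset.sum_add_distrib, Finset.sum_sub_distrib, Finset.sum_neg_distrib]
    ring
  -- q1star facts
  set S : Fin m → ℝ := fun i => ∑ k, Real.exp (g1 i k) with hSdef
  have hS : ∀ i, 0 < S i := fun i =>
    Finset.sum_pos (fun k _ => Real.exp_pos _) ⟨⟨0, hK⟩, Finset.mem_univ _⟩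
  set Z : ℝ := ∏ i, S i with hZdef
  have hZ : 0 < Z := Finset.prod_pos fun i _ => hS i
  have hq1star_pos : ∀ z, 0 < q1star z := by
    intro z; rw [hq1star]
    exact Finset.prod_pos fun i _ => div_pos (Real.exp_pos _) (hS i)
  have hq1star_eq : ∀ z, q1star z = Real.exp (∑ i, g1 i (z i)) / Z := by
    intro z
    rw [hq1star, hZdef, Finset.prod_div_distrib, ← Real.exp_sum]
  have hq1stars : ∑ z : Fin m → Fin K, q1star z = 1 := by
    have h1 : ∑ z : Fin m → Fin K, q1star z
        = ∏ i, ∑ k, Real.exp (g1 i k) / S i := by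
      rw [Fintype.prod_sum]
      exact Finset.sum_congr rfl fun z _ => hq1star z
    rw [h1]
    have : ∀ i : Fin m, ∑ k, Real.exp (g1 i k) / S i = 1 := by
      intro i
      rw [← Finset.sum_div, div_self (hS i).ne']
    simp [this]
  have hlogq1star : ∀ z, Real.log (q1star z) = (∑ i, g1 i (z i)) - Real.log Z := by
    intro z
    rw [hq1star_eq, Real.log_div (Real.exp_ne_zero _) hZ.ne', Real.log_exp]
  -- the decomposition of J
  have decomp : ∀ q1 : (Fin m → Fin K) → ℝ, (∀ z, 0 ≤ q1 z) →
      (∑ z : Fin m → Fin K, q1 z = 1) →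
      DCLBM.Jobj A q1 q2 piv rhov θ lam μm
        = (Cc + Real.log Z) + ∑ z : Fin m → Fin K, q1 z * Real.log (q1star z / q1 z) := by
    intro q1 hq1 hq1s
    have hJ0 : DCLBM.Jobj A q1 q2 piv rhov θ lam μm
        = ∑ z : Fin m → Fin K, ∑ w : Fin n → Fin L,
            q1 z * q2 w * Real.log (P z w / (q1 z * q2 w)) := rfl
    have hpt : ∀ (z : Fin m → Fin K) (w : Fin n → Fin L),
        q1 z * q2 w * Real.log (P z w / (q1 z * q2 w))
        = q1 z * (q2 w * Real.log (P z w / q2 w)) - q1 z * Real.log (q1 z) * q2 w := by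
      intro z w
      rcases eq_or_lt_of_le (hq1 z) with h1 | h1
      · simp [← h1]
      rcases eq_or_lt_of_le (hq2 w) with h2 | h2
      · simp [← h2]
      rw [Real.log_div (hP z w).ne' (mul_pos h1 h2).ne',
        Real.log_div (hP z w).ne' h2.ne', Real.log_mul h1.ne' h2.ne']
      ring
    calc DCLBM.Jobj A q1 q2 piv rhov θ lam μm
        = ∑ z : Fin m → Fin K, (q1 z * ((∑ i, g1 i (z i)) + Cc)
            - q1 z * Real.log (q1 z)) := by
          rw [hJ0]
          refine Finset.sum_congr rfl fun z _ => ?_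
          rw [Finset.sum_congr rfl (fun w _ => hpt z w), Finset.sum_sub_distrib,
            ← Finset.mul_sum, hexp z, ← Finset.mul_sum, hq2s, mul_one]
      _ = ∑ z : Fin m → Fin K, (q1 z * Real.log (q1star z / q1 z)
            + q1 z * (Cc + Real.log Z)) := by
          refine Finset.sum_congr rfl fun z _ => ?_
          rcases eq_or_lt_of_le (hq1 z) with h1 | h1
          · simp [← h1]
          · rw [Real.log_div (hq1star_pos z).ne' h1.ne', hlogq1star z]
            ring
      _ = (Cc + Real.log Z) + ∑ z : Fin m → Fin K, q1 z * Real.log (q1star z / q1 z) := by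
          rw [Finset.sum_add_distrib, ← Finset.sum_mul, hq1s, one_mul, add_comm]
  -- main conclusion
  intro q1 hq1 hq1s
  have hJstar : DCLBM.Jobj A q1star q2 piv rhov θ lam μm = Cc + Real.log Z := by
    rw [decomp q1star (fun z => (hq1star_pos z).le) hq1stars]
    have : ∀ z : Fin m → Fin K, q1star z * Real.log (q1star z / q1star z) = 0 := by
      intro z
      rw [div_self (hq1star_pos z).ne']
      simp
    simp [this]
  have hJ : DCLBM.Jobj A q1 q2 piv rhov θ lam μm
      = (Cc + Real.log Z) + ∑ z : Fin m → Fin K, q1 z * Real.log (q1star z / q1 z) :=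
    decomp q1 hq1 hq1s
  have hsum_le : ∑ z : Fin m → Fin K, q1 z * Real.log (q1star z / q1 z) ≤ 0 := by
    have h1 : ∑ z : Fin m → Fin K, q1 z * Real.log (q1star z / q1 z)
        ≤ ∑ z : Fin m → Fin K, (q1star z - q1 z) :=
      Finset.sum_le_sum fun z _ => gibbs_pt (hq1 z) (hq1star_pos z)
    rw [Finset.sum_sub_distrib, hq1stars, hq1s] at h1
    simpa using h1
  constructor
  · rw [hJ, hJstar]; linarith
  · constructor
    · intro heq
      by_contra hne
      have hzex : ∃ z : Fin m → Fin K, q1 z ≠ q1star z := by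
        by_contra hc
        push_neg at hc
        exact hne (funext hc)
      obtain ⟨z0, hz0⟩ := hzex
      have hstrict : ∑ z : Fin m → Fin K, q1 z * Real.log (q1star z / q1 z)
          < ∑ z : Fin m → Fin K, (q1star z - q1 z) := by
        apply Finset.sum_lt_sum
        · exact fun z _ => gibbs_pt (hq1 z) (hq1star_pos z)
        · exact ⟨z0, Finset.mem_univ _, gibbs_pt_strict (hq1 z0) (hq1star_pos z0) hz0⟩
      rw [Finset.sum_sub_distrib, hq1stars, hq1s] at hstrict
      rw [hJ, hJstar] at heq
      simp at hstrict
      linarith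
    · intro heq
      rw [heq, hJstar]
end

section
/- Fix a parameter tuple Φ = (π, ρ, θ, λ, μ) and a probability mass function q1 on Ω_z. For j = 1,…,n and l = 1,…,L define g2_j(l) = −Σ_{i=1}^m θ_i λ_j (Σ_{k=1}^K pr_{q1}(z_i=k)·μ_{kl}) + Σ_{i=1}^m A_{ij} (Σ_{k=1}^K pr_{q1}(z_i=k)·log μ_{kl}) + log ρ_l, and define the probability mass function q2* on Ω_w by q2*(w) = ∏_{j=1}^n e^{g2_j(w_j)} / (Σ_{l=1}^L e^{g2_j(l)}). Then J(q1, q2*, Φ) ≥ J(q1, q2, Φ) for every probability mass function q2 on Ω_w, with equality if and only if q2 = q2*. -/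
open scoped BigOperators

section Aux

open Finset

/-- Gibbs' inequality with equality condition. -/
lemma gibbs_aux {ι : Type*} [Fintype ι] (p q : ι → ℝ) (hp : ∀ i, 0 < p i)
    (hq : ∀ i, 0 ≤ q i) (hqs : ∑ i, q i = ∑ i, p i) :
    (∑ i, q i * (Real.log (p i) - Real.log (q i)) ≤ 0) ∧
    ((∑ i, q i * (Real.log (p i) - Real.log (q i))) = 0 ↔ q = p) := by
  have key : ∀ i, q i * (Real.log (p i) - Real.log (q i)) ≤ p i - q i := by
    intro i
    rcases eq_or_lt_of_le (hq i) with h0 | h0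
    · simp [← h0, (hp i).le]
    · have hx : 0 < p i / q i := div_pos (hp i) h0
      have hle := Real.log_le_sub_one_of_pos hx
      rw [← Real.log_div (hp i).ne' h0.ne']
      calc q i * Real.log (p i / q i) ≤ q i * (p i / q i - 1) :=
            mul_le_mul_of_nonneg_left hle h0.le
        _ = p i - q i := by field_simp
  have hsum : ∑ i, (p i - q i) = 0 := by
    rw [Finset.sum_sub_distrib, hqs, sub_self]
  have hle : ∑ i, q i * (Real.log (p i) - Real.log (q i)) ≤ 0 := by
    calc ∑ i, q i * (Real.log (p i) - Real.log (q i)) ≤ ∑ i, (p i - q i) :=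
          Finset.sum_le_sum fun i _ => key i
      _ = 0 := hsum
  refine ⟨hle, ?_, ?_⟩
  · intro heq
    have hall : ∀ i ∈ Finset.univ, q i * (Real.log (p i) - Real.log (q i)) = p i - q i := by
      rw [← Finset.sum_eq_sum_iff_of_le fun i _ => key i, heq, hsum]
    funext i
    have hi := hall i (Finset.mem_univ i)
    by_contra hne
    rcases eq_or_lt_of_le (hq i) with h0 | h0
    · rw [← h0] at hi
      simp at hi
      exact absurd hi.symm (hp i).ne'
    · have hx : 0 < p i / q i := div_pos (hp i) h0
      have hx1 : p i / q i ≠ 1 := fun h => hne ((div_eq_one_iff_eq h0.ne').mp h).symm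
      have hlt := Real.log_lt_sub_one_of_pos hx hx1
      rw [← Real.log_div (hp i).ne' h0.ne'] at hi
      have heqmul : q i * (p i / q i - 1) = p i - q i := by field_simp
      have : q i * Real.log (p i / q i) < p i - q i := by
        rw [← heqmul]; exact mul_lt_mul_of_pos_left hlt h0
      rw [hi] at this
      exact lt_irrefl _ this
  · rintro rfl
    simp

/-- Marginalization: expectation of a function of `z i` via the marginal. -/
lemma marg_aux {m K : ℕ} (q1 : (Fin m → Fin K) → ℝ) (i : Fin m) (h : Fin K → ℝ) :
    ∑ z : Fin m → Fin K, q1 z * h (z i) = ∑ k, DCLBM.pr1 q1 i k * h k := by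
  unfold DCLBM.pr1
  rw [eq_comm]
  calc ∑ k, (∑ z : Fin m → Fin K, if z i = k then q1 z else 0) * h k
      = ∑ k, ∑ z : Fin m → Fin K, (if z i = k then q1 z * h k else 0) := by
        simp [Finset.sum_mul, ite_mul]
    _ = ∑ z : Fin m → Fin K, ∑ k, (if z i = k then q1 z * h k else 0) := Finset.sum_comm
    _ = ∑ z : Fin m → Fin K, q1 z * h (z i) := by simp

end Aux

section Aux2
section X

lemma pr1_sum {m K : ℕ} (q1 : (Fin m → Fin K) → ℝ)
    (hq1s : ∑ z : Fin m → Fin K, q1 z = 1) (i : Fin m) :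
    ∑ k, DCLBM.pr1 q1 i k = 1 := by
  have := marg_aux q1 i (fun _ => 1)
  simpa [hq1s] using this.symm

lemma logP_aux {m n K L : ℕ} (A : Fin m → Fin n → ℕ)
    (piv : Fin K → ℝ) (rhov : Fin L → ℝ) (θ : Fin m → ℝ) (lam : Fin n → ℝ)
    (μm : Fin K → Fin L → ℝ)
    (hpiv : ∀ k, 0 < piv k) (hrhov : ∀ l, 0 < rhov l)
    (hθ : ∀ i, 0 < θ i) (hlam : ∀ j, 0 < lam j) (hμm : ∀ k l, 0 < μm k l)
    (z : Fin m → Fin K) (w : Fin n → Fin L) :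
    Real.log (DCLBM.Pjoint A piv rhov θ lam μm z w) =
      (∑ i, Real.log (piv (z i))) + (∑ j, Real.log (rhov (w j))) +
      ∑ i, ∑ j, (-(θ i * lam j * μm (z i) (w j))
        + (A i j : ℝ) * (Real.log (θ i) + Real.log (lam j) + Real.log (μm (z i) (w j)))
        - Real.log ((Nat.factorial (A i j) : ℝ))) := by
  have ht : ∀ (i : Fin m) (j : Fin n), 0 < θ i * lam j * μm (z i) (w j) :=
    fun i j => mul_pos (mul_pos (hθ i) (hlam j)) (hμm _ _)
  have hfpos : ∀ (i : Fin m) (j : Fin n),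
      0 < Real.exp (-(θ i * lam j * μm (z i) (w j))) *
        (θ i * lam j * μm (z i) (w j)) ^ (A i j) / (Nat.factorial (A i j) : ℝ) :=
    fun i j => div_pos (mul_pos (Real.exp_pos _) (pow_pos (ht i j) _))
      (Nat.cast_pos.mpr (Nat.factorial_pos _))
  have h1 : (0:ℝ) < ∏ i, piv (z i) := Finset.prod_pos fun i _ => hpiv _
  have h2 : (0:ℝ) < ∏ j, rhov (w j) := Finset.prod_pos fun j _ => hrhov _
  have h3 : (0:ℝ) < ∏ i, ∏ j, Real.exp (-(θ i * lam j * μm (z i) (w j))) *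
      (θ i * lam j * μm (z i) (w j)) ^ (A i j) / (Nat.factorial (A i j) : ℝ) :=
    Finset.prod_pos fun i _ => Finset.prod_pos fun j _ => hfpos i j
  have hlogf : ∀ (i : Fin m) (j : Fin n),
      Real.log (Real.exp (-(θ i * lam j * μm (z i) (w j))) *
        (θ i * lam j * μm (z i) (w j)) ^ (A i j) / (Nat.factorial (A i j) : ℝ)) =
      -(θ i * lam j * μm (z i) (w j))
        + (A i j : ℝ) * (Real.log (θ i) + Real.log (lam j) + Real.log (μm (z i) (w j)))
        - Real.log ((Nat.factorial (A i j) : ℝ)) := by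
    intro i j
    rw [Real.log_div (mul_pos (Real.exp_pos _) (pow_pos (ht i j) _)).ne'
        (Nat.cast_pos.mpr (Nat.factorial_pos _)).ne',
      Real.log_mul (Real.exp_pos _).ne' (pow_pos (ht i j) _).ne',
      Real.log_exp, Real.log_pow,
      Real.log_mul (mul_pos (hθ i) (hlam j)).ne' (hμm _ _).ne',
      Real.log_mul (hθ i).ne' (hlam j).ne']
  unfold DCLBM.Pjoint
  rw [Real.log_mul (mul_pos h1 h2).ne' h3.ne', Real.log_mul h1.ne' h2.ne',
    Real.log_prod (fun i _ => (hpiv _).ne'),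
    Real.log_prod (fun j _ => (hrhov _).ne'),
    Real.log_prod (fun i _ => (Finset.prod_pos fun j _ => hfpos i j).ne')]
  congr 1
  refine Finset.sum_congr rfl fun i _ => ?_
  rw [Real.log_prod (fun j _ => (hfpos i j).ne')]
  exact Finset.sum_congr rfl fun j _ => hlogf i j


lemma Jdecomp_aux {m n K L : ℕ} (A : Fin m → Fin n → ℕ)
    (piv : Fin K → ℝ) (rhov : Fin L → ℝ) (θ : Fin m → ℝ) (lam : Fin n → ℝ)
    (μm : Fin K → Fin L → ℝ)
    (hpiv : ∀ k, 0 < piv k) (hrhov : ∀ l, 0 < rhov l)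
    (hθ : ∀ i, 0 < θ i) (hlam : ∀ j, 0 < lam j) (hμm : ∀ k l, 0 < μm k l)
    (q1 : (Fin m → Fin K) → ℝ)
    (hq1 : ∀ z, 0 ≤ q1 z) (hq1s : ∑ z : Fin m → Fin K, q1 z = 1)
    (g2 : Fin n → Fin L → ℝ)
    (hg2 : ∀ j l, g2 j l =
      -(∑ i, θ i * lam j * (∑ k, DCLBM.pr1 q1 i k * μm k l))
      + (∑ i, (A i j : ℝ) * (∑ k, DCLBM.pr1 q1 i k * Real.log (μm k l)))
      + Real.log (rhov l))
    (q2 : (Fin n → Fin L) → ℝ)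
    (hq2 : ∀ w, 0 ≤ q2 w) (hq2s : ∑ w : Fin n → Fin L, q2 w = 1) :
    DCLBM.Jobj A q1 q2 piv rhov θ lam μm =
      ((∑ z : Fin m → Fin K, q1 z * ((∑ i, Real.log (piv (z i))) - Real.log (q1 z)))
        + ∑ i, ∑ j, ((A i j : ℝ) * (Real.log (θ i) + Real.log (lam j))
            - Real.log ((Nat.factorial (A i j) : ℝ))))
      + ∑ w : Fin n → Fin L, q2 w * ((∑ j, g2 j (w j)) - Real.log (q2 w)) := by
  classical
  have hPpos : ∀ z w, 0 < DCLBM.Pjoint A piv rhov θ lam μm z w := by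
    intro z w
    unfold DCLBM.Pjoint
    exact mul_pos (mul_pos (Finset.prod_pos fun i _ => hpiv _)
      (Finset.prod_pos fun j _ => hrhov _))
      (Finset.prod_pos fun i _ => Finset.prod_pos fun j _ =>
        div_pos (mul_pos (Real.exp_pos _)
          (pow_pos (mul_pos (mul_pos (hθ i) (hlam j)) (hμm _ _)) _))
          (Nat.cast_pos.mpr (Nat.factorial_pos _)))
  have hsplit : ∀ z w, q1 z * q2 w *
      Real.log (DCLBM.Pjoint A piv rhov θ lam μm z w / (q1 z * q2 w)) =
      q2 w * (q1 z * Real.log (DCLBM.Pjoint A piv rhov θ lam μm z w))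
        - q2 w * (q1 z * Real.log (q1 z)) - q1 z * (q2 w * Real.log (q2 w)) := by
    intro z w
    rcases eq_or_lt_of_le (hq1 z) with h1 | h1
    · simp [← h1]
    rcases eq_or_lt_of_le (hq2 w) with h2 | h2
    · simp [← h2]
    rw [Real.log_div (hPpos z w).ne' (mul_pos h1 h2).ne', Real.log_mul h1.ne' h2.ne']
    ring
  -- the z-expectation of log P
  have hinner : ∀ w, ∑ z : Fin m → Fin K, q1 z *
      Real.log (DCLBM.Pjoint A piv rhov θ lam μm z w) =
      (∑ z : Fin m → Fin K, q1 z * ∑ i, Real.log (piv (z i)))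
      + (∑ j, g2 j (w j))
      + ∑ i, ∑ j, ((A i j : ℝ) * (Real.log (θ i) + Real.log (lam j))
          - Real.log ((Nat.factorial (A i j) : ℝ))) := by
    intro w
    have hexp : ∀ z, q1 z * Real.log (DCLBM.Pjoint A piv rhov θ lam μm z w) =
        q1 z * (∑ i, Real.log (piv (z i))) + q1 z * (∑ j, Real.log (rhov (w j)))
        + ∑ i, ∑ j, q1 z * (-(θ i * lam j * μm (z i) (w j))
          + (A i j : ℝ) * (Real.log (θ i) + Real.log (lam j) + Real.log (μm (z i) (w j)))
          - Real.log ((Nat.factorial (A i j) : ℝ))) := by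
      intro z
      rw [logP_aux A piv rhov θ lam μm hpiv hrhov hθ hlam hμm z w]
      rw [mul_add, mul_add]
      congr 1
      rw [Finset.mul_sum]
      exact Finset.sum_congr rfl fun i _ => Finset.mul_sum _ _ _
    rw [Finset.sum_congr rfl fun z _ => hexp z]
    rw [Finset.sum_add_distrib, Finset.sum_add_distrib]
    rw [← Finset.sum_mul, hq1s, one_mul]
    have hswap : ∑ z : Fin m → Fin K, ∑ i, ∑ j, q1 z *
        (-(θ i * lam j * μm (z i) (w j))
          + (A i j : ℝ) * (Real.log (θ i) + Real.log (lam j) + Real.log (μm (z i) (w j)))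
          - Real.log ((Nat.factorial (A i j) : ℝ))) =
        ∑ i, ∑ j, ∑ k, DCLBM.pr1 q1 i k *
        (-(θ i * lam j * μm k (w j))
          + (A i j : ℝ) * (Real.log (θ i) + Real.log (lam j) + Real.log (μm k (w j)))
          - Real.log ((Nat.factorial (A i j) : ℝ))) := by
      rw [Finset.sum_comm]
      refine Finset.sum_congr rfl fun i _ => ?_
      rw [Finset.sum_comm]
      exact Finset.sum_congr rfl fun j _ =>
        marg_aux q1 i (fun k => -(θ i * lam j * μm k (w j))
          + (A i j : ℝ) * (Real.log (θ i) + Real.log (lam j) + Real.log (μm k (w j)))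
          - Real.log ((Nat.factorial (A i j) : ℝ)))
    rw [hswap]
    have hmargsum : ∀ (i : Fin m) (j : Fin n) (l : Fin L),
        ∑ k, DCLBM.pr1 q1 i k *
          (-(θ i * lam j * μm k l)
            + (A i j : ℝ) * (Real.log (θ i) + Real.log (lam j) + Real.log (μm k l))
            - Real.log ((Nat.factorial (A i j) : ℝ))) =
        -(θ i * lam j * (∑ k, DCLBM.pr1 q1 i k * μm k l))
          + (A i j : ℝ) * (∑ k, DCLBM.pr1 q1 i k * Real.log (μm k l))
          + ((A i j : ℝ) * (Real.log (θ i) + Real.log (lam j))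
            - Real.log ((Nat.factorial (A i j) : ℝ))) := by
      intro i j l
      have hs := pr1_sum q1 hq1s i
      calc ∑ k, DCLBM.pr1 q1 i k *
            (-(θ i * lam j * μm k l)
              + (A i j : ℝ) * (Real.log (θ i) + Real.log (lam j) + Real.log (μm k l))
              - Real.log ((Nat.factorial (A i j) : ℝ))) =
          ∑ k, ((θ i * lam j) * (DCLBM.pr1 q1 i k * μm k l) * (-1)
            + (A i j : ℝ) * (DCLBM.pr1 q1 i k * Real.log (μm k l))
            + ((A i j : ℝ) * (Real.log (θ i) + Real.log (lam j))
              - Real.log ((Nat.factorial (A i j) : ℝ))) * DCLBM.pr1 q1 i k) :=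
            Finset.sum_congr rfl fun k _ => by ring
        _ = (θ i * lam j) * (∑ k, DCLBM.pr1 q1 i k * μm k l) * (-1)
            + (A i j : ℝ) * (∑ k, DCLBM.pr1 q1 i k * Real.log (μm k l))
            + ((A i j : ℝ) * (Real.log (θ i) + Real.log (lam j))
              - Real.log ((Nat.factorial (A i j) : ℝ))) * ∑ k, DCLBM.pr1 q1 i k := by
            simp only [Finset.sum_add_distrib, ← Finset.sum_mul, ← Finset.mul_sum]
        _ = -(θ i * lam j * (∑ k, DCLBM.pr1 q1 i k * μm k l))
            + (A i j : ℝ) * (∑ k, DCLBM.pr1 q1 i k * Real.log (μm k l))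
            + ((A i j : ℝ) * (Real.log (θ i) + Real.log (lam j))
              - Real.log ((Nat.factorial (A i j) : ℝ))) := by
            rw [hs]; ring
    rw [Finset.sum_congr rfl fun i _ => Finset.sum_congr rfl fun j _ => hmargsum i j (w j)]
    simp only [Finset.sum_add_distrib]
    have e1 : (∑ i, ∑ j, -(θ i * lam j * (∑ k, DCLBM.pr1 q1 i k * μm k (w j)))) =
        ∑ j, ∑ i, -(θ i * lam j * (∑ k, DCLBM.pr1 q1 i k * μm k (w j))) :=
      Finset.sum_comm
    have e2 : (∑ i, ∑ j, (A i j : ℝ) * (∑ k, DCLBM.pr1 q1 i k * Real.log (μm k (w j)))) =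
        ∑ j, ∑ i, (A i j : ℝ) * (∑ k, DCLBM.pr1 q1 i k * Real.log (μm k (w j))) :=
      Finset.sum_comm
    have hg2sum : ∑ j, g2 j (w j) =
        (∑ j, ∑ i, -(θ i * lam j * (∑ k, DCLBM.pr1 q1 i k * μm k (w j))))
        + (∑ j, ∑ i, (A i j : ℝ) * (∑ k, DCLBM.pr1 q1 i k * Real.log (μm k (w j))))
        + ∑ j, Real.log (rhov (w j)) := by
      rw [← Finset.sum_add_distrib, ← Finset.sum_add_distrib]
      refine Finset.sum_congr rfl fun j _ => ?_
      rw [hg2]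
      congr 1
      congr 1
      exact (Finset.sum_neg_distrib _).symm
    rw [e1, e2, hg2sum]
    ring
  -- assemble
  have hA : ∑ z : Fin m → Fin K, ∑ w : Fin n → Fin L,
      q2 w * (q1 z * Real.log (DCLBM.Pjoint A piv rhov θ lam μm z w)) =
      ∑ w : Fin n → Fin L, q2 w * ∑ z : Fin m → Fin K,
        q1 z * Real.log (DCLBM.Pjoint A piv rhov θ lam μm z w) := by
    rw [Finset.sum_comm]
    exact Finset.sum_congr rfl fun w _ => (Finset.mul_sum _ _ _).symm
  have hB : ∑ z : Fin m → Fin K, ∑ w : Fin n → Fin L,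
      q2 w * (q1 z * Real.log (q1 z)) = ∑ z : Fin m → Fin K, q1 z * Real.log (q1 z) := by
    refine Finset.sum_congr rfl fun z _ => ?_
    rw [← Finset.sum_mul, hq2s, one_mul]
  have hC : ∑ z : Fin m → Fin K, ∑ w : Fin n → Fin L,
      q1 z * (q2 w * Real.log (q2 w)) = ∑ w : Fin n → Fin L, q2 w * Real.log (q2 w) := by
    simp only [← Finset.mul_sum]
    rw [← Finset.sum_mul, hq1s, one_mul]
  unfold DCLBM.Jobj
  rw [Finset.sum_congr rfl fun z _ => Finset.sum_congr rfl fun w _ => hsplit z w]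
  simp only [Finset.sum_sub_distrib]
  rw [hA, hB, hC]
  rw [Finset.sum_congr rfl fun w _ => by rw [hinner w]]
  simp only [mul_add, mul_sub, Finset.sum_add_distrib, Finset.sum_sub_distrib, ← Finset.sum_mul]
  rw [hq2s]
  ring


/-- Proposition 2, column part: for a fixed parameter tuple `Φ` and a fixed
pmf `q1` on `Ω_z`, the product pmf `q2*` built from the functions `g2` maximizes
`q2 ↦ J(q1, q2, Φ)` over all pmfs on `Ω_w`, with equality iff `q2 = q2*`. -/
theorem statement3 (m n K L : ℕ) (hm : 0 < m) (hn : 0 < n) (hK : 0 < K) (hL : 0 < L)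
    (A : Fin m → Fin n → ℕ)
    (piv : Fin K → ℝ) (rhov : Fin L → ℝ) (θ : Fin m → ℝ) (lam : Fin n → ℝ)
    (μm : Fin K → Fin L → ℝ)
    (hpiv : ∀ k, 0 < piv k) (hpivs : ∑ k, piv k = 1)
    (hrhov : ∀ l, 0 < rhov l) (hrhovs : ∑ l, rhov l = 1)
    (hθ : ∀ i, 0 < θ i) (hlam : ∀ j, 0 < lam j) (hμm : ∀ k l, 0 < μm k l)
    (q1 : (Fin m → Fin K) → ℝ)
    (hq1 : ∀ z, 0 ≤ q1 z) (hq1s : ∑ z : Fin m → Fin K, q1 z = 1)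
    (g2 : Fin n → Fin L → ℝ)
    (hg2 : ∀ j l, g2 j l =
      -(∑ i, θ i * lam j * (∑ k, DCLBM.pr1 q1 i k * μm k l))
      + (∑ i, (A i j : ℝ) * (∑ k, DCLBM.pr1 q1 i k * Real.log (μm k l)))
      + Real.log (rhov l))
    (q2star : (Fin n → Fin L) → ℝ)
    (hq2star : ∀ w, q2star w =
      ∏ j, Real.exp (g2 j (w j)) / (∑ l, Real.exp (g2 j l))) :
    ∀ q2 : (Fin n → Fin L) → ℝ,
      (∀ w, 0 ≤ q2 w) → (∑ w : Fin n → Fin L, q2 w = 1) →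
      DCLBM.Jobj A q1 q2 piv rhov θ lam μm ≤
        DCLBM.Jobj A q1 q2star piv rhov θ lam μm ∧
      (DCLBM.Jobj A q1 q2 piv rhov θ lam μm =
        DCLBM.Jobj A q1 q2star piv rhov θ lam μm ↔ q2 = q2star) := by
  intro q2 hq2 hq2s
  have hZj : ∀ j, 0 < ∑ l, Real.exp (g2 j l) :=
    fun j => Finset.sum_pos (fun l _ => Real.exp_pos _) ⟨⟨0, hL⟩, Finset.mem_univ _⟩
  have hZ : 0 < ∏ j, ∑ l, Real.exp (g2 j l) := Finset.prod_pos fun j _ => hZj j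
  have hstar : ∀ w, q2star w =
      Real.exp (∑ j, g2 j (w j)) / ∏ j, ∑ l, Real.exp (g2 j l) := by
    intro w
    rw [hq2star, Finset.prod_div_distrib, ← Real.exp_sum]
  have hstarpos : ∀ w, 0 < q2star w := fun w => by
    rw [hstar]; exact div_pos (Real.exp_pos _) hZ
  have hstars : ∑ w : Fin n → Fin L, q2star w = 1 := by
    have hZeq : ∏ j, ∑ l, Real.exp (g2 j l) =
        ∑ w : Fin n → Fin L, Real.exp (∑ j, g2 j (w j)) := by
      rw [Fintype.prod_sum (fun j l => Real.exp (g2 j l))]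
      exact Finset.sum_congr rfl fun w _ => (Real.exp_sum _ _).symm
    simp only [hstar]
    rw [← Finset.sum_div, ← hZeq, div_self hZ.ne']
  have hlogstar : ∀ w, Real.log (q2star w) =
      (∑ j, g2 j (w j)) - Real.log (∏ j, ∑ l, Real.exp (g2 j l)) := by
    intro w
    rw [hstar, Real.log_div (Real.exp_pos _).ne' hZ.ne', Real.log_exp]
  have hd1 := Jdecomp_aux A piv rhov θ lam μm hpiv hrhov hθ hlam hμm q1 hq1 hq1s
    g2 hg2 q2 hq2 hq2s
  have hd2 := Jdecomp_aux A piv rhov θ lam μm hpiv hrhov hθ hlam hμm q1 hq1 hq1s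
    g2 hg2 q2star (fun w => (hstarpos w).le) hstars
  have hrw : ∀ (q' : (Fin n → Fin L) → ℝ), (∑ w : Fin n → Fin L, q' w = 1) →
      ∑ w : Fin n → Fin L, q' w * ((∑ j, g2 j (w j)) - Real.log (q' w)) =
      Real.log (∏ j, ∑ l, Real.exp (g2 j l))
        + ∑ w : Fin n → Fin L, q' w * (Real.log (q2star w) - Real.log (q' w)) := by
    intro q' hq's
    have hterm : ∀ w, q' w * ((∑ j, g2 j (w j)) - Real.log (q' w)) =
        q' w * Real.log (∏ j, ∑ l, Real.exp (g2 j l))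
          + q' w * (Real.log (q2star w) - Real.log (q' w)) := by
      intro w; rw [hlogstar w]; ring
    rw [Finset.sum_congr rfl fun w _ => hterm w, Finset.sum_add_distrib,
      ← Finset.sum_mul, hq's, one_mul]
  have hgibbs := gibbs_aux q2star q2 hstarpos hq2 (by rw [hq2s, hstars])
  have hzero : ∑ w : Fin n → Fin L,
      q2star w * (Real.log (q2star w) - Real.log (q2star w)) = 0 := by simp
  rw [hd1, hd2, hrw q2 hq2s, hrw q2star hstars, hzero, add_zero]
  refine ⟨by linarith [hgibbs.1], fun h => hgibbs.2.mp (by linarith), fun h => by rw [h]; simp⟩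
end X
end Aux2
end

section
/- Suppose the matrix M ∈ (0,∞)^{m×n} has the block-product structure M_{ij} = θ_i λ_j μ_{z_i w_j} for some θ ∈ (0,∞)^m, λ ∈ (0,∞)^n, μ ∈ (0,∞)^{K×L}. Then the quantity M_{ij} / (θ*_i λ*_j), with θ* and λ* the canonical degree parameters of M, depends on (i,j) only through the labels (z_i, w_j); that is, for all i, i' ∈ {1,…,m} and j, j' ∈ {1,…,n} with z_i = z_{i'} and w_j = w_{j'}, one has M_{ij}/(θ*_i λ*_j) = M_{i'j'}/(θ*_{i'} λ*_{j'}). Consequently the canonical matrix μ* defined by μ*_{kl} = M_{ij}/(θ*_i λ*_j) for any i with z_i = k and j with w_j = l is well defined. -/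
open scoped BigOperators

namespace DCLBM

/-- Canonical row degree parameter `θ*_i` of a positive matrix `M`. -/
noncomputable def thetaStar {m n : ℕ} (M : Fin m → Fin n → ℝ) (i : Fin m) : ℝ :=
  ((1 / (n : ℝ)) * ∑ j, M i j) /
    Real.sqrt ((1 / ((m : ℝ) * (n : ℝ))) * ∑ i', ∑ j, M i' j)

/-- Canonical column degree parameter `λ*_j` of a positive matrix `M`. -/
noncomputable def lamStar {m n : ℕ} (M : Fin m → Fin n → ℝ) (j : Fin n) : ℝ :=
  ((1 / (m : ℝ)) * ∑ i, M i j) /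
    Real.sqrt ((1 / ((m : ℝ) * (n : ℝ))) * ∑ i, ∑ j', M i j')

end DCLBM

/-!
Up to a constant factor common to all entries, `M i j / (θ*_i λ*_j)` is `M i j / (r_i c_j)`,
where `r_i` and `c_j` are the row and column sums of `M`. For a block product
`M i j = θ_i λ_j μ (z i) (w j)` these sums factor as `r_i = θ_i R (z i)` and `c_j = λ_j C (w j)`,
so `θ_i λ_j` cancels and what remains is a function of `(z i, w j)`.
-/

theorem blockProduct_div_rowSum_mul_colSum {ι κ α β 𝕜 : Type*} [Fintype ι] [Fintype κ] [Field 𝕜]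
    (θ : ι → 𝕜) (lam : κ → 𝕜) (μ : α → β → 𝕜) (z : ι → α) (w : κ → β) {i : ι} {j : κ}
    (hθ : θ i ≠ 0) (hlam : lam j ≠ 0) :
    θ i * lam j * μ (z i) (w j) /
        ((∑ j', θ i * lam j' * μ (z i) (w j')) * ∑ i', θ i' * lam j * μ (z i') (w j)) =
      μ (z i) (w j) / ((∑ j', lam j' * μ (z i) (w j')) * ∑ i', θ i' * μ (z i') (w j)) := by
  have hrow : ∑ j', θ i * lam j' * μ (z i) (w j') = θ i * ∑ j', lam j' * μ (z i) (w j') := by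
    simp only [mul_assoc, Finset.mul_sum]
  have hcol : ∑ i', θ i' * lam j * μ (z i') (w j) = lam j * ∑ i', θ i' * μ (z i') (w j) := by
    simp only [Finset.mul_sum]
    exact Finset.sum_congr rfl fun _ _ => by ring
  rw [hrow, hcol, mul_mul_mul_comm, mul_div_mul_left _ _ (mul_ne_zero hθ hlam)]

namespace DCLBM

theorem exists_const_div_thetaStar_mul_lamStar {m n : ℕ} (M : Fin m → Fin n → ℝ) :
    ∃ c : ℝ, ∀ i j, M i j / (thetaStar M i * lamStar M j) =
      c * (M i j / ((∑ j', M i j') * ∑ i', M i' j)) := by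
  refine ⟨m * n * Real.sqrt ((1 / ((m : ℝ) * (n : ℝ))) * ∑ i, ∑ j, M i j) ^ 2, fun i j => ?_⟩
  simp only [thetaStar, lamStar, div_eq_mul_inv, mul_inv, inv_inv]
  ring

end DCLBM

theorem statement4_general (m n K L : ℕ)
    (z : Fin m → Fin K) (w : Fin n → Fin L)
    (M : Fin m → Fin n → ℝ)
    (θ : Fin m → ℝ) (lam : Fin n → ℝ) (μm : Fin K → Fin L → ℝ)
    (hθ : ∀ i, 0 < θ i) (hlam : ∀ j, 0 < lam j)
    (hblock : ∀ i j, M i j = θ i * lam j * μm (z i) (w j)) :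
    ∀ (i i' : Fin m) (j j' : Fin n), z i = z i' → w j = w j' →
      M i j / (DCLBM.thetaStar M i * DCLBM.lamStar M j) =
        M i' j' / (DCLBM.thetaStar M i' * DCLBM.lamStar M j') := by
  intro i i' j j' hz hw
  obtain ⟨c, hc⟩ := DCLBM.exists_const_div_thetaStar_mul_lamStar M
  obtain rfl : M = fun i j => θ i * lam j * μm (z i) (w j) := funext₂ hblock
  rw [hc, hc, blockProduct_div_rowSum_mul_colSum _ _ _ _ _ (hθ i).ne' (hlam j).ne',
    blockProduct_div_rowSum_mul_colSum _ _ _ _ _ (hθ i').ne' (hlam j').ne', hz, hw]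

/-- Proposition 3: if `M` has the block-product structure
`M_{ij} = θ_i λ_j μ_{z_i w_j}` with positive `θ, λ, μ`, then `M_{ij}/(θ*_i λ*_j)` depends on
`(i, j)` only through the labels `(z_i, w_j)`, so the canonical matrix `μ*` is well defined. -/
theorem statement4 (m n K L : ℕ) (hm : 0 < m) (hn : 0 < n) (hK : 0 < K) (hL : 0 < L)
    (z : Fin m → Fin K) (w : Fin n → Fin L)
    (M : Fin m → Fin n → ℝ) (hM : ∀ i j, 0 < M i j)
    (θ : Fin m → ℝ) (lam : Fin n → ℝ) (μm : Fin K → Fin L → ℝ)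
    (hθ : ∀ i, 0 < θ i) (hlam : ∀ j, 0 < lam j) (hμm : ∀ k l, 0 < μm k l)
    (hblock : ∀ i j, M i j = θ i * lam j * μm (z i) (w j)) :
    ∀ (i i' : Fin m) (j j' : Fin n), z i = z i' → w j = w j' →
      M i j / (DCLBM.thetaStar M i * DCLBM.lamStar M j) =
        M i' j' / (DCLBM.thetaStar M i' * DCLBM.lamStar M j') :=
  statement4_general m n K L z w M θ lam μm hθ hlam hblock
end

section
/- Suppose every value in {1,…,K} is attained by z and every value in {1,…,L} is attained by w, and M ∈ (0,∞)^{m×n} has the block-product structure M_{ij} = θ_i λ_j μ_{z_i w_j} for some θ ∈ (0,∞)^m, λ ∈ (0,∞)^n, μ ∈ (0,∞)^{K×L}. Then the following are equivalent: (i) the canonical matrix μ* has pairwise distinct rows and pairwise distinct columns (i.e., there are no k ≠ k' with μ*_{kl} = μ*_{k'l} for all l, and no l ≠ l' with μ*_{kl} = μ*_{kl'} for all k); (ii) for every parametrization (θ, λ, μ) ∈ (0,∞)^m × (0,∞)^n × (0,∞)^{K×L} satisfying M_{ij} = θ_i λ_j μ_{z_i w_j} for all i,j, there do not exist k ≠ k'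 and a constant a > 0 with μ_{kl} = a·μ_{k'l} for all l, and there do not exist l ≠ l' and a constant b > 0 with μ_{kl} = b·μ_{kl'} for all k. -/
open scoped BigOperators

lemma propInvar {m n K L : ℕ} {z : Fin m → Fin K} {w : Fin n → Fin L}
    (hz : Function.Surjective z) (hw : Function.Surjective w)
    {M : Fin m → Fin n → ℝ}
    {θ : Fin m → ℝ} {lam : Fin n → ℝ} {μ : Fin K → Fin L → ℝ}
    {θ' : Fin m → ℝ} {lam' : Fin n → ℝ} {μ' : Fin K → Fin L → ℝ}
    (hθ : ∀ i, 0 < θ i) (hlam : ∀ j, 0 < lam j)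
    (hθ' : ∀ i, 0 < θ' i) (hlam' : ∀ j, 0 < lam' j)
    (hb : ∀ i j, M i j = θ i * lam j * μ (z i) (w j))
    (hb' : ∀ i j, M i j = θ' i * lam' j * μ' (z i) (w j))
    (k k' : Fin K) (a : ℝ) (ha : 0 < a)
    (hprop : ∀ l, μ k l = a * μ k' l) :
    ∃ a', 0 < a' ∧ ∀ l, μ' k l = a' * μ' k' l := by
  obtain ⟨i, hi⟩ := hz k
  obtain ⟨i', hi'⟩ := hz k'
  refine ⟨a * (θ i * θ' i') / (θ' i * θ i'), div_pos (mul_pos ha (mul_pos (hθ i) (hθ' i'))) (mul_pos (hθ' i) (hθ i')), fun l => ?_⟩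
  obtain ⟨j, hj⟩ := hw l
  have e1 := (hb i j).symm.trans (hb' i j)
  have e2 := (hb i' j).symm.trans (hb' i' j)
  rw [hi, hj] at e1
  rw [hi', hj] at e2
  have hu' : μ' k l = θ i * lam j * μ k l / (θ' i * lam' j) := by
    rw [eq_div_iff (mul_pos (hθ' i) (hlam' j)).ne']
    linear_combination -e1
  have hv : μ k' l = θ' i' * lam' j * μ' k' l / (θ i' * lam j) := by
    rw [eq_div_iff (mul_pos (hθ i') (hlam j)).ne']
    linear_combination e2
  rw [hu', hprop l, hv]
  have h1 := (hθ i).ne'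
  have h2 := (hθ i').ne'
  have h3 := (hθ' i).ne'
  have h4 := (hθ' i').ne'
  have h5 := (hlam j).ne'
  have h6 := (hlam' j).ne'
  field_simp

/-- Proposition 5: with `z` and `w` surjective and `M` of block-product
form with canonical matrix `μ*` (characterized by `μ*_{z_i, w_j} = M_{ij}/(θ*_i λ*_j)`),
the following are equivalent: (i) `μ*` has pairwise distinct rows and pairwise distinct
columns; (ii) for every positive parametrization `(θ, λ, μ)` of `M`, no two rows of `μ` are
proportional and no two columns of `μ` are proportional. -/
theorem statement6 (m n K L : ℕ) (hm : 0 < m) (hn : 0 < n) (hK : 0 < K) (hL : 0 < L)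
    (z : Fin m → Fin K) (w : Fin n → Fin L)
    (hzsurj : Function.Surjective z) (hwsurj : Function.Surjective w)
    (M : Fin m → Fin n → ℝ) (hM : ∀ i j, 0 < M i j)
    (θ0 : Fin m → ℝ) (lam0 : Fin n → ℝ) (μ0 : Fin K → Fin L → ℝ)
    (hθ0 : ∀ i, 0 < θ0 i) (hlam0 : ∀ j, 0 < lam0 j) (hμ0 : ∀ k l, 0 < μ0 k l)
    (hblock0 : ∀ i j, M i j = θ0 i * lam0 j * μ0 (z i) (w j))
    (μstar : Fin K → Fin L → ℝ)
    (hμstar : ∀ i j, μstar (z i) (w j) =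
      M i j / (DCLBM.thetaStar M i * DCLBM.lamStar M j)) :
    -- (i) `μ*` has pairwise distinct rows and pairwise distinct columns
    (((∀ k k' : Fin K, k ≠ k' → ∃ l, μstar k l ≠ μstar k' l) ∧
      (∀ l l' : Fin L, l ≠ l' → ∃ k, μstar k l ≠ μstar k l'))
    ↔
    -- (ii) no parametrization has proportional rows or proportional columns
    (∀ (θ : Fin m → ℝ) (lam : Fin n → ℝ) (μm : Fin K → Fin L → ℝ),
      (∀ i, 0 < θ i) → (∀ j, 0 < lam j) → (∀ k l, 0 < μm k l) →
      (∀ i j, M i j = θ i * lam j * μm (z i) (w j)) →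
      (¬ ∃ (k k' : Fin K) (a : ℝ), k ≠ k' ∧ 0 < a ∧ ∀ l, μm k l = a * μm k' l) ∧
      (¬ ∃ (l l' : Fin L) (b : ℝ), l ≠ l' ∧ 0 < b ∧ ∀ k, μm k l = b * μm k l'))) := by
  have hmne : Finset.univ.Nonempty (α := Fin m) := ⟨⟨0, hm⟩, Finset.mem_univ _⟩
  have hnne : Finset.univ.Nonempty (α := Fin n) := ⟨⟨0, hn⟩, Finset.mem_univ _⟩
  have hrow : ∀ i, 0 < ∑ j, M i j := fun i =>
    Finset.sum_pos (fun j _ => hM i j) hnne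
  have hcol : ∀ j, 0 < ∑ i, M i j := fun j =>
    Finset.sum_pos (fun i _ => hM i j) hmne
  have hmR : (0:ℝ) < (m:ℝ) := by exact_mod_cast hm
  have hnR : (0:ℝ) < (n:ℝ) := by exact_mod_cast hn
  have hS : 0 < (1 / ((m : ℝ) * (n : ℝ))) * ∑ i, ∑ j, M i j :=
    mul_pos (by positivity) (Finset.sum_pos (fun i _ => hrow i) hmne)
  have hsq : 0 < Real.sqrt ((1 / ((m : ℝ) * (n : ℝ))) * ∑ i, ∑ j, M i j) :=
    Real.sqrt_pos.mpr hS
  have hθs : ∀ i, 0 < DCLBM.thetaStar M i := fun i => by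
    rw [DCLBM.thetaStar]
    exact div_pos (mul_pos (by positivity) (hrow i)) hsq
  have hlams : ∀ j, 0 < DCLBM.lamStar M j := fun j => by
    rw [DCLBM.lamStar]
    exact div_pos (mul_pos (by positivity) (hcol j)) hsq
  have hblockstar : ∀ i j,
      M i j = DCLBM.thetaStar M i * DCLBM.lamStar M j * μstar (z i) (w j) := by
    intro i j
    rw [hμstar i j]
    field_simp [(hθs i).ne', (hlams j).ne']
  have hμsp : ∀ k l, 0 < μstar k l := by
    intro k l
    obtain ⟨i, hi⟩ := hzsurj k
    obtain ⟨j, hj⟩ := hwsurj l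
    rw [← hi, ← hj, hμstar]
    exact div_pos (hM i j) (mul_pos (hθs i) (hlams j))
  -- row and column normalization identities
  have hrowsum : ∀ i, (∑ j, M i j) / DCLBM.thetaStar M i =
      (n : ℝ) * Real.sqrt ((1 / ((m : ℝ) * (n : ℝ))) * ∑ i, ∑ j, M i j) := by
    intro i
    rw [DCLBM.thetaStar]
    rw [div_div_eq_mul_div, div_eq_iff (mul_pos (by positivity) (hrow i)).ne']
    field_simp [hnR.ne']
  have hcolsum : ∀ j, (∑ i, M i j) / DCLBM.lamStar M j =
      (m : ℝ) * Real.sqrt ((1 / ((m : ℝ) * (n : ℝ))) * ∑ i, ∑ j, M i j) := by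
    intro j
    rw [DCLBM.lamStar]
    rw [div_div_eq_mul_div, div_eq_iff (mul_pos (by positivity) (hcol j)).ne']
    field_simp [hmR.ne']
  have keyrow : ∀ (k k' : Fin K) (a : ℝ), (∀ l, μstar k l = a * μstar k' l) → a = 1 := by
    intro k k' a hprop
    obtain ⟨i, hi⟩ := hzsurj k
    obtain ⟨i', hi'⟩ := hzsurj k'
    have e : ∀ i : Fin m, ∑ j, DCLBM.lamStar M j * μstar (z i) (w j) =
        (∑ j, M i j) / DCLBM.thetaStar M i := by
      intro i
      rw [Finset.sum_div]
      refine Finset.sum_congr rfl fun j _ => ?_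
      rw [hμstar i j]
      field_simp [(hθs i).ne', (hlams j).ne']
    have h1 := e i
    have h2 := e i'
    rw [hi, hrowsum i] at h1
    rw [hi', hrowsum i'] at h2
    have h3 : ∑ j, DCLBM.lamStar M j * μstar k (w j) =
        a * ∑ j, DCLBM.lamStar M j * μstar k' (w j) := by
      rw [Finset.mul_sum]
      exact Finset.sum_congr rfl fun j _ => by rw [hprop (w j)]; ring
    rw [h1, h2] at h3
    have hpos : (0:ℝ) < (n : ℝ) * Real.sqrt ((1 / ((m : ℝ) * (n : ℝ))) * ∑ i, ∑ j, M i j) :=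
      mul_pos hnR hsq
    have : (1 : ℝ) * ((n : ℝ) * Real.sqrt ((1 / ((m : ℝ) * (n : ℝ))) * ∑ i, ∑ j, M i j)) =
        a * ((n : ℝ) * Real.sqrt ((1 / ((m : ℝ) * (n : ℝ))) * ∑ i, ∑ j, M i j)) := by
      rw [one_mul]; exact h3
    exact (mul_right_cancel₀ hpos.ne' this).symm
  have keycol : ∀ (l l' : Fin L) (b : ℝ), (∀ k, μstar k l = b * μstar k l') → b = 1 := by
    intro l l' b hprop
    obtain ⟨j, hj⟩ := hwsurj l
    obtain ⟨j', hj'⟩ := hwsurj l'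
    have e : ∀ j : Fin n, ∑ i, DCLBM.thetaStar M i * μstar (z i) (w j) =
        (∑ i, M i j) / DCLBM.lamStar M j := by
      intro j
      rw [Finset.sum_div]
      refine Finset.sum_congr rfl fun i _ => ?_
      rw [hμstar i j]
      field_simp [(hθs i).ne', (hlams j).ne']
    have h1 := e j
    have h2 := e j'
    rw [hj, hcolsum j] at h1
    rw [hj', hcolsum j'] at h2
    have h3 : ∑ i, DCLBM.thetaStar M i * μstar (z i) l =
        b * ∑ i, DCLBM.thetaStar M i * μstar (z i) l' := by
      rw [Finset.mul_sum]
      exact Finset.sum_congr rfl fun i _ => by rw [hprop (z i)]; ring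
    rw [h1, h2] at h3
    have hpos : (0:ℝ) < (m : ℝ) * Real.sqrt ((1 / ((m : ℝ) * (n : ℝ))) * ∑ i, ∑ j, M i j) :=
      mul_pos hmR hsq
    have : (1 : ℝ) * ((m : ℝ) * Real.sqrt ((1 / ((m : ℝ) * (n : ℝ))) * ∑ i, ∑ j, M i j)) =
        b * ((m : ℝ) * Real.sqrt ((1 / ((m : ℝ) * (n : ℝ))) * ∑ i, ∑ j, M i j)) := by
      rw [one_mul]; exact h3
    exact (mul_right_cancel₀ hpos.ne' this).symm
  constructor
  · rintro ⟨hrows, hcols⟩ θ lam μm hθ hlam hμm hb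
    constructor
    · rintro ⟨k, k', a, hkk, ha, hprop⟩
      obtain ⟨a', ha', hprop'⟩ := propInvar hzsurj hwsurj hθ hlam hθs hlams hb hblockstar
        k k' a ha hprop
      have ha1 : a' = 1 := keyrow k k' a' hprop'
      obtain ⟨l, hl⟩ := hrows k k' hkk
      exact hl (by rw [hprop' l, ha1, one_mul])
    · rintro ⟨l, l', b, hll, hb', hprop⟩
      obtain ⟨b', hbp, hprop'⟩ := propInvar hwsurj hzsurj hlam hθ hlams hθs
        (M := fun j i => M i j) (μ := fun l k => μm k l) (μ' := fun l k => μstar k l)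
        (fun j i => by show M i j = lam j * θ i * μm (z i) (w j); rw [hb i j]; ring)
        (fun j i => by
          show M i j = DCLBM.lamStar M j * DCLBM.thetaStar M i * μstar (z i) (w j)
          rw [hblockstar i j]; ring)
        l l' b hb' hprop
      have hb1 : b' = 1 := keycol l l' b' hprop'
      obtain ⟨k, hk⟩ := hcols l l' hll
      exact hk (by rw [hprop' k, hb1, one_mul])
  · intro h
    obtain ⟨hnr, hnc⟩ := h (DCLBM.thetaStar M) (DCLBM.lamStar M) μstar hθs hlams hμsp hblockstar
    constructor
    · intro k k' hkk
      by_contra hc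
      push_neg at hc
      exact hnr ⟨k, k', 1, hkk, one_pos, fun l => by rw [one_mul, hc l]⟩
    · intro l l' hll
      by_contra hc
      push_neg at hc
      exact hnc ⟨l, l', 1, hll, one_pos, fun k => by rw [one_mul, hc k]⟩
end
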